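/- arXiv:1605.01327 — 6 statements merged into one kernel-verified Lean document; each statement's English description precedes it below -/
import Mathlib

section
/- The sub- and super-hedging prices defined with divisible shorted American options (strategies indexed by liquidation vectors in V^n) coincide with those defined with indivisible shorted American options (strategies indexed by exercise-time vectors in 𝕋^n): π̄¹(φ) = π̄²(φ), π̲¹(φ) = π̲²(φ), and for every bounded 𝓕_T-measurable European payoff ψ, π̲_e¹(ψ) = π̲_e²(ψ). -/
open MeasureTheory Finset

noncomputable section

namespace Stmt0

variable {Ω : Type*}

/-- `V`: liquidation vectors in `ℝ₊^{T+1}` summing to one. -/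
def Vset (T : ℕ) : Set (Fin (T + 1) → ℝ) :=
  {v | (∀ t, 0 ≤ v t) ∧ ∑ t, v t = 1}

/-- membership of a tuple in `V^n` -/
def memVn (T n : ℕ) (v : Fin n → Fin (T + 1) → ℝ) : Prop := ∀ k, v k ∈ Vset T

/-- Gain from dynamic trading: `H·S = ∑_{t<T} H_t (S_{t+1} - S_t)`. -/
def stockGain (T d : ℕ) (H S : ℕ → Ω → Fin d → ℝ) (ω : Ω) : ℝ :=
  ∑ t ∈ Finset.range T, ∑ i, H t ω i * (S (t + 1) ω i - S t ω i)

/-- Payoff of an American option `h` liquidated according to `v ∈ V`. -/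
def vPay (T : ℕ) (h : ℕ → Ω → ℝ) (v : Fin (T + 1) → ℝ) (ω : Ω) : ℝ :=
  ∑ t : Fin (T + 1), h (t : ℕ) ω * v t

/-- The set `𝓛` of `𝔽`-liquidating strategies. -/
def Liq (T : ℕ) (ℱ : ℕ → MeasurableSpace Ω) : Set (ℕ → Ω → ℝ) :=
  {η | (∀ t, Measurable[ℱ t] (η t)) ∧ (∀ t ω, 0 ≤ η t ω) ∧
    ∀ ω, ∑ t ∈ Finset.range (T + 1), η t ω = 1}

/-- Payoff of an American option `ψ` liquidated via the liquidating strategy `η`. -/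
def liqPay (T : ℕ) (ψ : ℕ → Ω → ℝ) (η : ℕ → Ω → ℝ) (ω : Ω) : ℝ :=
  ∑ t ∈ Finset.range (T + 1), ψ t ω * η t ω

/-! ### Divisible shorted options: strategies indexed by `V^n` -/

/-- `𝓗̂ⁿ` -/
def HhatMem (T d n : ℕ) (ℱ : ℕ → MeasurableSpace Ω)
    (H : (Fin n → Fin (T + 1) → ℝ) → ℕ → Ω → Fin d → ℝ) : Prop :=
  (∀ v, memVn T n v → ∀ r, Measurable[ℱ r] (H v r)) ∧
  ∀ v u, memVn T n v → memVn T n u →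
    ∀ r : ℕ, (∀ (k : Fin n) (t : Fin (T + 1)), (t : ℕ) ≤ r → v k t = u k t) → H v r = H u r

/-- `𝓛̂ⁿ` -/
def LhatMem (T n : ℕ) (ℱ : ℕ → MeasurableSpace Ω)
    (μ : (Fin n → Fin (T + 1) → ℝ) → ℕ → Ω → ℝ) : Prop :=
  (∀ v, memVn T n v → μ v ∈ Liq T ℱ) ∧
  ∀ v u, memVn T n v → memVn T n u →
    ∀ r : ℕ, (∀ (k : Fin n) (t : Fin (T + 1)), (t : ℕ) ≤ r → v k t = u k t) → μ v r = μ u r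

/-- `𝓐̂ⁿ`: admissible semi-static strategies, divisible indexing. -/
def AhatMem (T d L M n : ℕ) (ℱ : ℕ → MeasurableSpace Ω)
    (H : (Fin n → Fin (T + 1) → ℝ) → ℕ → Ω → Fin d → ℝ)
    (a : Fin L → ℝ) (b : Fin M → ℝ)
    (μ : Fin M → (Fin n → Fin (T + 1) → ℝ) → ℕ → Ω → ℝ) {N : ℕ} (c : Fin N → ℝ) : Prop :=
  HhatMem T d n ℱ H ∧ (∀ i, 0 ≤ a i) ∧ (∀ j, 0 ≤ b j) ∧ (∀ k, 0 ≤ c k) ∧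
    ∀ j, LhatMem T n ℱ (μ j)

/-- Payoff `Φ̂ⁿ_{α,β,γ}` of a semi-static strategy, divisible indexing, with realization
`v ∈ V^n` for the shorted American options (only the first `N` coordinates are used for `h`). -/
def PhiHat (T d L M N n : ℕ) (hn : N ≤ n)
    (S : ℕ → Ω → Fin d → ℝ) (f : Fin L → Ω → ℝ) (g : Fin M → ℕ → Ω → ℝ)
    (h : Fin N → ℕ → Ω → ℝ) (α : Fin L → ℝ) (β : Fin M → ℝ) (γ : Fin N → ℝ)
    (H : (Fin n → Fin (T + 1) → ℝ) → ℕ → Ω → Fin d → ℝ)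
    (a : Fin L → ℝ) (b : Fin M → ℝ)
    (μ : Fin M → (Fin n → Fin (T + 1) → ℝ) → ℕ → Ω → ℝ) (c : Fin N → ℝ)
    (v : Fin n → Fin (T + 1) → ℝ) (ω : Ω) : ℝ :=
  stockGain T d (H v) S ω + (∑ i, a i * (f i ω - α i))
    + (∑ j, b j * (liqPay T (g j) (μ j v) ω - β j))
    - ∑ k, c k * (vPay T (h k) (v (Fin.castLE hn k)) ω - γ k)

/-! ### Indivisible shorted options: strategies indexed by `𝕋ⁿ` -/

/-- `𝓗̃ⁿ` -/
def HtildeMem (T d n : ℕ) (ℱ : ℕ → MeasurableSpace Ω)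
    (H : (Fin n → Fin (T + 1)) → ℕ → Ω → Fin d → ℝ) : Prop :=
  (∀ s r, Measurable[ℱ r] (H s r)) ∧
  ∀ s t : Fin n → Fin (T + 1), ∀ r : ℕ,
    (∀ k, s k ≠ t k → r < min (s k : ℕ) (t k : ℕ)) → H t r = H s r

/-- `𝓛̃ⁿ` -/
def LtildeMem (T n : ℕ) (ℱ : ℕ → MeasurableSpace Ω)
    (μ : (Fin n → Fin (T + 1)) → ℕ → Ω → ℝ) : Prop :=
  (∀ s, μ s ∈ Liq T ℱ) ∧
  ∀ s t : Fin n → Fin (T + 1), ∀ r : ℕ,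
    (∀ k, s k ≠ t k → r < min (s k : ℕ) (t k : ℕ)) → μ t r = μ s r

/-- `𝓐̃ⁿ` -/
def AtildeMem (T d L M n : ℕ) (ℱ : ℕ → MeasurableSpace Ω)
    (H : (Fin n → Fin (T + 1)) → ℕ → Ω → Fin d → ℝ)
    (a : Fin L → ℝ) (b : Fin M → ℝ)
    (μ : Fin M → (Fin n → Fin (T + 1)) → ℕ → Ω → ℝ) {N : ℕ} (c : Fin N → ℝ) : Prop :=
  HtildeMem T d n ℱ H ∧ (∀ i, 0 ≤ a i) ∧ (∀ j, 0 ≤ b j) ∧ (∀ k, 0 ≤ c k) ∧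
    ∀ j, LtildeMem T n ℱ (μ j)

/-- Payoff `Φ̃ⁿ_{α,β,γ}` with realization `t ∈ 𝕋ⁿ` for the shorted American options. -/
def PhiTilde (T d L M N n : ℕ) (hn : N ≤ n)
    (S : ℕ → Ω → Fin d → ℝ) (f : Fin L → Ω → ℝ) (g : Fin M → ℕ → Ω → ℝ)
    (h : Fin N → ℕ → Ω → ℝ) (α : Fin L → ℝ) (β : Fin M → ℝ) (γ : Fin N → ℝ)
    (H : (Fin n → Fin (T + 1)) → ℕ → Ω → Fin d → ℝ)
    (a : Fin L → ℝ) (b : Fin M → ℝ)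
    (μ : Fin M → (Fin n → Fin (T + 1)) → ℕ → Ω → ℝ) (c : Fin N → ℝ)
    (tt : Fin n → Fin (T + 1)) (ω : Ω) : ℝ :=
  stockGain T d (H tt) S ω + (∑ i, a i * (f i ω - α i))
    + (∑ j, b j * (liqPay T (g j) (μ j tt) ω - β j))
    - ∑ k, c k * (h k ((tt (Fin.castLE hn k)) : ℕ) ω - γ k)

/-! ### The four hedging prices -/

variable {m0 : MeasurableSpace Ω}

/-- `π̲¹(φ)`: sub-hedging price of `φ`, divisible shorted options. -/
def subPrice1 (T d L M N : ℕ) (ℱ : ℕ → MeasurableSpace Ω) (ℙ : Measure Ω)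
    (S : ℕ → Ω → Fin d → ℝ) (f : Fin L → Ω → ℝ) (g : Fin M → ℕ → Ω → ℝ)
    (h : Fin N → ℕ → Ω → ℝ) (α : Fin L → ℝ) (β : Fin M → ℝ) (γ : Fin N → ℝ)
    (φ : ℕ → Ω → ℝ) : ℝ :=
  sSup {x : ℝ | ∃ H a b μ c η, AhatMem T d L M N ℱ H a b μ c ∧ LhatMem T N ℱ η ∧
    ∀ v, memVn T N v → ∀ᵐ ω ∂ℙ,
      x ≤ PhiHat T d L M N N le_rfl S f g h α β γ H a b μ c v ω + liqPay T φ (η v) ω}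

/-- `π̄¹(φ)`: super-hedging price of `φ`, divisible shorted options. -/
def superPrice1 (T d L M N : ℕ) (ℱ : ℕ → MeasurableSpace Ω) (ℙ : Measure Ω)
    (S : ℕ → Ω → Fin d → ℝ) (f : Fin L → Ω → ℝ) (g : Fin M → ℕ → Ω → ℝ)
    (h : Fin N → ℕ → Ω → ℝ) (α : Fin L → ℝ) (β : Fin M → ℝ) (γ : Fin N → ℝ)
    (φ : ℕ → Ω → ℝ) : ℝ :=
  sInf {x : ℝ | ∃ H a b μ c, AhatMem T d L M (N + 1) ℱ H a b μ c ∧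
    ∀ v, memVn T (N + 1) v → ∀ᵐ ω ∂ℙ,
      vPay T φ (v (Fin.last N)) ω ≤
        x + PhiHat T d L M N (N + 1) (Nat.le_succ N) S f g h α β γ H a b μ c v ω}

/-- `π̲_e¹(ψ)`: sub-hedging price of a European option `ψ`, divisible shorted options. -/
def subPriceE1 (T d L M N : ℕ) (ℱ : ℕ → MeasurableSpace Ω) (ℙ : Measure Ω)
    (S : ℕ → Ω → Fin d → ℝ) (f : Fin L → Ω → ℝ) (g : Fin M → ℕ → Ω → ℝ)
    (h : Fin N → ℕ → Ω → ℝ) (α : Fin L → ℝ) (β : Fin M → ℝ) (γ : Fin N → ℝ)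
    (ψ : Ω → ℝ) : ℝ :=
  sSup {x : ℝ | ∃ H a b μ c, AhatMem T d L M N ℱ H a b μ c ∧
    ∀ v, memVn T N v → ∀ᵐ ω ∂ℙ,
      x ≤ PhiHat T d L M N N le_rfl S f g h α β γ H a b μ c v ω + ψ ω}

/-- `π̲²(φ)`: sub-hedging price of `φ`, indivisible shorted options. -/
def subPrice2 (T d L M N : ℕ) (ℱ : ℕ → MeasurableSpace Ω) (ℙ : Measure Ω)
    (S : ℕ → Ω → Fin d → ℝ) (f : Fin L → Ω → ℝ) (g : Fin M → ℕ → Ω → ℝ)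
    (h : Fin N → ℕ → Ω → ℝ) (α : Fin L → ℝ) (β : Fin M → ℝ) (γ : Fin N → ℝ)
    (φ : ℕ → Ω → ℝ) : ℝ :=
  sSup {x : ℝ | ∃ H a b μ c η, AtildeMem T d L M N ℱ H a b μ c ∧ LtildeMem T N ℱ η ∧
    ∀ tt : Fin N → Fin (T + 1), ∀ᵐ ω ∂ℙ,
      x ≤ PhiTilde T d L M N N le_rfl S f g h α β γ H a b μ c tt ω + liqPay T φ (η tt) ω}

/-- `π̄²(φ)`: super-hedging price of `φ`, indivisible shorted options. -/
def superPrice2 (T d L M N : ℕ) (ℱ : ℕ → MeasurableSpace Ω) (ℙ : Measure Ω)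
    (S : ℕ → Ω → Fin d → ℝ) (f : Fin L → Ω → ℝ) (g : Fin M → ℕ → Ω → ℝ)
    (h : Fin N → ℕ → Ω → ℝ) (α : Fin L → ℝ) (β : Fin M → ℝ) (γ : Fin N → ℝ)
    (φ : ℕ → Ω → ℝ) : ℝ :=
  sInf {x : ℝ | ∃ H a b μ c, AtildeMem T d L M (N + 1) ℱ H a b μ c ∧
    ∀ tt : Fin (N + 1) → Fin (T + 1), ∀ᵐ ω ∂ℙ,
      φ ((tt (Fin.last N)) : ℕ) ω ≤
        x + PhiTilde T d L M N (N + 1) (Nat.le_succ N) S f g h α β γ H a b μ c tt ω}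

/-- `π̲_e²(ψ)` -/
def subPriceE2 (T d L M N : ℕ) (ℱ : ℕ → MeasurableSpace Ω) (ℙ : Measure Ω)
    (S : ℕ → Ω → Fin d → ℝ) (f : Fin L → Ω → ℝ) (g : Fin M → ℕ → Ω → ℝ)
    (h : Fin N → ℕ → Ω → ℝ) (α : Fin L → ℝ) (β : Fin M → ℝ) (γ : Fin N → ℝ)
    (ψ : Ω → ℝ) : ℝ :=
  sSup {x : ℝ | ∃ H a b μ c, AtildeMem T d L M N ℱ H a b μ c ∧
    ∀ tt : Fin N → Fin (T + 1), ∀ᵐ ω ∂ℙ,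
      x ≤ PhiTilde T d L M N N le_rfl S f g h α β γ H a b μ c tt ω + ψ ω}

section Auxiliary

open Finset MeasureTheory

variable {Ω : Type*}

/-- product weights `λ_v(t) = ∏_k v^k_{t^k}` -/
def lam {T n : ℕ} (v : Fin n → Fin (T + 1) → ℝ) (t : Fin n → Fin (T + 1)) : ℝ :=
  ∏ k, v k (t k)

lemma lam_nonneg {T n : ℕ} {v : Fin n → Fin (T + 1) → ℝ} (hv : memVn T n v)
    (t : Fin n → Fin (T + 1)) : 0 ≤ lam v t :=
  Finset.prod_nonneg fun k _ => (hv k).1 (t k)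

lemma lam_sum {T n : ℕ} {v : Fin n → Fin (T + 1) → ℝ} (hv : memVn T n v) :
    ∑ t : Fin n → Fin (T + 1), lam v t = 1 := by
  classical
  unfold lam
  rw [← Fintype.prod_sum]
  exact Finset.prod_eq_one fun k _ => (hv k).2

lemma lam_marginal {T n : ℕ} {v : Fin n → Fin (T + 1) → ℝ} (hv : memVn T n v)
    (k₀ : Fin n) (A : Fin (T + 1) → ℝ) :
    ∑ t : Fin n → Fin (T + 1), lam v t * A (t k₀) = ∑ s, v k₀ s * A s := by
  classical
  set w : Fin n → Fin (T + 1) → ℝ := fun k s => if k = k₀ then v k₀ s * A s else v k s with hw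
  have h1 : ∀ t : Fin n → Fin (T + 1), lam v t * A (t k₀) = ∏ k, w k (t k) := by
    intro t
    rw [show (∏ k, w k (t k)) = w k₀ (t k₀) * ∏ k ∈ Finset.univ.erase k₀, w k (t k) from
      (Finset.mul_prod_erase _ _ (Finset.mem_univ k₀)).symm]
    rw [show lam v t = v k₀ (t k₀) * ∏ k ∈ Finset.univ.erase k₀, v k (t k) from
      (Finset.mul_prod_erase _ _ (Finset.mem_univ k₀)).symm]
    have h2 : ∏ k ∈ Finset.univ.erase k₀, w k (t k) = ∏ k ∈ Finset.univ.erase k₀, v k (t k) :=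
      Finset.prod_congr rfl fun k hk => by
        simp only [hw]; rw [if_neg (Finset.ne_of_mem_erase hk)]
    rw [h2, show w k₀ (t k₀) = v k₀ (t k₀) * A (t k₀) from by simp [hw]]
    ring
  rw [Finset.sum_congr rfl fun t _ => h1 t, ← Fintype.prod_sum]
  rw [show (∏ k, ∑ s, w k s) = (∑ s, w k₀ s) * ∏ k ∈ Finset.univ.erase k₀, ∑ s, w k s from
    (Finset.mul_prod_erase _ _ (Finset.mem_univ k₀)).symm]
  have h3 : ∏ k ∈ Finset.univ.erase k₀, (∑ s, w k s) = 1 := by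
    refine Finset.prod_eq_one fun k hk => ?_
    rw [Finset.sum_congr rfl fun s _ => show w k s = v k s from by
      simp only [hw]; rw [if_neg (Finset.ne_of_mem_erase hk)]]
    exact (hv k).2
  rw [h3, mul_one]
  exact Finset.sum_congr rfl fun s _ => by simp [hw]

lemma sum_pi_succ {n : ℕ} {X : Type*} [Fintype X] [DecidableEq X] (F : (Fin (n + 1) → X) → ℝ) :
    ∑ t, F t = ∑ s : X, ∑ t' : Fin n → X, F (Fin.cons s t') := by
  calc ∑ t, F t = ∑ p : X × (Fin n → X), F (Fin.cons p.1 p.2) :=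
        (Fintype.sum_equiv (Fin.consEquiv fun _ => X) _ _ fun p => rfl).symm
    _ = ∑ s : X, ∑ t' : Fin n → X, F (Fin.cons s t') := Fintype.sum_prod_type _

lemma lam_cons {T n : ℕ} (w : Fin (n + 1) → Fin (T + 1) → ℝ) (s : Fin (T + 1))
    (t' : Fin n → Fin (T + 1)) :
    lam w (Fin.cons s t') = w 0 s * lam (fun k => w k.succ) t' := by
  unfold lam
  rw [Fin.prod_univ_succ]
  simp

/-- one-dimensional redistribution lemma -/
lemma oned {T : ℕ} (r : ℕ) (v0 u0 B : Fin (T + 1) → ℝ)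
    (hsum : ∑ s, v0 s = ∑ s, u0 s)
    (hagr : ∀ s : Fin (T + 1), (s : ℕ) ≤ r → v0 s = u0 s)
    (hB : ∀ s s' : Fin (T + 1), r < (s : ℕ) → r < (s' : ℕ) → B s = B s') :
    ∑ s, v0 s * B s = ∑ s, u0 s * B s := by
  classical
  rw [← Finset.sum_filter_add_sum_filter_not Finset.univ (fun s : Fin (T + 1) => (s : ℕ) ≤ r)
      (fun s => v0 s * B s),
    ← Finset.sum_filter_add_sum_filter_not Finset.univ (fun s : Fin (T + 1) => (s : ℕ) ≤ r)
      (fun s => u0 s * B s)]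
  have hle : ∑ s ∈ Finset.univ.filter (fun s : Fin (T + 1) => (s : ℕ) ≤ r), v0 s
      = ∑ s ∈ Finset.univ.filter (fun s : Fin (T + 1) => (s : ℕ) ≤ r), u0 s :=
    Finset.sum_congr rfl fun s hs => hagr s (Finset.mem_filter.mp hs).2
  congr 1
  · exact Finset.sum_congr rfl fun s hs => by rw [hagr s (Finset.mem_filter.mp hs).2]
  · rcases (Finset.univ.filter (fun s : Fin (T + 1) => ¬ (s : ℕ) ≤ r)).eq_empty_or_nonempty with
      he | ⟨s₀, hs₀⟩
    · rw [he]; simp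
    · have hfib : ∀ s ∈ Finset.univ.filter (fun s : Fin (T + 1) => ¬ (s : ℕ) ≤ r), B s = B s₀ :=
        fun s hs => hB s s₀ (lt_of_not_ge (Finset.mem_filter.mp hs).2)
          (lt_of_not_ge (Finset.mem_filter.mp hs₀).2)
      have hv' : ∑ s ∈ Finset.univ.filter (fun s : Fin (T + 1) => ¬ (s : ℕ) ≤ r), v0 s * B s
          = (∑ s ∈ Finset.univ.filter (fun s : Fin (T + 1) => ¬ (s : ℕ) ≤ r), v0 s) * B s₀ := by
        rw [Finset.sum_mul]
        exact Finset.sum_congr rfl fun s hs => by rw [hfib s hs]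
      have hu' : ∑ s ∈ Finset.univ.filter (fun s : Fin (T + 1) => ¬ (s : ℕ) ≤ r), u0 s * B s
          = (∑ s ∈ Finset.univ.filter (fun s : Fin (T + 1) => ¬ (s : ℕ) ≤ r), u0 s) * B s₀ := by
        rw [Finset.sum_mul]
        exact Finset.sum_congr rfl fun s hs => by rw [hfib s hs]
      rw [hv', hu']
      congr 1
      have h1 := Finset.sum_filter_add_sum_filter_not Finset.univ
        (fun s : Fin (T + 1) => (s : ℕ) ≤ r) v0
      have h2 := Finset.sum_filter_add_sum_filter_not Finset.univ
        (fun s : Fin (T + 1) => (s : ℕ) ≤ r) u0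
      linarith

/-- Core consistency lemma: mixtures of an adapted family are adapted. -/
lemma core {T : ℕ} : ∀ {n : ℕ} (v u : Fin n → Fin (T + 1) → ℝ),
    (∀ k, ∑ s, v k s = ∑ s, u k s) →
    ∀ (r : ℕ), (∀ (k : Fin n) (s : Fin (T + 1)), (s : ℕ) ≤ r → v k s = u k s) →
    ∀ (A : (Fin n → Fin (T + 1)) → ℝ),
    (∀ s t, (∀ k, s k ≠ t k → r < min (s k : ℕ) (t k : ℕ)) → A t = A s) →
    ∑ t, lam v t * A t = ∑ t, lam u t * A t := by
  intro n
  induction n with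
  | zero =>
    intro v u _ r _ A _
    refine Finset.sum_congr rfl fun t _ => ?_
    rw [show lam v t = lam u t from by unfold lam; simp]
  | succ n ih =>
    intro v u hsum r hagr A hA
    classical
    set B : Fin (T + 1) → ℝ :=
      fun s => ∑ t' : Fin n → Fin (T + 1), lam (fun k => u k.succ) t' * A (Fin.cons s t') with hB
    have step1 : ∀ (w : Fin (n + 1) → Fin (T + 1) → ℝ),
        ∑ t, lam w t * A t
          = ∑ s, w 0 s * ∑ t' : Fin n → Fin (T + 1),
              lam (fun k => w k.succ) t' * A (Fin.cons s t') := by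
      intro w
      rw [sum_pi_succ (fun t => lam w t * A t)]
      refine Finset.sum_congr rfl fun s _ => ?_
      rw [Finset.mul_sum]
      refine Finset.sum_congr rfl fun t' _ => ?_
      rw [lam_cons]; ring
    have hinner : ∀ s : Fin (T + 1),
        (∑ t' : Fin n → Fin (T + 1), lam (fun k => v k.succ) t' * A (Fin.cons s t')) = B s := by
      intro s
      refine ih (fun k => v k.succ) (fun k => u k.succ) (fun k => hsum k.succ) r
        (fun k s' hs' => hagr k.succ s' hs') (fun t' => A (Fin.cons s t')) ?_
      intro s' t' hc
      refine hA (Fin.cons s s') (Fin.cons s t') ?_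
      intro k
      refine Fin.cases ?_ ?_ k
      · simp
      · intro j hj
        simpa using hc j (by simpa using hj)
    have hBconst : ∀ s s' : Fin (T + 1), r < (s : ℕ) → r < (s' : ℕ) → B s = B s' := by
      intro s s' hs hs'
      refine Finset.sum_congr rfl fun t' _ => ?_
      congr 1
      refine hA (Fin.cons s' t') (Fin.cons s t') ?_
      intro k
      refine Fin.cases ?_ ?_ k
      · intro _; simpa using ⟨hs', hs⟩
      · intro j hj; simp at hj
    rw [step1 v, step1 u, Finset.sum_congr rfl fun s _ => by rw [hinner s]]
    exact oned r (fun s => v 0 s) (fun s => u 0 s) B (hsum 0) (fun s hs => hagr 0 s hs) hBconst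

/-! mixtures and vertex embeddings -/

def mixH {T d n : ℕ} (Ht : (Fin n → Fin (T + 1)) → ℕ → Ω → Fin d → ℝ)
    (v : Fin n → Fin (T + 1) → ℝ) : ℕ → Ω → Fin d → ℝ :=
  fun r ω i => ∑ t, lam v t * Ht t r ω i

def mixL {T n : ℕ} (μt : (Fin n → Fin (T + 1)) → ℕ → Ω → ℝ)
    (v : Fin n → Fin (T + 1) → ℝ) : ℕ → Ω → ℝ :=
  fun r ω => ∑ t, lam v t * μt t r ω

def deltaV {T : ℕ} (s : Fin (T + 1)) : Fin (T + 1) → ℝ :=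
  fun s' => if s' = s then 1 else 0

lemma deltaV_mem {T : ℕ} (s : Fin (T + 1)) : deltaV s ∈ Vset T := by
  constructor
  · intro t; unfold deltaV; split <;> norm_num
  · simp [deltaV]

lemma memVn_delta {T n : ℕ} (tt : Fin n → Fin (T + 1)) :
    memVn T n (fun k => deltaV (tt k)) := fun k => deltaV_mem (tt k)

lemma vPay_delta {T : ℕ} (h : ℕ → Ω → ℝ) (s : Fin (T + 1)) (ω : Ω) :
    vPay T h (deltaV s) ω = h (s : ℕ) ω := by
  unfold vPay deltaV
  simp [mul_ite]

lemma delta_agree {T n : ℕ} {s t : Fin n → Fin (T + 1)} {r : ℕ}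
    (hst : ∀ k, s k ≠ t k → r < min (s k : ℕ) (t k : ℕ)) :
    ∀ (k : Fin n) (t' : Fin (T + 1)), (t' : ℕ) ≤ r → deltaV (t k) t' = deltaV (s k) t' := by
  intro k t' ht'
  by_cases he : s k = t k
  · rw [he]
  · have h1 := hst k he
    have h2 : (t' : ℕ) < (t k : ℕ) := lt_of_le_of_lt ht' (lt_of_lt_of_le h1 (min_le_right _ _))
    have h3 : (t' : ℕ) < (s k : ℕ) := lt_of_le_of_lt ht' (lt_of_lt_of_le h1 (min_le_left _ _))
    show (if t' = t k then (1:ℝ) else 0) = (if t' = s k then 1 else 0)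
    rw [if_neg (Fin.ne_of_val_ne (Nat.ne_of_lt h2)), if_neg (Fin.ne_of_val_ne (Nat.ne_of_lt h3))]

lemma mixH_mem {T d n : ℕ} {ℱ : ℕ → MeasurableSpace Ω}
    {Ht : (Fin n → Fin (T + 1)) → ℕ → Ω → Fin d → ℝ} (hH : HtildeMem T d n ℱ Ht) :
    HhatMem T d n ℱ (fun v => mixH Ht v) := by
  constructor
  · intro v _ r
    letI : MeasurableSpace Ω := ℱ r
    exact measurable_pi_lambda _ fun i => Finset.measurable_sum _ fun t _ =>
      ((measurable_pi_apply i).comp (hH.1 t r)).const_mul _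
  · intro v u hv hu r hag
    funext ω i
    exact core v u (fun k => (hv k).2.trans (hu k).2.symm) r hag
      (fun t => Ht t r ω i) (fun s t hc => congrFun (congrFun (hH.2 s t r hc) ω) i)

lemma mixL_mem {T n : ℕ} {ℱ : ℕ → MeasurableSpace Ω}
    {μt : (Fin n → Fin (T + 1)) → ℕ → Ω → ℝ} (hμ : LtildeMem T n ℱ μt) :
    LhatMem T n ℱ (fun v => mixL μt v) := by
  constructor
  · intro v hv
    refine ⟨fun r => Finset.measurable_sum _ fun t _ => ((hμ.1 t).1 r).const_mul _,
      fun r ω => Finset.sum_nonneg fun t _ =>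
        mul_nonneg (lam_nonneg hv t) ((hμ.1 t).2.1 r ω), fun ω => ?_⟩
    show ∑ r ∈ Finset.range (T + 1), ∑ t : Fin n → Fin (T + 1), lam v t * μt t r ω = 1
    rw [Finset.sum_comm]
    rw [Finset.sum_congr rfl fun t (_ : t ∈ Finset.univ) => show
      (∑ r ∈ Finset.range (T + 1), lam v t * μt t r ω) = lam v t from by
        rw [← Finset.mul_sum, (hμ.1 t).2.2 ω, mul_one]]
    exact lam_sum hv
  · intro v u hv hu r hag
    funext ω
    exact core v u (fun k => (hv k).2.trans (hu k).2.symm) r hag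
      (fun t => μt t r ω) (fun s t hc => congrFun (hμ.2 s t r hc) ω)

lemma mix_stockGain {T d n : ℕ} (Ht : (Fin n → Fin (T + 1)) → ℕ → Ω → Fin d → ℝ)
    (S : ℕ → Ω → Fin d → ℝ) (v : Fin n → Fin (T + 1) → ℝ) (ω : Ω) :
    stockGain T d (mixH Ht v) S ω = ∑ t, lam v t * stockGain T d (Ht t) S ω := by
  unfold stockGain mixH
  have h1 : ∀ (r : ℕ) (_ : r ∈ Finset.range T), (∑ i, (∑ t, lam v t * Ht t r ω i)
      * (S (r + 1) ω i - S r ω i))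
      = ∑ i, ∑ t, lam v t * (Ht t r ω i * (S (r + 1) ω i - S r ω i)) := by
    intro r _
    refine Finset.sum_congr rfl fun i _ => ?_
    rw [Finset.sum_mul]
    exact Finset.sum_congr rfl fun t _ => by ring
  rw [Finset.sum_congr rfl h1,
    Finset.sum_congr rfl fun t (_ : t ∈ Finset.univ) => show
      (lam v t * ∑ r ∈ Finset.range T, ∑ i, Ht t r ω i * (S (r + 1) ω i - S r ω i))
      = ∑ r ∈ Finset.range T, ∑ i, lam v t * (Ht t r ω i * (S (r + 1) ω i - S r ω i)) from by
        rw [Finset.mul_sum]; exact Finset.sum_congr rfl fun r _ => Finset.mul_sum _ _ _]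
  exact (Finset.sum_congr rfl fun r _ => Finset.sum_comm).trans Finset.sum_comm

lemma mix_liqPay {T n : ℕ} (ψ : ℕ → Ω → ℝ) (μt : (Fin n → Fin (T + 1)) → ℕ → Ω → ℝ)
    (v : Fin n → Fin (T + 1) → ℝ) (ω : Ω) :
    liqPay T ψ (mixL μt v) ω = ∑ t, lam v t * liqPay T ψ (μt t) ω := by
  unfold liqPay mixL
  rw [Finset.sum_congr rfl fun r (_ : r ∈ Finset.range (T + 1)) => show
      (ψ r ω * ∑ t, lam v t * μt t r ω) = ∑ t, lam v t * (ψ r ω * μt t r ω) from by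
        rw [Finset.mul_sum]; exact Finset.sum_congr rfl fun t _ => by ring,
    Finset.sum_congr rfl fun t (_ : t ∈ Finset.univ) => show
      (lam v t * ∑ r ∈ Finset.range (T + 1), ψ r ω * μt t r ω)
      = ∑ r ∈ Finset.range (T + 1), lam v t * (ψ r ω * μt t r ω) from Finset.mul_sum _ _ _]
  exact Finset.sum_comm

lemma mix_vPay {T n : ℕ} {v : Fin n → Fin (T + 1) → ℝ} (hv : memVn T n v)
    (h : ℕ → Ω → ℝ) (k₀ : Fin n) (ω : Ω) :
    vPay T h (v k₀) ω = ∑ t, lam v t * h ((t k₀ : ℕ)) ω := by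
  have hm : (∑ t : Fin n → Fin (T + 1), lam v t * h ((t k₀ : ℕ)) ω)
      = ∑ s, v k₀ s * h ((s : ℕ)) ω := lam_marginal hv k₀ fun s => h (s : ℕ) ω
  rw [hm]
  unfold vPay
  exact Finset.sum_congr rfl fun s _ => mul_comm _ _

lemma mix_aff {T n : ℕ} {v : Fin n → Fin (T + 1) → ℝ} (hv : memVn T n v)
    (A : (Fin n → Fin (T + 1)) → ℝ) (b β : ℝ) :
    ∑ t, lam v t * (b * (A t - β)) = b * ((∑ t, lam v t * A t) - β) := by
  rw [Finset.sum_congr rfl fun t (_ : t ∈ Finset.univ) => show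
      lam v t * (b * (A t - β)) = b * (lam v t * A t) - b * β * lam v t from by ring,
    Finset.sum_sub_distrib, ← Finset.mul_sum, ← Finset.mul_sum, lam_sum hv, mul_one]
  ring

lemma lam_mul_const {T n : ℕ} {v : Fin n → Fin (T + 1) → ℝ} (hv : memVn T n v) (C : ℝ) :
    ∑ t : Fin n → Fin (T + 1), lam v t * C = C := by
  rw [← Finset.sum_mul, lam_sum hv, one_mul]

lemma mix_Phi {T d L M N n : ℕ} (hn : N ≤ n)
    (S : ℕ → Ω → Fin d → ℝ) (f : Fin L → Ω → ℝ) (g : Fin M → ℕ → Ω → ℝ)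
    (h : Fin N → ℕ → Ω → ℝ) (α : Fin L → ℝ) (β : Fin M → ℝ) (γ : Fin N → ℝ)
    (Ht : (Fin n → Fin (T + 1)) → ℕ → Ω → Fin d → ℝ) (a : Fin L → ℝ) (b : Fin M → ℝ)
    (μt : Fin M → (Fin n → Fin (T + 1)) → ℕ → Ω → ℝ) (c : Fin N → ℝ)
    {v : Fin n → Fin (T + 1) → ℝ} (hv : memVn T n v) (ω : Ω) :
    PhiHat T d L M N n hn S f g h α β γ (fun v => mixH Ht v) a b
        (fun j v => mixL (μt j) v) c v ω
      = ∑ t, lam v t * PhiTilde T d L M N n hn S f g h α β γ Ht a b μt c t ω := by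
  have e2 : (∑ i, a i * (f i ω - α i))
      = ∑ t : Fin n → Fin (T + 1), lam v t * ∑ i, a i * (f i ω - α i) :=
    (lam_mul_const hv _).symm
  have e3 : (∑ j, b j * (liqPay T (g j) (mixL (μt j) v) ω - β j))
      = ∑ t : Fin n → Fin (T + 1),
          lam v t * ∑ j, b j * (liqPay T (g j) (μt j t) ω - β j) := by
    rw [Finset.sum_congr rfl fun j (_ : j ∈ Finset.univ) => show
        b j * (liqPay T (g j) (mixL (μt j) v) ω - β j)
        = ∑ t : Fin n → Fin (T + 1), lam v t * (b j * (liqPay T (g j) (μt j t) ω - β j)) from by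
          rw [mix_liqPay]; exact (mix_aff hv _ _ _).symm,
      Finset.sum_comm]
    exact Finset.sum_congr rfl fun t _ => (Finset.mul_sum _ _ _).symm
  have e4 : (∑ k, c k * (vPay T (h k) (v (Fin.castLE hn k)) ω - γ k))
      = ∑ t : Fin n → Fin (T + 1),
          lam v t * ∑ k, c k * (h k ((t (Fin.castLE hn k) : ℕ)) ω - γ k) := by
    rw [Finset.sum_congr rfl fun k (_ : k ∈ Finset.univ) => show
        c k * (vPay T (h k) (v (Fin.castLE hn k)) ω - γ k)
        = ∑ t : Fin n → Fin (T + 1),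
            lam v t * (c k * (h k ((t (Fin.castLE hn k) : ℕ)) ω - γ k)) from by
          rw [mix_vPay hv (h k) (Fin.castLE hn k) ω]; exact (mix_aff hv _ _ _).symm,
      Finset.sum_comm]
    exact Finset.sum_congr rfl fun t _ => (Finset.mul_sum _ _ _).symm
  unfold PhiHat PhiTilde
  rw [mix_stockGain]
  conv_lhs => rw [e2, e3, e4]
  rw [← Finset.sum_add_distrib, ← Finset.sum_add_distrib, ← Finset.sum_sub_distrib]
  exact Finset.sum_congr rfl fun t _ => by ring

lemma restrict_Phi {T d L M N n : ℕ} (hn : N ≤ n)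
    (S : ℕ → Ω → Fin d → ℝ) (f : Fin L → Ω → ℝ) (g : Fin M → ℕ → Ω → ℝ)
    (h : Fin N → ℕ → Ω → ℝ) (α : Fin L → ℝ) (β : Fin M → ℝ) (γ : Fin N → ℝ)
    (Hh : (Fin n → Fin (T + 1) → ℝ) → ℕ → Ω → Fin d → ℝ) (a : Fin L → ℝ) (b : Fin M → ℝ)
    (μh : Fin M → (Fin n → Fin (T + 1) → ℝ) → ℕ → Ω → ℝ) (c : Fin N → ℝ)
    (tt : Fin n → Fin (T + 1)) (ω : Ω) :
    PhiTilde T d L M N n hn S f g h α β γ (fun tt => Hh (fun k => deltaV (tt k))) a b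
        (fun j tt => μh j (fun k => deltaV (tt k))) c tt ω
      = PhiHat T d L M N n hn S f g h α β γ Hh a b μh c (fun k => deltaV (tt k)) ω := by
  unfold PhiTilde PhiHat
  simp only [vPay_delta]

end Auxiliary

/-- Theorem 2.1 of the paper. The hedging prices with divisible and with
indivisible shorted American options coincide. -/
theorem divisible_indivisible_prices_coincide
    (T d L M N : ℕ) [MeasurableSpace.CountablyGenerated Ω]
    (ℱ : ℕ → MeasurableSpace Ω) (hmono : Monotone ℱ) (hle : ∀ t, ℱ t ≤ m0)
    (ℙ : Measure Ω) [IsProbabilityMeasure ℙ]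
    (S : ℕ → Ω → Fin d → ℝ) (hS : ∀ t, Measurable[ℱ t] (S t))
    (f : Fin L → Ω → ℝ) (hf : ∀ i, Measurable[ℱ T] (f i))
    (hfb : ∃ C, ∀ i ω, |f i ω| ≤ C)
    (g : Fin M → ℕ → Ω → ℝ) (hg : ∀ j t, Measurable[ℱ t] (g j t))
    (hgb : ∃ C, ∀ j t ω, |g j t ω| ≤ C)
    (h : Fin N → ℕ → Ω → ℝ) (hh : ∀ k t, Measurable[ℱ t] (h k t))
    (hhb : ∃ C, ∀ k t ω, |h k t ω| ≤ C)
    (φ : ℕ → Ω → ℝ) (hφ : ∀ t, Measurable[ℱ t] (φ t))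
    (hφb : ∃ C, ∀ t ω, |φ t ω| ≤ C)
    (α : Fin L → ℝ) (β : Fin M → ℝ) (γ : Fin N → ℝ) :
    superPrice1 T d L M N ℱ ℙ S f g h α β γ φ = superPrice2 T d L M N ℱ ℙ S f g h α β γ φ ∧
    subPrice1 T d L M N ℱ ℙ S f g h α β γ φ = subPrice2 T d L M N ℱ ℙ S f g h α β γ φ ∧
    ∀ ψ : Ω → ℝ, Measurable[ℱ T] ψ → (∃ C, ∀ ω, |ψ ω| ≤ C) →
      subPriceE1 T d L M N ℱ ℙ S f g h α β γ ψ = subPriceE2 T d L M N ℱ ℙ S f g h α β γ ψ := by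
  refine ⟨?_, ?_, ?_⟩
  · -- super-hedging prices
    unfold superPrice1 superPrice2
    refine congrArg sInf (Set.ext fun x => ?_)
    simp only [Set.mem_setOf_eq]
    constructor
    · rintro ⟨H, a, b, μ, c, ⟨hH, ha, hb, hc, hμ⟩, hineq⟩
      refine ⟨fun tt => H (fun k => deltaV (tt k)), a, b,
        fun j tt => μ j (fun k => deltaV (tt k)), c,
        ⟨⟨fun tt r => hH.1 _ (memVn_delta tt) r,
          fun s t r hst => hH.2 _ _ (memVn_delta t) (memVn_delta s) r (delta_agree hst)⟩,
         ha, hb, hc,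
         fun j => ⟨fun tt => (hμ j).1 _ (memVn_delta tt),
           fun s t r hst => (hμ j).2 _ _ (memVn_delta t) (memVn_delta s) r (delta_agree hst)⟩⟩,
        ?_⟩
      intro tt
      filter_upwards [hineq (fun k => deltaV (tt k)) (memVn_delta tt)] with ω hω
      rw [restrict_Phi, ← vPay_delta φ (tt (Fin.last N)) ω]
      exact hω
    · rintro ⟨Ht, a, b, μt, c, ⟨hH, ha, hb, hc, hμ⟩, hineq⟩
      refine ⟨fun v => mixH Ht v, a, b, fun j v => mixL (μt j) v, c,
        ⟨mixH_mem hH, ha, hb, hc, fun j => mixL_mem (hμ j)⟩, ?_⟩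
      intro v hv
      filter_upwards [(MeasureTheory.ae_all_iff).2 hineq] with ω hω
      calc vPay T φ (v (Fin.last N)) ω
          = ∑ t : Fin (N + 1) → Fin (T + 1), lam v t * φ ((t (Fin.last N) : ℕ)) ω :=
            mix_vPay hv φ (Fin.last N) ω
        _ ≤ ∑ t : Fin (N + 1) → Fin (T + 1), lam v t * (x + PhiTilde T d L M N (N + 1)
              (Nat.le_succ N) S f g h α β γ Ht a b μt c t ω) :=
            Finset.sum_le_sum fun t _ => mul_le_mul_of_nonneg_left (hω t) (lam_nonneg hv t)
        _ = x + PhiHat T d L M N (N + 1) (Nat.le_succ N) S f g h α β γ (fun v => mixH Ht v) a b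
              (fun j v => mixL (μt j) v) c v ω := by
            rw [Finset.sum_congr rfl fun t (_ : t ∈ Finset.univ) => mul_add (lam v t) x _,
              Finset.sum_add_distrib, lam_mul_const hv x,
              mix_Phi (Nat.le_succ N) S f g h α β γ Ht a b μt c hv ω]
  · -- sub-hedging prices
    unfold subPrice1 subPrice2
    refine congrArg sSup (Set.ext fun x => ?_)
    simp only [Set.mem_setOf_eq]
    constructor
    · rintro ⟨H, a, b, μ, c, η, ⟨hH, ha, hb, hc, hμ⟩, hη, hineq⟩
      refine ⟨fun tt => H (fun k => deltaV (tt k)), a, b,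
        fun j tt => μ j (fun k => deltaV (tt k)), c, fun tt => η (fun k => deltaV (tt k)),
        ⟨⟨fun tt r => hH.1 _ (memVn_delta tt) r,
          fun s t r hst => hH.2 _ _ (memVn_delta t) (memVn_delta s) r (delta_agree hst)⟩,
         ha, hb, hc,
         fun j => ⟨fun tt => (hμ j).1 _ (memVn_delta tt),
           fun s t r hst => (hμ j).2 _ _ (memVn_delta t) (memVn_delta s) r (delta_agree hst)⟩⟩,
        ⟨fun tt => hη.1 _ (memVn_delta tt),
          fun s t r hst => hη.2 _ _ (memVn_delta t) (memVn_delta s) r (delta_agree hst)⟩,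
        ?_⟩
      intro tt
      filter_upwards [hineq (fun k => deltaV (tt k)) (memVn_delta tt)] with ω hω
      rw [restrict_Phi]
      exact hω
    · rintro ⟨Ht, a, b, μt, c, ηt, ⟨hH, ha, hb, hc, hμ⟩, hη, hineq⟩
      refine ⟨fun v => mixH Ht v, a, b, fun j v => mixL (μt j) v, c, fun v => mixL ηt v,
        ⟨mixH_mem hH, ha, hb, hc, fun j => mixL_mem (hμ j)⟩, mixL_mem hη, ?_⟩
      intro v hv
      filter_upwards [(MeasureTheory.ae_all_iff).2 hineq] with ω hω
      calc x = ∑ t : Fin N → Fin (T + 1), lam v t * x := (lam_mul_const hv x).symm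
        _ ≤ ∑ t : Fin N → Fin (T + 1), lam v t * (PhiTilde T d L M N N le_rfl S f g h α β γ
              Ht a b μt c t ω + liqPay T φ (ηt t) ω) :=
            Finset.sum_le_sum fun t _ => mul_le_mul_of_nonneg_left (hω t) (lam_nonneg hv t)
        _ = PhiHat T d L M N N le_rfl S f g h α β γ (fun v => mixH Ht v) a b
              (fun j v => mixL (μt j) v) c v ω + liqPay T φ (mixL ηt v) ω := by
            rw [mix_Phi le_rfl S f g h α β γ Ht a b μt c hv ω, mix_liqPay φ ηt v ω,
              ← Finset.sum_add_distrib]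
            exact Finset.sum_congr rfl fun t _ => mul_add _ _ _
  · -- European sub-hedging prices
    intro ψ hψm hψb
    unfold subPriceE1 subPriceE2
    refine congrArg sSup (Set.ext fun x => ?_)
    simp only [Set.mem_setOf_eq]
    constructor
    · rintro ⟨H, a, b, μ, c, ⟨hH, ha, hb, hc, hμ⟩, hineq⟩
      refine ⟨fun tt => H (fun k => deltaV (tt k)), a, b,
        fun j tt => μ j (fun k => deltaV (tt k)), c,
        ⟨⟨fun tt r => hH.1 _ (memVn_delta tt) r,
          fun s t r hst => hH.2 _ _ (memVn_delta t) (memVn_delta s) r (delta_agree hst)⟩,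
         ha, hb, hc,
         fun j => ⟨fun tt => (hμ j).1 _ (memVn_delta tt),
           fun s t r hst => (hμ j).2 _ _ (memVn_delta t) (memVn_delta s) r (delta_agree hst)⟩⟩,
        ?_⟩
      intro tt
      filter_upwards [hineq (fun k => deltaV (tt k)) (memVn_delta tt)] with ω hω
      rw [restrict_Phi]
      exact hω
    · rintro ⟨Ht, a, b, μt, c, ⟨hH, ha, hb, hc, hμ⟩, hineq⟩
      refine ⟨fun v => mixH Ht v, a, b, fun j v => mixL (μt j) v, c,
        ⟨mixH_mem hH, ha, hb, hc, fun j => mixL_mem (hμ j)⟩, ?_⟩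
      intro v hv
      filter_upwards [(MeasureTheory.ae_all_iff).2 hineq] with ω hω
      calc x = ∑ t : Fin N → Fin (T + 1), lam v t * x := (lam_mul_const hv x).symm
        _ ≤ ∑ t : Fin N → Fin (T + 1), lam v t * (PhiTilde T d L M N N le_rfl S f g h α β γ
              Ht a b μt c t ω + ψ ω) :=
            Finset.sum_le_sum fun t _ => mul_le_mul_of_nonneg_left (hω t) (lam_nonneg hv t)
        _ = PhiHat T d L M N N le_rfl S f g h α β γ (fun v => mixH Ht v) a b
              (fun j v => mixL (μt j) v) c v ω + ψ ω := by
            rw [mix_Phi le_rfl S f g h α β γ Ht a b μt c hv ω,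
              show (∑ t : Fin N → Fin (T + 1), lam v t * (PhiTilde T d L M N N le_rfl S f g h
                    α β γ Ht a b μt c t ω + ψ ω))
                  = (∑ t : Fin N → Fin (T + 1), lam v t * PhiTilde T d L M N N le_rfl S f g h
                    α β γ Ht a b μt c t ω) + ∑ t : Fin N → Fin (T + 1), lam v t * ψ ω from by
                rw [← Finset.sum_add_distrib]
                exact Finset.sum_congr rfl fun t _ => mul_add _ _ _,
              lam_mul_const hv (ψ ω)]

end Stmt0
end
end

section
/- Let N=2. Given H̃ ∈ 𝓗̃² (a non-anticipative family of adapted processes indexed by pairs of exercise times), define Ĥ: V² → (𝔽-adapted ℝ^d processes) by Ĥ_r(u,v) := Σ_{s=0}^T Σ_{t=0}^T u_s v_t H̃_r(s,t). Then Ĥ ∈ 𝓗̂², i.e. for any u,v,u',v' ∈ V and any t* ∈ {0,…,T}, if u_r = u'_r and v_r = v'_r for r = 0,…,t*, then Ĥ_{t*}(u,v) = Ĥ_{t*}(u',v'). -/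
open MeasureTheory Finset

noncomputable section

namespace Stmt1

variable {Ω : Type*}

/-- `V`: the set of liquidation vectors `v ∈ ℝ₊^{T+1}` with `∑ᵗ v_t = 1`. -/
def Vset (T : ℕ) : Set (Fin (T + 1) → ℝ) :=
  {v | (∀ t, 0 ≤ v t) ∧ ∑ t, v t = 1}

/-- `𝓗̃²`: non-anticipative families of `𝔽`-adapted `ℝ^d`-valued processes indexed by
pairs of exercise times: `H̃_r(t1,t2) = H̃_r(s1,s2)` whenever
`r < r* = min_{k : sᵏ ≠ tᵏ} (sᵏ ∧ tᵏ)`. -/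
def Htilde2 (T d : ℕ) (ℱ : ℕ → MeasurableSpace Ω)
    (H : Fin (T + 1) → Fin (T + 1) → ℕ → Ω → Fin d → ℝ) : Prop :=
  (∀ s t : Fin (T + 1), ∀ r : ℕ, Measurable[ℱ r] (H s t r)) ∧
  ∀ s1 s2 t1 t2 : Fin (T + 1), ∀ r : ℕ,
    ((s1 ≠ t1 → r < min (s1 : ℕ) (t1 : ℕ)) ∧ (s2 ≠ t2 → r < min (s2 : ℕ) (t2 : ℕ))) →
      H t1 t2 r = H s1 s2 r

/-- `𝓗̂²`: families of `𝔽`-adapted `ℝ^d`-valued processes indexed by pairs of liquidation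
vectors in `V²`, non-anticipative in the sense that `Ĥ_{t*}(v1,v2) = Ĥ_{t*}(u1,u2)` whenever
`vᵏ_t = uᵏ_t` for all `t ≤ t*`, `k = 1,2`. -/
def Hhat2 (T d : ℕ) (ℱ : ℕ → MeasurableSpace Ω)
    (H : (Fin (T + 1) → ℝ) → (Fin (T + 1) → ℝ) → ℕ → Ω → Fin d → ℝ) : Prop :=
  (∀ v1 v2, v1 ∈ Vset T → v2 ∈ Vset T → ∀ r : ℕ, Measurable[ℱ r] (H v1 v2 r)) ∧
  ∀ v1 v2 u1 u2, v1 ∈ Vset T → v2 ∈ Vset T → u1 ∈ Vset T → u2 ∈ Vset T →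
    ∀ r : ℕ, (∀ t : Fin (T + 1), (t : ℕ) ≤ r → v1 t = u1 t ∧ v2 t = u2 t) →
      H v1 v2 r = H u1 u2 r

lemma key_sum {T : ℕ} (r : ℕ) (u u' : Fin (T+1) → ℝ)
    (hu : ∑ t, u t = 1) (hu' : ∑ t, u' t = 1)
    (hag : ∀ t : Fin (T+1), (t:ℕ) ≤ r → u t = u' t)
    (f : Fin (T+1) → ℝ) (hf : ∀ t : Fin (T+1), ¬(t:ℕ) ≤ r → f t = f (Fin.last T)) :
    ∑ t, u t * f t = ∑ t, u' t * f t := by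
  have h : ∑ t, (u t - u' t) * f t = 0 := by
    rw [← Finset.sum_filter_add_sum_filter_not Finset.univ (fun t : Fin (T+1) => (t:ℕ) ≤ r)]
    have h1 : ∑ t ∈ Finset.univ.filter (fun t : Fin (T+1) => (t:ℕ) ≤ r), (u t - u' t) * f t = 0 :=
      Finset.sum_eq_zero (fun t ht => by
        simp only [Finset.mem_filter] at ht
        rw [hag t ht.2]; ring)
    have h2 : ∑ t ∈ Finset.univ.filter (fun t : Fin (T+1) => ¬(t:ℕ) ≤ r), (u t - u' t) * f t
        = (∑ t ∈ Finset.univ.filter (fun t : Fin (T+1) => ¬(t:ℕ) ≤ r), (u t - u' t)) * f (Fin.last T) := by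
      rw [Finset.sum_mul]
      exact Finset.sum_congr rfl (fun t ht => by
        simp only [Finset.mem_filter] at ht
        rw [hf t ht.2])
    have hsplit := Finset.sum_filter_add_sum_filter_not Finset.univ
      (fun t : Fin (T+1) => (t:ℕ) ≤ r) (fun t => u t - u' t)
    have hall : ∑ t, (u t - u' t) = 0 := by
      rw [Finset.sum_sub_distrib, hu, hu']; ring
    have hle : ∑ t ∈ Finset.univ.filter (fun t : Fin (T+1) => (t:ℕ) ≤ r), (u t - u' t) = 0 :=
      Finset.sum_eq_zero (fun t ht => by
        simp only [Finset.mem_filter] at ht; rw [hag t ht.2]; ring)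
    have h3 : ∑ t ∈ Finset.univ.filter (fun t : Fin (T+1) => ¬(t:ℕ) ≤ r), (u t - u' t) = 0 := by
      rw [hle, hall] at hsplit; linarith
    rw [h1, h2, h3]; ring
  have hsub : ∑ t, (u t - u' t) * f t = (∑ t, u t * f t) - ∑ t, u' t * f t := by
    rw [← Finset.sum_sub_distrib]
    exact Finset.sum_congr rfl (fun t _ => by ring)
  rw [hsub] at h; linarith

/-- If `H̃ ∈ 𝓗̃²`, then the averaged strategy
`Ĥ_r(u,v) := ∑_{s,t} u_s v_t H̃_r(s,t)` belongs to `𝓗̂²`. -/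
theorem averaged_strategy_mem_Hhat2 (T d : ℕ) (ℱ : ℕ → MeasurableSpace Ω)
    (Htil : Fin (T + 1) → Fin (T + 1) → ℕ → Ω → Fin d → ℝ)
    (hHtil : Htilde2 T d ℱ Htil) :
    Hhat2 T d ℱ
      (fun u v r ω i => ∑ s : Fin (T + 1), ∑ t : Fin (T + 1), u s * v t * Htil s t r ω i) := by
  classical
  obtain ⟨hmeas, hna⟩ := hHtil
  constructor
  · intro v1 v2 _ _ r
    letI := ℱ r
    apply measurable_pi_lambda
    intro i
    apply Finset.measurable_sum
    intro s _
    apply Finset.measurable_sum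
    intro t _
    exact ((measurable_pi_apply i).comp (hmeas s t r)).const_mul _
  · intro v1 v2 u1 u2 hv1 hv2 hu1 hu2 r hag
    funext ω i
    set g : Fin (T+1) → Fin (T+1) := fun s => if (s:ℕ) ≤ r then s else Fin.last T with hg
    have hgA : ∀ s t : Fin (T+1), Htil s t r = Htil (g s) (g t) r := by
      intro s t
      apply hna (g s) (g t) s t r
      constructor
      · intro hne
        have hs : ¬ (s:ℕ) ≤ r := by
          intro h; apply hne; simp [hg, h]
        simp only [hg, if_neg hs]
        simp only [Fin.val_last]
        push_neg at hs
        exact lt_min (lt_of_lt_of_le hs (Nat.lt_succ_iff.mp s.isLt)) hs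
      · intro hne
        have ht : ¬ (t:ℕ) ≤ r := by
          intro h; apply hne; simp [hg, h]
        simp only [hg, if_neg ht]
        simp only [Fin.val_last]
        push_neg at ht
        exact lt_min (lt_of_lt_of_le ht (Nat.lt_succ_iff.mp t.isLt)) ht
    have hglast : g (Fin.last T) = Fin.last T := by
      simp [hg]
    have hconst : ∀ s : Fin (T+1), ¬(s:ℕ) ≤ r → g s = Fin.last T := by
      intro s hs; simp [hg, hs]
    have step : ∀ w1 w2 : Fin (T+1) → ℝ,
        (∑ s : Fin (T+1), ∑ t : Fin (T+1), w1 s * w2 t * Htil s t r ω i)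
        = ∑ s : Fin (T+1), w1 s * ∑ t : Fin (T+1), w2 t * Htil (g s) (g t) r ω i := by
      intro w1 w2
      apply Finset.sum_congr rfl
      intro s _
      rw [Finset.mul_sum]
      apply Finset.sum_congr rfl
      intro t _
      rw [hgA s t]; ring
    beta_reduce
    rw [step v1 v2, step u1 u2]
    have inner : ∀ s : Fin (T+1),
        (∑ t : Fin (T+1), v2 t * Htil (g s) (g t) r ω i)
        = ∑ t : Fin (T+1), u2 t * Htil (g s) (g t) r ω i := by
      intro s
      apply key_sum r v2 u2 hv2.2 hu2.2 (fun t ht => (hag t ht).2)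
      intro t ht
      rw [hconst t ht, hglast]
    calc (∑ s : Fin (T+1), v1 s * ∑ t : Fin (T+1), v2 t * Htil (g s) (g t) r ω i)
        = ∑ s : Fin (T+1), u1 s * ∑ t : Fin (T+1), v2 t * Htil (g s) (g t) r ω i := by
          apply key_sum r v1 u1 hv1.2 hu1.2 (fun t ht => (hag t ht).1)
          intro s hs
          rw [hconst s hs, hglast]
      _ = ∑ s : Fin (T+1), u1 s * ∑ t : Fin (T+1), u2 t * Htil (g s) (g t) r ω i := by
          exact Finset.sum_congr rfl (fun s _ => by rw [inner s])


end Stmt1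
end
end

section
/- Let L=M=0 and N=2. Suppose x ∈ ℝ, (H̃,c¹,c²) ∈ 𝓗̃²×ℝ_+×ℝ_+ and a bounded 𝓕_T-measurable ψ satisfy H̃(t¹,t²)·S − c¹(h¹_{t¹}−γ¹) − c²(h²_{t²}−γ²) + ψ ≥ x ℙ-a.s. for every (t¹,t²) ∈ 𝕋². Then the averaged strategy Ĥ_r(u,v) := Σ_{s,t} u_s v_t H̃_r(s,t) satisfies Ĥ(u,v)·S − c¹(u(h¹)−γ¹) − c²(v(h²)−γ²) + ψ ≥ x ℙ-a.s. for every (u,v) ∈ V². Consequently the sub-hedging price of ψ with indivisible shorted American options is at most that with divisible shorted American options: π̲_e²(ψ) ≤ π̲_e¹(ψ). -/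
open MeasureTheory Finset

noncomputable section

namespace Stmt2

variable {Ω : Type*}

/-- `V`: liquidation vectors. -/
def Vset (T : ℕ) : Set (Fin (T + 1) → ℝ) :=
  {v | (∀ t, 0 ≤ v t) ∧ ∑ t, v t = 1}

/-- Gain from dynamic trading: `H·S = ∑_{t=0}^{T-1} H_t (S_{t+1} - S_t)`. -/
def stockGain (T d : ℕ) (H S : ℕ → Ω → Fin d → ℝ) (ω : Ω) : ℝ :=
  ∑ t ∈ Finset.range T, ∑ i, H t ω i * (S (t + 1) ω i - S t ω i)

/-- Payoff of an American option `h` liquidated according to `u ∈ V`: `u(h) = ∑_t h_t u_t`. -/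
def vPay (T : ℕ) (h : ℕ → Ω → ℝ) (u : Fin (T + 1) → ℝ) (ω : Ω) : ℝ :=
  ∑ t : Fin (T + 1), h (t : ℕ) ω * u t

/-- `𝓗̃²`: non-anticipative adapted families indexed by pairs of exercise times. -/
def Htilde2 (T d : ℕ) (ℱ : ℕ → MeasurableSpace Ω)
    (H : Fin (T + 1) → Fin (T + 1) → ℕ → Ω → Fin d → ℝ) : Prop :=
  (∀ s t : Fin (T + 1), ∀ r : ℕ, Measurable[ℱ r] (H s t r)) ∧
  ∀ s1 s2 t1 t2 : Fin (T + 1), ∀ r : ℕ,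
    ((s1 ≠ t1 → r < min (s1 : ℕ) (t1 : ℕ)) ∧ (s2 ≠ t2 → r < min (s2 : ℕ) (t2 : ℕ))) →
      H t1 t2 r = H s1 s2 r

/-- `𝓗̂²`: non-anticipative adapted families indexed by pairs of liquidation vectors. -/
def Hhat2 (T d : ℕ) (ℱ : ℕ → MeasurableSpace Ω)
    (H : (Fin (T + 1) → ℝ) → (Fin (T + 1) → ℝ) → ℕ → Ω → Fin d → ℝ) : Prop :=
  (∀ v1 v2, v1 ∈ Vset T → v2 ∈ Vset T → ∀ r : ℕ, Measurable[ℱ r] (H v1 v2 r)) ∧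
  ∀ v1 v2 u1 u2, v1 ∈ Vset T → v2 ∈ Vset T → u1 ∈ Vset T → u2 ∈ Vset T →
    ∀ r : ℕ, (∀ t : Fin (T + 1), (t : ℕ) ≤ r → v1 t = u1 t ∧ v2 t = u2 t) →
      H v1 v2 r = H u1 u2 r

/-- Sub-hedging price of `ψ` with divisible shorted American options (`L = M = 0`, `N = 2`). -/
def subPriceE1 {m0 : MeasurableSpace Ω} (T d : ℕ) (ℱ : ℕ → MeasurableSpace Ω) (ℙ : Measure Ω)
    (S : ℕ → Ω → Fin d → ℝ) (h1 h2 : ℕ → Ω → ℝ) (γ1 γ2 : ℝ) (ψ : Ω → ℝ) : ℝ :=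
  sSup {x : ℝ | ∃ (H : (Fin (T + 1) → ℝ) → (Fin (T + 1) → ℝ) → ℕ → Ω → Fin d → ℝ) (c1 c2 : ℝ),
    Hhat2 T d ℱ H ∧ 0 ≤ c1 ∧ 0 ≤ c2 ∧
    ∀ u v, u ∈ Vset T → v ∈ Vset T →
      ∀ᵐ ω ∂ℙ, x ≤ stockGain T d (H u v) S ω - c1 * (vPay T h1 u ω - γ1)
        - c2 * (vPay T h2 v ω - γ2) + ψ ω}

/-- Sub-hedging price of `ψ` with indivisible shorted American options (`L = M = 0`, `N = 2`). -/
def subPriceE2 {m0 : MeasurableSpace Ω} (T d : ℕ) (ℱ : ℕ → MeasurableSpace Ω) (ℙ : Measure Ω)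
    (S : ℕ → Ω → Fin d → ℝ) (h1 h2 : ℕ → Ω → ℝ) (γ1 γ2 : ℝ) (ψ : Ω → ℝ) : ℝ :=
  sSup {x : ℝ | ∃ (H : Fin (T + 1) → Fin (T + 1) → ℕ → Ω → Fin d → ℝ) (c1 c2 : ℝ),
    Htilde2 T d ℱ H ∧ 0 ≤ c1 ∧ 0 ≤ c2 ∧
    ∀ t1 t2 : Fin (T + 1),
      ∀ᵐ ω ∂ℙ, x ≤ stockGain T d (H t1 t2) S ω - c1 * (h1 (t1 : ℕ) ω - γ1)
        - c2 * (h2 (t2 : ℕ) ω - γ2) + ψ ω}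

lemma sum4 {α β γ δ M : Type*} [AddCommMonoid M] (A : Finset α) (B : Finset β) (C : Finset γ)
    (D : Finset δ) (f : α → β → γ → δ → M) :
    ∑ a ∈ A, ∑ b ∈ B, ∑ c ∈ C, ∑ d ∈ D, f a b c d
      = ∑ c ∈ C, ∑ d ∈ D, ∑ a ∈ A, ∑ b ∈ B, f a b c d :=
  calc ∑ a ∈ A, ∑ b ∈ B, ∑ c ∈ C, ∑ d ∈ D, f a b c d
      = ∑ a ∈ A, ∑ c ∈ C, ∑ b ∈ B, ∑ d ∈ D, f a b c d :=
        Finset.sum_congr rfl fun _ _ => Finset.sum_comm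
    _ = ∑ c ∈ C, ∑ a ∈ A, ∑ b ∈ B, ∑ d ∈ D, f a b c d := Finset.sum_comm
    _ = ∑ c ∈ C, ∑ a ∈ A, ∑ d ∈ D, ∑ b ∈ B, f a b c d :=
        Finset.sum_congr rfl fun _ _ => Finset.sum_congr rfl fun _ _ => Finset.sum_comm
    _ = ∑ c ∈ C, ∑ d ∈ D, ∑ a ∈ A, ∑ b ∈ B, f a b c d :=
        Finset.sum_congr rfl fun _ _ => Finset.sum_comm

lemma combo {n : ℕ} (u v : Fin n → ℝ) (hu : ∑ s, u s = 1) (hv : ∑ t, v t = 1)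
    (G : Fin n → Fin n → ℝ) (A B : Fin n → ℝ) (c1 c2 γ1 γ2 p : ℝ) :
    ∑ s, ∑ t, u s * v t * (G s t - c1 * (A s - γ1) - c2 * (B t - γ2) + p)
      = (∑ s, ∑ t, u s * v t * G s t)
        - c1 * ((∑ s, A s * u s) - γ1) - c2 * ((∑ t, B t * v t) - γ2) + p := by
  have key : ∀ s, ∑ t, u s * v t * (G s t - c1 * (A s - γ1) - c2 * (B t - γ2) + p)
      = (∑ t, u s * v t * G s t) - u s * (c1 * (A s - γ1))
        - u s * (c2 * ((∑ t, B t * v t) - γ2)) + u s * p := by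
    intro s
    have e1 : ∑ t, u s * v t * (G s t - c1 * (A s - γ1) - c2 * (B t - γ2) + p)
        = ∑ t, (u s * v t * G s t - v t * (u s * (c1 * (A s - γ1)))
            - u s * (c2 * (B t * v t - γ2 * v t)) + v t * (u s * p)) :=
      Finset.sum_congr rfl fun t _ => by ring
    rw [e1]
    simp only [Finset.sum_add_distrib, Finset.sum_sub_distrib, ← Finset.sum_mul,
      ← Finset.mul_sum, hv, one_mul]
    ring_nf
  rw [Finset.sum_congr rfl fun s _ => key s]
  simp only [Finset.sum_add_distrib, Finset.sum_sub_distrib, ← Finset.sum_mul,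
    ← Finset.mul_sum, hu, one_mul]
  have h2 : ∑ x, u x * (c1 * (A x - γ1)) = c1 * ((∑ x, A x * u x) - γ1) := by
    have e2 : ∀ x, u x * (c1 * (A x - γ1)) = c1 * (A x * u x) - u x * (c1 * γ1) :=
      fun x => by ring
    rw [Finset.sum_congr rfl fun x _ => e2 x, Finset.sum_sub_distrib, ← Finset.mul_sum,
      ← Finset.sum_mul, hu]
    ring
  rw [h2]

lemma weight_swap {n : ℕ} (P : Finset (Fin n)) (a a' f : Fin n → ℝ)
    (hagree : ∀ s ∈ P, a s = a' s) (hsum : ∑ s, a s = ∑ s, a' s)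
    (hconst : ∀ s ∉ P, ∀ s' ∉ P, f s = f s') :
    ∑ s, a s * f s = ∑ s, a' s * f s := by
  by_cases hne : ∀ s, s ∈ P
  · exact Finset.sum_congr rfl fun s _ => by rw [hagree s (hne s)]
  · push_neg at hne
    obtain ⟨s0, hs0⟩ := hne
    have key : ∀ b : Fin n → ℝ,
        ∑ s, b s * f s = ∑ s ∈ P, b s * f s + (∑ s, b s - ∑ s ∈ P, b s) * f s0 := by
      intro b
      rw [← Finset.sum_filter_add_sum_filter_not Finset.univ (· ∈ P)]
      simp only [Finset.filter_mem_eq_inter, Finset.univ_inter]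
      congr 1
      have hc : ∑ s ∈ Finset.univ.filter (· ∉ P), b s * f s
          = ∑ s ∈ Finset.univ.filter (· ∉ P), b s * f s0 :=
        Finset.sum_congr rfl fun s hs => by
          rw [hconst s (Finset.mem_filter.1 hs).2 s0 hs0]
      rw [hc, ← Finset.sum_mul]
      congr 1
      have h3 := Finset.sum_filter_add_sum_filter_not Finset.univ (· ∈ P) b
      simp only [Finset.filter_mem_eq_inter, Finset.univ_inter] at h3
      linarith
    have hcP : ∑ s ∈ P, a s * f s = ∑ s ∈ P, a' s * f s :=
      Finset.sum_congr rfl fun s hs => by rw [hagree s hs]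
    have hcP2 : ∑ s ∈ P, a s = ∑ s ∈ P, a' s := Finset.sum_congr rfl fun s hs => hagree s hs
    rw [key a, key a', hsum, hcP, hcP2]

lemma meas_avg {d n : ℕ} {mΩ : MeasurableSpace Ω} (a : Fin n → Fin n → ℝ)
    (H : Fin n → Fin n → Ω → Fin d → ℝ) (hH : ∀ s t, Measurable[mΩ] (H s t)) :
    Measurable[mΩ] fun ω i => ∑ s, ∑ t, a s t * H s t ω i := by
  letI := mΩ
  exact measurable_pi_lambda _ fun i =>
    Finset.measurable_sum _ fun s _ => Finset.measurable_sum _ fun t _ =>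
      ((hH s t).eval (a := i)).const_mul _

/-- Part 1 as a standalone lemma, for arbitrary data. -/
lemma avg_subhedge {m0 : MeasurableSpace Ω} (T d : ℕ)
    (ℙ : Measure Ω) (S : ℕ → Ω → Fin d → ℝ) (h1 h2 : ℕ → Ω → ℝ) (γ1 γ2 : ℝ) (ψ : Ω → ℝ)
    (x : ℝ) (Htil : Fin (T + 1) → Fin (T + 1) → ℕ → Ω → Fin d → ℝ) (c1 c2 : ℝ)
    (hsub : ∀ t1 t2 : Fin (T + 1),
      ∀ᵐ ω ∂ℙ, x ≤ stockGain T d (Htil t1 t2) S ω - c1 * (h1 (t1 : ℕ) ω - γ1)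
        - c2 * (h2 (t2 : ℕ) ω - γ2) + ψ ω) :
    ∀ u v, u ∈ Vset T → v ∈ Vset T →
      ∀ᵐ ω ∂ℙ, x ≤ stockGain T d
          (fun r ω' i => ∑ s : Fin (T + 1), ∑ t : Fin (T + 1), u s * v t * Htil s t r ω' i) S ω
        - c1 * (vPay T h1 u ω - γ1) - c2 * (vPay T h2 v ω - γ2) + ψ ω := by
  intro u v hu hv
  have hall : ∀ᵐ ω ∂ℙ, ∀ s t : Fin (T + 1),
      x ≤ stockGain T d (Htil s t) S ω - c1 * (h1 (s : ℕ) ω - γ1)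
        - c2 * (h2 (t : ℕ) ω - γ2) + ψ ω := by
    rw [ae_all_iff]; intro s; rw [ae_all_iff]; intro t; exact hsub s t
  filter_upwards [hall] with ω hω
  have hgain : stockGain T d
      (fun r ω' i => ∑ s : Fin (T + 1), ∑ t : Fin (T + 1), u s * v t * Htil s t r ω' i) S ω
      = ∑ s : Fin (T + 1), ∑ t : Fin (T + 1), u s * v t * stockGain T d (Htil s t) S ω := by
    unfold stockGain
    simp only [Finset.sum_mul, Finset.mul_sum]
    rw [sum4]
    exact Finset.sum_congr rfl fun s _ => Finset.sum_congr rfl fun t _ =>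
      Finset.sum_congr rfl fun r _ => Finset.sum_congr rfl fun i _ => by ring
  have hxsum : x = ∑ s : Fin (T + 1), ∑ t : Fin (T + 1), u s * v t * x := by
    have e1 : ∀ s : Fin (T + 1), ∑ t : Fin (T + 1), u s * v t * x = u s * x := by
      intro s
      rw [show u s * x = (u s * x) * ∑ t : Fin (T + 1), v t by rw [hv.2]; ring,
        Finset.mul_sum]
      exact Finset.sum_congr rfl fun t _ => by ring
    rw [Finset.sum_congr rfl fun s _ => e1 s, ← Finset.sum_mul, hu.2, one_mul]
  calc x = ∑ s : Fin (T + 1), ∑ t : Fin (T + 1), u s * v t * x := hxsum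
    _ ≤ ∑ s : Fin (T + 1), ∑ t : Fin (T + 1), u s * v t *
          (stockGain T d (Htil s t) S ω - c1 * (h1 (s : ℕ) ω - γ1)
            - c2 * (h2 (t : ℕ) ω - γ2) + ψ ω) :=
        Finset.sum_le_sum fun s _ => Finset.sum_le_sum fun t _ =>
          mul_le_mul_of_nonneg_left (hω s t) (mul_nonneg (hu.1 s) (hv.1 t))
    _ = _ := by
        rw [combo u v hu.2 hv.2 _ _ _ c1 c2 γ1 γ2 (ψ ω), hgain]
        rfl

/-- If the indivisible strategy `(H̃, c¹, c²)` sub-hedges `ψ` at level `x`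
for every pair of exercise times, then the averaged strategy
`Ĥ_r(u,v) := ∑_{s,t} u_s v_t H̃_r(s,t)` sub-hedges `ψ` at level `x` for every pair of
liquidation vectors; consequently `π̲_e²(ψ) ≤ π̲_e¹(ψ)`. -/
theorem averaged_subhedge_and_price_ineq
    {m0 : MeasurableSpace Ω} (T d : ℕ) (ℱ : ℕ → MeasurableSpace Ω)
    (hmono : Monotone ℱ) (hle : ∀ t, ℱ t ≤ m0)
    (ℙ : Measure Ω) [IsProbabilityMeasure ℙ]
    (S : ℕ → Ω → Fin d → ℝ) (hS : ∀ t, Measurable[ℱ t] (S t))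
    (h1 h2 : ℕ → Ω → ℝ)
    (hh1 : ∀ t, Measurable[ℱ t] (h1 t)) (hh2 : ∀ t, Measurable[ℱ t] (h2 t))
    (hh1b : ∃ C, ∀ t ω, |h1 t ω| ≤ C) (hh2b : ∃ C, ∀ t ω, |h2 t ω| ≤ C)
    (γ1 γ2 : ℝ) (ψ : Ω → ℝ) (hψ : Measurable[ℱ T] ψ) (hψb : ∃ C, ∀ ω, |ψ ω| ≤ C)
    (x : ℝ) (Htil : Fin (T + 1) → Fin (T + 1) → ℕ → Ω → Fin d → ℝ) (c1 c2 : ℝ)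
    (hHtil : Htilde2 T d ℱ Htil) (hc1 : 0 ≤ c1) (hc2 : 0 ≤ c2)
    (hsub : ∀ t1 t2 : Fin (T + 1),
      ∀ᵐ ω ∂ℙ, x ≤ stockGain T d (Htil t1 t2) S ω - c1 * (h1 (t1 : ℕ) ω - γ1)
        - c2 * (h2 (t2 : ℕ) ω - γ2) + ψ ω) :
    (∀ u v, u ∈ Vset T → v ∈ Vset T →
      ∀ᵐ ω ∂ℙ, x ≤ stockGain T d
          (fun r ω' i => ∑ s : Fin (T + 1), ∑ t : Fin (T + 1), u s * v t * Htil s t r ω' i) S ω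
        - c1 * (vPay T h1 u ω - γ1) - c2 * (vPay T h2 v ω - γ2) + ψ ω) ∧
    subPriceE2 T d ℱ ℙ S h1 h2 γ1 γ2 ψ ≤ subPriceE1 T d ℱ ℙ S h1 h2 γ1 γ2 ψ := by

  have main := avg_subhedge T d ℙ S h1 h2 γ1 γ2 ψ x Htil c1 c2 hsub
  refine ⟨main, le_of_eq ?_⟩
  unfold subPriceE1 subPriceE2
  congr 1
  apply Set.Subset.antisymm
  · -- set2 ⊆ set1 : average the indivisible strategy
    rintro y ⟨H, c1', c2', hH, hc1', hc2', hsub'⟩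
    refine ⟨fun u v r ω i => ∑ s : Fin (T + 1), ∑ t : Fin (T + 1), u s * v t * H s t r ω i,
      c1', c2', ⟨?_, ?_⟩, hc1', hc2',
      avg_subhedge T d ℙ S h1 h2 γ1 γ2 ψ y H c1' c2' hsub'⟩
    · intro v1 v2 _ _ r
      exact meas_avg (fun s t => v1 s * v2 t) (fun s t => H s t r) (fun s t => hH.1 s t r)
    · intro v1 v2 u1 u2 hv1 hv2 hu1 hu2 r hagr
      funext ω i
      dsimp only
      set P : Finset (Fin (T + 1)) := Finset.univ.filter (fun s : Fin (T + 1) => (s : ℕ) ≤ r)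
        with hP
      have hmemP : ∀ s : Fin (T + 1), s ∈ P ↔ (s : ℕ) ≤ r := by
        intro s; simp [hP]
      have hHconst : ∀ s ∉ P, ∀ s' ∉ P, ∀ t t' : Fin (T + 1),
          (t ∉ P → t' ∉ P) → False ∨ True := fun _ _ _ _ _ _ _ => Or.inr trivial
      have hform : ∀ (a b : Fin (T + 1) → ℝ),
          (∑ s : Fin (T + 1), ∑ t : Fin (T + 1), a s * b t * H s t r ω i)
            = ∑ s : Fin (T + 1), a s * ∑ t : Fin (T + 1), b t * H s t r ω i := by
        intro a b
        refine Finset.sum_congr rfl fun s _ => ?_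
        rw [Finset.mul_sum]
        exact Finset.sum_congr rfl fun t _ => by ring
      have hc1eq : ∀ s ∉ P, ∀ s' ∉ P, ∀ t : Fin (T + 1), H s t r = H s' t r := by
        intro s hs s' hs' t
        refine hH.2 s' t s t r ⟨fun hne => ?_, fun hne => absurd rfl hne⟩
        have h1' : r < (s' : ℕ) := by
          have := (hmemP s').not.1 hs'; omega
        have h2' : r < (s : ℕ) := by
          have := (hmemP s).not.1 hs; omega
        omega
      have hc2eq : ∀ (s : Fin (T + 1)), ∀ t ∉ P, ∀ t' ∉ P, H s t r = H s t' r := by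
        intro s t ht t' ht'
        refine hH.2 s t' s t r ⟨fun hne => absurd rfl hne, fun hne => ?_⟩
        have h1' : r < (t' : ℕ) := by
          have := (hmemP t').not.1 ht'; omega
        have h2' : r < (t : ℕ) := by
          have := (hmemP t).not.1 ht; omega
        omega
      rw [hform v1 v2, hform u1 u2]
      have step1 : ∑ s : Fin (T + 1), v1 s * ∑ t : Fin (T + 1), v2 t * H s t r ω i
          = ∑ s : Fin (T + 1), u1 s * ∑ t : Fin (T + 1), v2 t * H s t r ω i := by
        refine weight_swap P v1 u1 _ (fun s hs => (hagr s ((hmemP s).1 hs)).1)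
          (by rw [hv1.2, hu1.2]) ?_
        intro s hs s' hs'
        refine Finset.sum_congr rfl fun t _ => ?_
        rw [hc1eq s hs s' hs' t]
      have step2 : ∀ s : Fin (T + 1),
          ∑ t : Fin (T + 1), v2 t * H s t r ω i = ∑ t : Fin (T + 1), u2 t * H s t r ω i := by
        intro s
        refine weight_swap P v2 u2 _ (fun t ht => (hagr t ((hmemP t).1 ht)).2)
          (by rw [hv2.2, hu2.2]) ?_
        intro t ht t' ht'
        rw [hc2eq s t ht t' ht']
      rw [step1]
      exact Finset.sum_congr rfl fun s _ => by rw [step2 s]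
  · -- set1 ⊆ set2 : specialize to Dirac liquidation vectors
    rintro y ⟨H, c1', c2', ⟨hmeas, hna⟩, hc1', hc2', hsub'⟩
    set e : Fin (T + 1) → Fin (T + 1) → ℝ := fun k s => if s = k then 1 else 0 with he
    have heV : ∀ k, e k ∈ Vset T := by
      intro k
      constructor
      · intro t; simp only [he]; split <;> norm_num
      · simp [he]
    refine ⟨fun t1 t2 => H (e t1) (e t2), c1', c2',
      ⟨fun s t r => hmeas _ _ (heV s) (heV t) r, ?_⟩, hc1', hc2', ?_⟩
    · rintro s1 s2 t1 t2 r ⟨hcond1, hcond2⟩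
      refine hna (e t1) (e t2) (e s1) (e s2) (heV t1) (heV t2) (heV s1) (heV s2) r ?_
      intro t htr
      constructor
      · by_cases hq : s1 = t1
        · rw [hq]
        · have hlt := hcond1 hq
          have hne1 : t ≠ t1 := fun hcontr => by
            subst hcontr; omega
          have hne2 : t ≠ s1 := fun hcontr => by
            subst hcontr; omega
          simp [he, hne1, hne2]
      · by_cases hq : s2 = t2
        · rw [hq]
        · have hlt := hcond2 hq
          have hne1 : t ≠ t2 := fun hcontr => by
            subst hcontr; omega
          have hne2 : t ≠ s2 := fun hcontr => by
            subst hcontr; omega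
          simp [he, hne1, hne2]
    · intro t1 t2
      filter_upwards [hsub' (e t1) (e t2) (heV t1) (heV t2)] with ω hω
      have hv1 : vPay T h1 (e t1) ω = h1 (t1 : ℕ) ω := by
        simp [vPay, he, mul_ite]
      have hv2 : vPay T h2 (e t2) ω = h2 (t2 : ℕ) ω := by
        simp [vPay, he, mul_ite]
      rw [hv1, hv2] at hω
      exact hω


end Stmt2
end
end

section
/- The strict no-arbitrage conditions with divisible and with indivisible shorted American options are equivalent: SNA¹ holds if and only if SNA² holds. -/
open MeasureTheory Finset

noncomputable section

namespace Stmt3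

variable {Ω : Type*}

/-- `V`: liquidation vectors in `ℝ₊^{T+1}` summing to one. -/
def Vset (T : ℕ) : Set (Fin (T + 1) → ℝ) :=
  {v | (∀ t, 0 ≤ v t) ∧ ∑ t, v t = 1}

/-- membership of a tuple in `V^n` -/
def memVn (T n : ℕ) (v : Fin n → Fin (T + 1) → ℝ) : Prop := ∀ k, v k ∈ Vset T

/-- Gain from dynamic trading: `H·S = ∑_{t<T} H_t (S_{t+1} - S_t)`. -/
def stockGain (T d : ℕ) (H S : ℕ → Ω → Fin d → ℝ) (ω : Ω) : ℝ :=
  ∑ t ∈ Finset.range T, ∑ i, H t ω i * (S (t + 1) ω i - S t ω i)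

/-- Payoff of an American option `h` liquidated according to `v ∈ V`. -/
def vPay (T : ℕ) (h : ℕ → Ω → ℝ) (v : Fin (T + 1) → ℝ) (ω : Ω) : ℝ :=
  ∑ t : Fin (T + 1), h (t : ℕ) ω * v t

/-- The set `𝓛` of `𝔽`-liquidating strategies. -/
def Liq (T : ℕ) (ℱ : ℕ → MeasurableSpace Ω) : Set (ℕ → Ω → ℝ) :=
  {η | (∀ t, Measurable[ℱ t] (η t)) ∧ (∀ t ω, 0 ≤ η t ω) ∧
    ∀ ω, ∑ t ∈ Finset.range (T + 1), η t ω = 1}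

/-- Payoff of an American option `ψ` liquidated via the liquidating strategy `η`. -/
def liqPay (T : ℕ) (ψ : ℕ → Ω → ℝ) (η : ℕ → Ω → ℝ) (ω : Ω) : ℝ :=
  ∑ t ∈ Finset.range (T + 1), ψ t ω * η t ω

/-! ### Divisible shorted options: strategies indexed by `V^n` -/

/-- `𝓗̂ⁿ` -/
def HhatMem (T d n : ℕ) (ℱ : ℕ → MeasurableSpace Ω)
    (H : (Fin n → Fin (T + 1) → ℝ) → ℕ → Ω → Fin d → ℝ) : Prop :=
  (∀ v, memVn T n v → ∀ r, Measurable[ℱ r] (H v r)) ∧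
  ∀ v u, memVn T n v → memVn T n u →
    ∀ r : ℕ, (∀ (k : Fin n) (t : Fin (T + 1)), (t : ℕ) ≤ r → v k t = u k t) → H v r = H u r

/-- `𝓛̂ⁿ` -/
def LhatMem (T n : ℕ) (ℱ : ℕ → MeasurableSpace Ω)
    (μ : (Fin n → Fin (T + 1) → ℝ) → ℕ → Ω → ℝ) : Prop :=
  (∀ v, memVn T n v → μ v ∈ Liq T ℱ) ∧
  ∀ v u, memVn T n v → memVn T n u →
    ∀ r : ℕ, (∀ (k : Fin n) (t : Fin (T + 1)), (t : ℕ) ≤ r → v k t = u k t) → μ v r = μ u r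

/-- `𝓐̂ⁿ`: admissible semi-static strategies, divisible indexing. -/
def AhatMem (T d L M n : ℕ) (ℱ : ℕ → MeasurableSpace Ω)
    (H : (Fin n → Fin (T + 1) → ℝ) → ℕ → Ω → Fin d → ℝ)
    (a : Fin L → ℝ) (b : Fin M → ℝ)
    (μ : Fin M → (Fin n → Fin (T + 1) → ℝ) → ℕ → Ω → ℝ) {N : ℕ} (c : Fin N → ℝ) : Prop :=
  HhatMem T d n ℱ H ∧ (∀ i, 0 ≤ a i) ∧ (∀ j, 0 ≤ b j) ∧ (∀ k, 0 ≤ c k) ∧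
    ∀ j, LhatMem T n ℱ (μ j)

/-- Payoff `Φ̂ⁿ_{α,β,γ}` of a semi-static strategy, divisible indexing, with realization
`v ∈ V^n` for the shorted American options (only the first `N` coordinates are used for `h`). -/
def PhiHat (T d L M N n : ℕ) (hn : N ≤ n)
    (S : ℕ → Ω → Fin d → ℝ) (f : Fin L → Ω → ℝ) (g : Fin M → ℕ → Ω → ℝ)
    (h : Fin N → ℕ → Ω → ℝ) (α : Fin L → ℝ) (β : Fin M → ℝ) (γ : Fin N → ℝ)
    (H : (Fin n → Fin (T + 1) → ℝ) → ℕ → Ω → Fin d → ℝ)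
    (a : Fin L → ℝ) (b : Fin M → ℝ)
    (μ : Fin M → (Fin n → Fin (T + 1) → ℝ) → ℕ → Ω → ℝ) (c : Fin N → ℝ)
    (v : Fin n → Fin (T + 1) → ℝ) (ω : Ω) : ℝ :=
  stockGain T d (H v) S ω + (∑ i, a i * (f i ω - α i))
    + (∑ j, b j * (liqPay T (g j) (μ j v) ω - β j))
    - ∑ k, c k * (vPay T (h k) (v (Fin.castLE hn k)) ω - γ k)

/-! ### Indivisible shorted options: strategies indexed by `𝕋ⁿ` -/

/-- `𝓗̃ⁿ` -/
def HtildeMem (T d n : ℕ) (ℱ : ℕ → MeasurableSpace Ω)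
    (H : (Fin n → Fin (T + 1)) → ℕ → Ω → Fin d → ℝ) : Prop :=
  (∀ s r, Measurable[ℱ r] (H s r)) ∧
  ∀ s t : Fin n → Fin (T + 1), ∀ r : ℕ,
    (∀ k, s k ≠ t k → r < min (s k : ℕ) (t k : ℕ)) → H t r = H s r

/-- `𝓛̃ⁿ` -/
def LtildeMem (T n : ℕ) (ℱ : ℕ → MeasurableSpace Ω)
    (μ : (Fin n → Fin (T + 1)) → ℕ → Ω → ℝ) : Prop :=
  (∀ s, μ s ∈ Liq T ℱ) ∧
  ∀ s t : Fin n → Fin (T + 1), ∀ r : ℕ,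
    (∀ k, s k ≠ t k → r < min (s k : ℕ) (t k : ℕ)) → μ t r = μ s r

/-- `𝓐̃ⁿ` -/
def AtildeMem (T d L M n : ℕ) (ℱ : ℕ → MeasurableSpace Ω)
    (H : (Fin n → Fin (T + 1)) → ℕ → Ω → Fin d → ℝ)
    (a : Fin L → ℝ) (b : Fin M → ℝ)
    (μ : Fin M → (Fin n → Fin (T + 1)) → ℕ → Ω → ℝ) {N : ℕ} (c : Fin N → ℝ) : Prop :=
  HtildeMem T d n ℱ H ∧ (∀ i, 0 ≤ a i) ∧ (∀ j, 0 ≤ b j) ∧ (∀ k, 0 ≤ c k) ∧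
    ∀ j, LtildeMem T n ℱ (μ j)

/-- Payoff `Φ̃ⁿ_{α,β,γ}` with realization `t ∈ 𝕋ⁿ` for the shorted American options. -/
def PhiTilde (T d L M N n : ℕ) (hn : N ≤ n)
    (S : ℕ → Ω → Fin d → ℝ) (f : Fin L → Ω → ℝ) (g : Fin M → ℕ → Ω → ℝ)
    (h : Fin N → ℕ → Ω → ℝ) (α : Fin L → ℝ) (β : Fin M → ℝ) (γ : Fin N → ℝ)
    (H : (Fin n → Fin (T + 1)) → ℕ → Ω → Fin d → ℝ)
    (a : Fin L → ℝ) (b : Fin M → ℝ)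
    (μ : Fin M → (Fin n → Fin (T + 1)) → ℕ → Ω → ℝ) (c : Fin N → ℝ)
    (tt : Fin n → Fin (T + 1)) (ω : Ω) : ℝ :=
  stockGain T d (H tt) S ω + (∑ i, a i * (f i ω - α i))
    + (∑ j, b j * (liqPay T (g j) (μ j tt) ω - β j))
    - ∑ k, c k * (h k ((tt (Fin.castLE hn k)) : ℕ) ω - γ k)

/-! ### The four hedging prices -/

variable {m0 : MeasurableSpace Ω}

/-! ### No-arbitrage conditions -/

variable {m0 : MeasurableSpace Ω}

/-- `NA¹` w.r.t. prices `(α,β,γ)`: divisible shorted options. -/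
def NA1 (T d L M N : ℕ) (ℱ : ℕ → MeasurableSpace Ω) (ℙ : Measure Ω)
    (S : ℕ → Ω → Fin d → ℝ) (f : Fin L → Ω → ℝ) (g : Fin M → ℕ → Ω → ℝ)
    (h : Fin N → ℕ → Ω → ℝ) (α : Fin L → ℝ) (β : Fin M → ℝ) (γ : Fin N → ℝ) : Prop :=
  ∀ H a b μ c, AhatMem T d L M N ℱ H a b μ c →
    (∀ v, memVn T N v → ∀ᵐ ω ∂ℙ,
        0 ≤ PhiHat T d L M N N le_rfl S f g h α β γ H a b μ c v ω) →
    ∀ v, memVn T N v → ∀ᵐ ω ∂ℙ,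
        PhiHat T d L M N N le_rfl S f g h α β γ H a b μ c v ω = 0

/-- `SNA¹`: strict no-arbitrage, divisible shorted options. -/
def SNA1 (T d L M N : ℕ) (ℱ : ℕ → MeasurableSpace Ω) (ℙ : Measure Ω)
    (S : ℕ → Ω → Fin d → ℝ) (f : Fin L → Ω → ℝ) (g : Fin M → ℕ → Ω → ℝ)
    (h : Fin N → ℕ → Ω → ℝ) (α : Fin L → ℝ) (β : Fin M → ℝ) (γ : Fin N → ℝ) : Prop :=
  ∃ ε > (0 : ℝ), NA1 T d L M N ℱ ℙ S f g h
    (fun i => α i - ε) (fun j => β j - ε) (fun k => γ k + ε)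

/-- `NA²` w.r.t. prices `(α,β,γ)`: indivisible shorted options. -/
def NA2 (T d L M N : ℕ) (ℱ : ℕ → MeasurableSpace Ω) (ℙ : Measure Ω)
    (S : ℕ → Ω → Fin d → ℝ) (f : Fin L → Ω → ℝ) (g : Fin M → ℕ → Ω → ℝ)
    (h : Fin N → ℕ → Ω → ℝ) (α : Fin L → ℝ) (β : Fin M → ℝ) (γ : Fin N → ℝ) : Prop :=
  ∀ H a b μ c, AtildeMem T d L M N ℱ H a b μ c →
    (∀ tt : Fin N → Fin (T + 1), ∀ᵐ ω ∂ℙ,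
        0 ≤ PhiTilde T d L M N N le_rfl S f g h α β γ H a b μ c tt ω) →
    ∀ tt : Fin N → Fin (T + 1), ∀ᵐ ω ∂ℙ,
        PhiTilde T d L M N N le_rfl S f g h α β γ H a b μ c tt ω = 0

/-- `SNA²`: strict no-arbitrage, indivisible shorted options. -/
def SNA2 (T d L M N : ℕ) (ℱ : ℕ → MeasurableSpace Ω) (ℙ : Measure Ω)
    (S : ℕ → Ω → Fin d → ℝ) (f : Fin L → Ω → ℝ) (g : Fin M → ℕ → Ω → ℝ)
    (h : Fin N → ℕ → Ω → ℝ) (α : Fin L → ℝ) (β : Fin M → ℝ) (γ : Fin N → ℝ) : Prop :=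
  ∃ ε > (0 : ℝ), NA2 T d L M N ℱ ℙ S f g h
    (fun i => α i - ε) (fun j => β j - ε) (fun k => γ k + ε)


/-! ### Auxiliary machinery -/

section Aux

open Finset

/-- vertex (Dirac) liquidation vector -/
def dvec (T n : ℕ) (t : Fin n → Fin (T + 1)) : Fin n → Fin (T + 1) → ℝ :=
  fun k s => if s = t k then 1 else 0

lemma dvec_memVn (T n : ℕ) (t : Fin n → Fin (T + 1)) : memVn T n (dvec T n t) := by
  intro k
  refine ⟨fun s => ?_, ?_⟩
  · dsimp [dvec]; split <;> norm_num
  · simp [dvec]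

/-- product weight `λ_t(v) = ∏_k v_k(t_k)` -/
def lamW (T n : ℕ) (v : Fin n → Fin (T + 1) → ℝ) (t : Fin n → Fin (T + 1)) : ℝ :=
  ∏ k, v k (t k)

lemma lamW_nonneg {T n : ℕ} {v : Fin n → Fin (T + 1) → ℝ} (hv : memVn T n v)
    (t : Fin n → Fin (T + 1)) : 0 ≤ lamW T n v t :=
  Finset.prod_nonneg fun k _ => (hv k).1 _

lemma sum_lamW {T n : ℕ} {v : Fin n → Fin (T + 1) → ℝ} (hv : memVn T n v) :
    ∑ t : Fin n → Fin (T + 1), lamW T n v t = 1 := by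
  classical
  have h2 := Finset.prod_univ_sum (fun _ : Fin n => (Finset.univ : Finset (Fin (T + 1))))
      (fun k s => v k s)
  rw [Fintype.piFinset_univ] at h2
  have : ∑ t : Fin n → Fin (T + 1), lamW T n v t
      = ∏ k : Fin n, ∑ s : Fin (T + 1), v k s := by
    rw [h2]; rfl
  rw [this]
  exact Finset.prod_eq_one fun k _ => (hv k).2

lemma lamW_marginal {T n : ℕ} {v : Fin n → Fin (T + 1) → ℝ} (hv : memVn T n v)
    (k₀ : Fin n) (F : Fin (T + 1) → ℝ) :
    ∑ t : Fin n → Fin (T + 1), lamW T n v t * F (t k₀) = ∑ s, v k₀ s * F s := by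
  classical
  have h1 : ∀ t : Fin n → Fin (T + 1),
      lamW T n v t * F (t k₀) = ∏ k, (v k (t k) * if k = k₀ then F (t k) else 1) := by
    intro t
    rw [Finset.prod_mul_distrib, Finset.prod_ite_eq' Finset.univ k₀ (fun k => F (t k))]
    simp [lamW]
  have h2 := Finset.prod_univ_sum (fun _ : Fin n => (Finset.univ : Finset (Fin (T + 1))))
      (fun k s => v k s * if k = k₀ then F s else 1)
  rw [Fintype.piFinset_univ] at h2
  rw [Finset.sum_congr rfl fun t _ => h1 t, ← h2]
  rw [Finset.prod_eq_single k₀ (fun k _ hk => by simp only [if_neg hk, mul_one]; exact (hv k).2)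
    (by simp)]
  simp

lemma lamW_dvec (T n : ℕ) (t s : Fin n → Fin (T + 1)) :
    lamW T n (dvec T n t) s = if s = t then 1 else 0 := by
  classical
  unfold lamW dvec
  rw [Fintype.prod_boole]
  simp only [← funext_iff]

lemma sum_lamW_dvec (T n : ℕ) (t : Fin n → Fin (T + 1))
    (F : (Fin n → Fin (T + 1)) → ℝ) :
    ∑ s : Fin n → Fin (T + 1), lamW T n (dvec T n t) s * F s = F t := by
  classical
  rw [Finset.sum_congr rfl fun s _ => by
    rw [lamW_dvec, ite_mul, one_mul, zero_mul]]
  rw [Finset.sum_ite_eq']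
  simp

/-- splitting a sum with weights that agree up to `r` and have equal total, against a
function constant above `r` -/
lemma sum_weight_const (T r : ℕ) (w w' C : Fin (T + 1) → ℝ)
    (hag : ∀ s : Fin (T + 1), (s : ℕ) ≤ r → w s = w' s)
    (hs : ∑ s, w s = ∑ s, w' s)
    (hC : ∀ x y : Fin (T + 1), r < (x : ℕ) → r < (y : ℕ) → C x = C y) :
    ∑ x, w x * C x = ∑ x, w' x * C x := by
  classical
  set p : Fin (T + 1) → Prop := fun x => (x : ℕ) ≤ r with hp
  rw [← Finset.sum_filter_add_sum_filter_not Finset.univ p (fun x => w x * C x),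
      ← Finset.sum_filter_add_sum_filter_not Finset.univ p (fun x => w' x * C x)]
  have e1 : ∑ x ∈ Finset.univ.filter p, w x * C x = ∑ x ∈ Finset.univ.filter p, w' x * C x :=
    Finset.sum_congr rfl fun x hx => by
      rw [hag x (Finset.mem_filter.1 hx).2]
  rw [e1]
  congr 1
  by_cases hne : (Finset.univ.filter fun x : Fin (T + 1) => ¬ p x).Nonempty
  · obtain ⟨x₀, hx₀⟩ := hne
    have hx₀' : r < (x₀ : ℕ) := Nat.not_le.1 (Finset.mem_filter.1 hx₀).2
    have e2 : ∀ u : Fin (T + 1) → ℝ,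
        ∑ x ∈ Finset.univ.filter (fun x => ¬ p x), u x * C x
          = (∑ x ∈ Finset.univ.filter (fun x => ¬ p x), u x) * C x₀ := by
      intro u
      rw [Finset.sum_mul]
      exact Finset.sum_congr rfl fun x hx => by
        rw [hC x x₀ (Nat.not_le.1 (Finset.mem_filter.1 hx).2) hx₀']
    rw [e2 w, e2 w']
    congr 1
    have hw : ∑ x ∈ Finset.univ.filter p, w x = ∑ x ∈ Finset.univ.filter p, w' x :=
      Finset.sum_congr rfl fun x hx => hag x (Finset.mem_filter.1 hx).2
    have h2 := Finset.sum_filter_add_sum_filter_not Finset.univ p w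
    have h3 := Finset.sum_filter_add_sum_filter_not Finset.univ p w'
    linarith
  · rw [Finset.not_nonempty_iff_eq_empty] at hne
    rw [hne]
    simp

/-- swapping the weight at a single coordinate -/
lemma single_swap {n T : ℕ} (r : ℕ) (G : (Fin n → Fin (T + 1)) → ℝ)
    (hG : ∀ s t : Fin n → Fin (T + 1),
      (∀ k, s k ≠ t k → r < min (s k : ℕ) (t k : ℕ)) → G t = G s)
    (w w' : Fin n → Fin (T + 1) → ℝ) (k₀ : Fin n)
    (hk : ∀ k, k ≠ k₀ → w k = w' k)
    (hag : ∀ s : Fin (T + 1), (s : ℕ) ≤ r → w k₀ s = w' k₀ s)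
    (hsum : ∑ s, w k₀ s = ∑ s, w' k₀ s) :
    ∑ t : Fin n → Fin (T + 1), (∏ k, w k (t k)) * G t
      = ∑ t : Fin n → Fin (T + 1), (∏ k, w' k (t k)) * G t := by
  classical
  set e := Equiv.funSplitAt k₀ (Fin (T + 1)) with he
  have hsymm1 : ∀ (x : Fin (T + 1)) (q : { j // j ≠ k₀ } → Fin (T + 1)),
      e.symm (x, q) k₀ = x := by
    intro x q
    simp [he, Equiv.funSplitAt, Equiv.piSplitAt]
  have hsymm2 : ∀ (x : Fin (T + 1)) (q : { j // j ≠ k₀ } → Fin (T + 1)) (j : Fin n)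
      (hj : j ≠ k₀), e.symm (x, q) j = q ⟨j, hj⟩ := by
    intro x q j hj
    simp [he, Equiv.funSplitAt, Equiv.piSplitAt, hj]
  have trans : ∀ (u : Fin n → Fin (T + 1) → ℝ),
      ∑ t : Fin n → Fin (T + 1), (∏ k, u k (t k)) * G t
        = ∑ q : { j // j ≠ k₀ } → Fin (T + 1), ∑ x : Fin (T + 1),
            u k₀ x * ((∏ j : { j // j ≠ k₀ }, u j (q j)) * G (e.symm (x, q))) := by
    intro u
    rw [← Equiv.sum_comp e.symm (fun t => (∏ k, u k (t k)) * G t), Fintype.sum_prod_type,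
      Finset.sum_comm]
    refine Finset.sum_congr rfl fun q _ => Finset.sum_congr rfl fun x _ => ?_
    have h3 : ∏ k, u k (e.symm (x, q) k)
        = u k₀ x * ∏ j : { j // j ≠ k₀ }, u j (q j) := by
      rw [← Finset.mul_prod_erase Finset.univ _ (Finset.mem_univ k₀), hsymm1]
      congr 1
      rw [Finset.prod_subtype (Finset.univ.erase k₀)
        (p := fun j => j ≠ k₀) (fun x => by simp [Finset.mem_erase])
        (fun j => u j (e.symm (x, q) j))]
      exact Finset.prod_congr rfl fun j _ => by rw [hsymm2 x q j j.2]
    rw [h3]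
    ring
  rw [trans w, trans w']
  refine Finset.sum_congr rfl fun q _ => ?_
  have hprodeq : (∏ j : { j // j ≠ k₀ }, w j (q j)) = ∏ j : { j // j ≠ k₀ }, w' j (q j) :=
    Finset.prod_congr rfl fun j _ => by rw [hk j j.2]
  simp only [hprodeq]
  refine sum_weight_const T r (w k₀) (w' k₀)
    (fun x => (∏ j : { j // j ≠ k₀ }, w' j (q j)) * G (e.symm (x, q))) hag hsum ?_
  intro x y hx hy
  refine congrArg (fun z => (∏ j : { j // j ≠ k₀ }, w' j (q j)) * z)
    (hG (e.symm (y, q)) (e.symm (x, q)) ?_)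
  intro k hkne
  by_cases hkk : k = k₀
  · subst hkk
    rw [hsymm1, hsymm1]
    exact lt_min hy hx
  · exact absurd (by rw [hsymm2 x q k hkk, hsymm2 y q k hkk]) hkne.symm

/-- full weight swap: replacing weights `v` by `u` that agree up to time `r`, against an
`r`-non-anticipative function -/
lemma weight_swap {n T : ℕ} (r : ℕ) (G : (Fin n → Fin (T + 1)) → ℝ)
    (hG : ∀ s t : Fin n → Fin (T + 1),
      (∀ k, s k ≠ t k → r < min (s k : ℕ) (t k : ℕ)) → G t = G s)
    (v u : Fin n → Fin (T + 1) → ℝ)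
    (hag : ∀ (k : Fin n) (s : Fin (T + 1)), (s : ℕ) ≤ r → v k s = u k s)
    (hsum : ∀ k, ∑ s, v k s = ∑ s, u k s) :
    ∑ t : Fin n → Fin (T + 1), (∏ k, v k (t k)) * G t
      = ∑ t : Fin n → Fin (T + 1), (∏ k, u k (t k)) * G t := by
  classical
  have main : ∀ A : Finset (Fin n),
      ∑ t : Fin n → Fin (T + 1), (∏ k, (if k ∈ A then u k else v k) (t k)) * G t
        = ∑ t : Fin n → Fin (T + 1), (∏ k, v k (t k)) * G t := by
    intro A
    induction A using Finset.induction_on with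
    | empty => simp
    | @insert k₀ A hk₀ ih =>
      rw [← ih]
      refine single_swap r G hG _ _ k₀ ?_ ?_ ?_
      · intro k hk
        simp only [Finset.mem_insert]
        by_cases hkA : k ∈ A <;> simp [hkA, hk]
      · intro s hs
        simp only [Finset.mem_insert_self, if_true, if_neg hk₀]
        exact (hag k₀ s hs).symm
      · simp only [Finset.mem_insert_self, if_true, if_neg hk₀]
        exact (hsum k₀).symm
  have hu := main Finset.univ
  simpa using hu.symm

/-! ### Mixture extension of indivisible strategies -/

def HextD (T d n : ℕ) (H : (Fin n → Fin (T + 1)) → ℕ → Ω → Fin d → ℝ) :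
    (Fin n → Fin (T + 1) → ℝ) → ℕ → Ω → Fin d → ℝ :=
  fun v r ω i => ∑ t : Fin n → Fin (T + 1), lamW T n v t * H t r ω i

def muextD (T n : ℕ) (μ : (Fin n → Fin (T + 1)) → ℕ → Ω → ℝ) :
    (Fin n → Fin (T + 1) → ℝ) → ℕ → Ω → ℝ :=
  fun v r ω => ∑ t : Fin n → Fin (T + 1), lamW T n v t * μ t r ω

lemma HextD_mem {T d n : ℕ} {ℱ : ℕ → MeasurableSpace Ω}
    {H : (Fin n → Fin (T + 1)) → ℕ → Ω → Fin d → ℝ} (hH : HtildeMem T d n ℱ H) :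
    HhatMem T d n ℱ (HextD T d n H) := by
  constructor
  · intro v _ r
    letI : MeasurableSpace Ω := ℱ r
    exact measurable_pi_lambda _ fun i => Finset.measurable_sum _ fun t _ =>
      ((measurable_pi_apply i).comp (hH.1 t r)).const_mul _
  · intro v u hv hu r hagr
    funext ω i
    refine weight_swap r (fun t => H t r ω i) ?_ v u (fun k s hs => hagr k s hs)
      (fun k => by rw [(hv k).2, (hu k).2])
    intro s t hst
    have := hH.2 s t r hst
    exact congrFun (congrFun this ω) i

lemma muextD_mem {T n : ℕ} {ℱ : ℕ → MeasurableSpace Ω}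
    {μ : (Fin n → Fin (T + 1)) → ℕ → Ω → ℝ} (hμ : LtildeMem T n ℱ μ) :
    LhatMem T n ℱ (muextD T n μ) := by
  constructor
  · intro v hv
    refine ⟨fun r => ?_, fun r ω => ?_, fun ω => ?_⟩
    · letI : MeasurableSpace Ω := ℱ r
      exact Finset.measurable_sum _ fun t _ => ((hμ.1 t).1 r).const_mul _
    · exact Finset.sum_nonneg fun t _ =>
        mul_nonneg (lamW_nonneg hv t) ((hμ.1 t).2.1 r ω)
    · unfold muextD
      rw [Finset.sum_comm]
      rw [Finset.sum_congr rfl fun t (_ : t ∈ Finset.univ) => (Finset.mul_sum _ _ _).symm]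
      rw [Finset.sum_congr rfl fun t (_ : t ∈ (Finset.univ : Finset (Fin n → Fin (T + 1)))) =>
        by rw [(hμ.1 t).2.2 ω, mul_one]]
      exact sum_lamW hv
  · intro v u hv hu r hagr
    funext ω
    refine weight_swap r (fun t => μ t r ω) ?_ v u (fun k s hs => hagr k s hs)
      (fun k => by rw [(hv k).2, (hu k).2])
    intro s t hst
    exact congrFun (hμ.2 s t r hst) ω

lemma stockGain_ext {T d n : ℕ} (H : (Fin n → Fin (T + 1)) → ℕ → Ω → Fin d → ℝ)
    (S : ℕ → Ω → Fin d → ℝ) (v : Fin n → Fin (T + 1) → ℝ) (ω : Ω) :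
    stockGain T d (HextD T d n H v) S ω
      = ∑ t : Fin n → Fin (T + 1), lamW T n v t * stockGain T d (H t) S ω := by
  unfold stockGain HextD
  calc ∑ r ∈ Finset.range T, ∑ i,
        (∑ t : Fin n → Fin (T + 1), lamW T n v t * H t r ω i) * (S (r + 1) ω i - S r ω i)
      = ∑ r ∈ Finset.range T, ∑ t : Fin n → Fin (T + 1),
          lamW T n v t * ∑ i, H t r ω i * (S (r + 1) ω i - S r ω i) := by
        refine Finset.sum_congr rfl fun r _ => ?_
        calc ∑ i, (∑ t : Fin n → Fin (T + 1), lamW T n v t * H t r ω i)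
              * (S (r + 1) ω i - S r ω i)
            = ∑ i, ∑ t : Fin n → Fin (T + 1),
                lamW T n v t * (H t r ω i * (S (r + 1) ω i - S r ω i)) :=
              Finset.sum_congr rfl fun i _ => by
                rw [Finset.sum_mul]
                exact Finset.sum_congr rfl fun t _ => by ring
          _ = ∑ t : Fin n → Fin (T + 1), ∑ i,
                lamW T n v t * (H t r ω i * (S (r + 1) ω i - S r ω i)) := Finset.sum_comm
          _ = ∑ t : Fin n → Fin (T + 1),
                lamW T n v t * ∑ i, H t r ω i * (S (r + 1) ω i - S r ω i) :=
              Finset.sum_congr rfl fun t _ => (Finset.mul_sum _ _ _).symm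
    _ = ∑ t : Fin n → Fin (T + 1), lamW T n v t
          * ∑ r ∈ Finset.range T, ∑ i, H t r ω i * (S (r + 1) ω i - S r ω i) := by
        rw [Finset.sum_comm]
        exact Finset.sum_congr rfl fun t _ => (Finset.mul_sum _ _ _).symm

lemma liqPay_ext {T n : ℕ} (ψ : ℕ → Ω → ℝ)
    (μ : (Fin n → Fin (T + 1)) → ℕ → Ω → ℝ) (v : Fin n → Fin (T + 1) → ℝ) (ω : Ω) :
    liqPay T ψ (muextD T n μ v) ω
      = ∑ t : Fin n → Fin (T + 1), lamW T n v t * liqPay T ψ (μ t) ω := by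
  unfold liqPay muextD
  calc ∑ r ∈ Finset.range (T + 1), ψ r ω * ∑ t : Fin n → Fin (T + 1), lamW T n v t * μ t r ω
      = ∑ r ∈ Finset.range (T + 1), ∑ t : Fin n → Fin (T + 1),
          lamW T n v t * (ψ r ω * μ t r ω) := by
        refine Finset.sum_congr rfl fun r _ => ?_
        rw [Finset.mul_sum]
        exact Finset.sum_congr rfl fun t _ => by ring
    _ = ∑ t : Fin n → Fin (T + 1), ∑ r ∈ Finset.range (T + 1),
          lamW T n v t * (ψ r ω * μ t r ω) := Finset.sum_comm
    _ = ∑ t : Fin n → Fin (T + 1), lamW T n v t * ∑ r ∈ Finset.range (T + 1), ψ r ω * μ t r ω :=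
        Finset.sum_congr rfl fun t _ => (Finset.mul_sum _ _ _).symm

lemma sum_lam_affine {T n : ℕ} {v : Fin n → Fin (T + 1) → ℝ} (hv : memVn T n v)
    (bj βj : ℝ) (X : (Fin n → Fin (T + 1)) → ℝ) :
    ∑ t : Fin n → Fin (T + 1), lamW T n v t * (bj * (X t - βj))
      = bj * ((∑ t : Fin n → Fin (T + 1), lamW T n v t * X t) - βj) := by
  have h1 : ∀ t, lamW T n v t * (bj * (X t - βj))
      = bj * (lamW T n v t * X t) - (bj * βj) * lamW T n v t := fun t => by ring
  rw [Finset.sum_congr rfl fun t _ => h1 t, Finset.sum_sub_distrib, ← Finset.mul_sum,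
    ← Finset.mul_sum, sum_lamW hv]
  ring

lemma phiHat_ext {T d L M N : ℕ} (S : ℕ → Ω → Fin d → ℝ) (f : Fin L → Ω → ℝ)
    (g : Fin M → ℕ → Ω → ℝ) (h : Fin N → ℕ → Ω → ℝ)
    (α : Fin L → ℝ) (β : Fin M → ℝ) (γ : Fin N → ℝ)
    (H : (Fin N → Fin (T + 1)) → ℕ → Ω → Fin d → ℝ) (a : Fin L → ℝ) (b : Fin M → ℝ)
    (μ : Fin M → (Fin N → Fin (T + 1)) → ℕ → Ω → ℝ) (c : Fin N → ℝ)
    {v : Fin N → Fin (T + 1) → ℝ} (hv : memVn T N v) (ω : Ω) :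
    PhiHat T d L M N N le_rfl S f g h α β γ (HextD T d N H) a b
        (fun j => muextD T N (μ j)) c v ω
      = ∑ t : Fin N → Fin (T + 1), lamW T N v t
          * PhiTilde T d L M N N le_rfl S f g h α β γ H a b μ c t ω := by
  classical
  unfold PhiHat PhiTilde
  have hcast : ∀ k : Fin N, Fin.castLE (le_refl N) k = k := fun k => rfl
  rw [stockGain_ext]
  have hRHS : ∑ t : Fin N → Fin (T + 1), lamW T N v t
        * ((stockGain T d (H t) S ω + ∑ i, a i * (f i ω - α i))
          + ∑ j, b j * (liqPay T (g j) (μ j t) ω - β j)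
          - ∑ k, c k * (h k ((t (Fin.castLE le_rfl k)) : ℕ) ω - γ k))
      = (∑ t : Fin N → Fin (T + 1), lamW T N v t * stockGain T d (H t) S ω)
        + (∑ i, a i * (f i ω - α i))
        + (∑ j, b j * ((∑ t : Fin N → Fin (T + 1),
            lamW T N v t * liqPay T (g j) (μ j t) ω) - β j))
        - ∑ k, c k * ((∑ s, v k s * h k (s : ℕ) ω) - γ k) := by
    have hsplit : ∀ t : Fin N → Fin (T + 1), lamW T N v t
          * ((stockGain T d (H t) S ω + ∑ i, a i * (f i ω - α i))
            + ∑ j, b j * (liqPay T (g j) (μ j t) ω - β j)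
            - ∑ k, c k * (h k ((t (Fin.castLE le_rfl k)) : ℕ) ω - γ k))
        = lamW T N v t * stockGain T d (H t) S ω
          + lamW T N v t * (∑ i, a i * (f i ω - α i))
          + lamW T N v t * ∑ j, b j * (liqPay T (g j) (μ j t) ω - β j)
          - lamW T N v t * ∑ k, c k * (h k ((t (Fin.castLE le_rfl k)) : ℕ) ω - γ k) :=
      fun t => by ring
    rw [Finset.sum_congr rfl fun t _ => hsplit t]
    rw [Finset.sum_sub_distrib, Finset.sum_add_distrib, Finset.sum_add_distrib]
    congr 1
    · congr 1
      · congr 1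
        rw [← Finset.sum_mul, sum_lamW hv, one_mul]
      · -- the b term
        rw [Finset.sum_congr rfl fun t (_ : t ∈ (Finset.univ : Finset (Fin N → Fin (T + 1)))) =>
          Finset.mul_sum _ _ _]
        rw [Finset.sum_comm]
        exact Finset.sum_congr rfl fun j _ =>
          sum_lam_affine hv (b j) (β j) (fun t => liqPay T (g j) (μ j t) ω)
    · -- the c term
      rw [Finset.sum_congr rfl fun t (_ : t ∈ (Finset.univ : Finset (Fin N → Fin (T + 1)))) =>
        Finset.mul_sum _ _ _]
      rw [Finset.sum_comm]
      refine Finset.sum_congr rfl fun k _ => ?_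
      rw [sum_lam_affine hv (c k) (γ k) (fun t => h k ((t (Fin.castLE le_rfl k)) : ℕ) ω)]
      rw [hcast k, lamW_marginal hv k (fun s => h k (s : ℕ) ω)]
  simp only [liqPay_ext]
  rw [hRHS]
  congr 1
  refine Finset.sum_congr rfl fun k _ => ?_
  have hvp : vPay T (h k) (v (Fin.castLE le_rfl k)) ω = ∑ s, v k s * h k (s : ℕ) ω := by
    unfold vPay
    exact Finset.sum_congr rfl fun s _ => mul_comm _ _
  rw [hvp]

lemma vPay_dvec (T n : ℕ) (ψ : ℕ → Ω → ℝ) (t : Fin n → Fin (T + 1)) (k : Fin n)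
    (ω : Ω) : vPay T ψ (dvec T n t k) ω = ψ ((t k : ℕ)) ω := by
  classical
  unfold vPay dvec
  rw [Finset.sum_congr rfl fun s (_ : s ∈ (Finset.univ : Finset (Fin (T + 1)))) => by
    rw [mul_ite, mul_one, mul_zero]]
  rw [Finset.sum_ite_eq']
  simp

lemma dvec_agree {T n : ℕ} (s t : Fin n → Fin (T + 1)) (r : ℕ)
    (hst : ∀ k, s k ≠ t k → r < min (s k : ℕ) (t k : ℕ)) :
    ∀ (k : Fin n) (t' : Fin (T + 1)), (t' : ℕ) ≤ r → dvec T n t k t' = dvec T n s k t' := by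
  intro k t' ht'
  by_cases hks : s k = t k
  · simp [dvec, hks]
  · have hmin := hst k hks
    have h1 : t' ≠ t k := by
      intro hEq
      have : r < (t k : ℕ) := lt_of_lt_of_le hmin (min_le_right _ _)
      rw [hEq] at ht'; omega
    have h2 : t' ≠ s k := by
      intro hEq
      have : r < (s k : ℕ) := lt_of_lt_of_le hmin (min_le_left _ _)
      rw [hEq] at ht'; omega
    simp [dvec, h1, h2]

lemma phiTilde_shift {T d L M N : ℕ} (S : ℕ → Ω → Fin d → ℝ) (f : Fin L → Ω → ℝ)
    (g : Fin M → ℕ → Ω → ℝ) (h : Fin N → ℕ → Ω → ℝ)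
    (α : Fin L → ℝ) (β : Fin M → ℝ) (γ : Fin N → ℝ)
    (H : (Fin N → Fin (T + 1)) → ℕ → Ω → Fin d → ℝ) (a : Fin L → ℝ) (b : Fin M → ℝ)
    (μ : Fin M → (Fin N → Fin (T + 1)) → ℕ → Ω → ℝ) (c : Fin N → ℝ)
    (ε ε' : ℝ) (tt : Fin N → Fin (T + 1)) (ω : Ω) :
    PhiTilde T d L M N N le_rfl S f g h (fun i => α i - ε) (fun j => β j - ε)
        (fun k => γ k + ε) H a b μ c tt ω
      = PhiTilde T d L M N N le_rfl S f g h (fun i => α i - ε') (fun j => β j - ε')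
          (fun k => γ k + ε') H a b μ c tt ω
        + (ε - ε') * (∑ i, a i + ∑ j, b j + ∑ k, c k) := by
  unfold PhiTilde
  have e1 : ∑ i, a i * (f i ω - (α i - ε))
      = ∑ i, (a i * (f i ω - (α i - ε')) + (ε - ε') * a i) :=
    Finset.sum_congr rfl fun i _ => by ring
  have e2 : ∑ j, b j * (liqPay T (g j) (μ j tt) ω - (β j - ε))
      = ∑ j, (b j * (liqPay T (g j) (μ j tt) ω - (β j - ε')) + (ε - ε') * b j) :=
    Finset.sum_congr rfl fun j _ => by ring
  have e3 : ∑ k, c k * (h k ((tt (Fin.castLE le_rfl k)) : ℕ) ω - (γ k + ε))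
      = ∑ k, (c k * (h k ((tt (Fin.castLE le_rfl k)) : ℕ) ω - (γ k + ε')) - (ε - ε') * c k) :=
    Finset.sum_congr rfl fun k _ => by ring
  rw [e1, e2, e3, Finset.sum_add_distrib, Finset.sum_add_distrib, Finset.sum_sub_distrib,
    ← Finset.mul_sum, ← Finset.mul_sum, ← Finset.mul_sum]
  ring

lemma phiTilde_zero_coeff {T d L M N : ℕ} (S : ℕ → Ω → Fin d → ℝ)
    (f : Fin L → Ω → ℝ) (g : Fin M → ℕ → Ω → ℝ) (h : Fin N → ℕ → Ω → ℝ)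
    (α : Fin L → ℝ) (β : Fin M → ℝ) (γ : Fin N → ℝ)
    (H : (Fin N → Fin (T + 1)) → ℕ → Ω → Fin d → ℝ) (a : Fin L → ℝ) (b : Fin M → ℝ)
    (μ : Fin M → (Fin N → Fin (T + 1)) → ℕ → Ω → ℝ) (c : Fin N → ℝ)
    (ha : ∀ i, a i = 0) (hb : ∀ j, b j = 0) (hc : ∀ k, c k = 0)
    (tt : Fin N → Fin (T + 1)) (ω : Ω) :
    PhiTilde T d L M N N le_rfl S f g h α β γ H a b μ c tt ω
      = stockGain T d (H tt) S ω := by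
  simp [PhiTilde, ha, hb, hc]

lemma phiHat_zero_coeff {T d L M N : ℕ} (S : ℕ → Ω → Fin d → ℝ)
    (f : Fin L → Ω → ℝ) (g : Fin M → ℕ → Ω → ℝ) (h : Fin N → ℕ → Ω → ℝ)
    (α : Fin L → ℝ) (β : Fin M → ℝ) (γ : Fin N → ℝ)
    (H : (Fin N → Fin (T + 1) → ℝ) → ℕ → Ω → Fin d → ℝ) (a : Fin L → ℝ) (b : Fin M → ℝ)
    (μ : Fin M → (Fin N → Fin (T + 1) → ℝ) → ℕ → Ω → ℝ) (c : Fin N → ℝ)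
    (ha : ∀ i, a i = 0) (hb : ∀ j, b j = 0) (hc : ∀ k, c k = 0)
    (v : Fin N → Fin (T + 1) → ℝ) (ω : Ω) :
    PhiHat T d L M N N le_rfl S f g h α β γ H a b μ c v ω
      = stockGain T d (H v) S ω := by
  simp [PhiHat, ha, hb, hc]

end Aux

section MainLemmas

variable {m0 : MeasurableSpace Ω}

/-- `NA¹` implies `NA²` at the same prices. -/
lemma NA1_to_NA2 {T d L M N : ℕ} {ℱ : ℕ → MeasurableSpace Ω} {ℙ : Measure Ω}
    {S : ℕ → Ω → Fin d → ℝ} {f : Fin L → Ω → ℝ} {g : Fin M → ℕ → Ω → ℝ}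
    {h : Fin N → ℕ → Ω → ℝ} {α : Fin L → ℝ} {β : Fin M → ℝ} {γ : Fin N → ℝ}
    (hna : NA1 T d L M N ℱ ℙ S f g h α β γ) :
    NA2 T d L M N ℱ ℙ S f g h α β γ := by
  intro H a b μ c hmem hpos tt
  obtain ⟨hH, ha, hb, hc, hμ⟩ := hmem
  have hmem' : AhatMem T d L M N ℱ (HextD T d N H) a b (fun j => muextD T N (μ j)) c :=
    ⟨HextD_mem hH, ha, hb, hc, fun j => muextD_mem (hμ j)⟩
  have hpos' : ∀ v, memVn T N v → ∀ᵐ ω ∂ℙ,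
      0 ≤ PhiHat T d L M N N le_rfl S f g h α β γ (HextD T d N H) a b
        (fun j => muextD T N (μ j)) c v ω := by
    intro v hv
    have hall : ∀ᵐ ω ∂ℙ, ∀ t : Fin N → Fin (T + 1),
        0 ≤ PhiTilde T d L M N N le_rfl S f g h α β γ H a b μ c t ω :=
      (MeasureTheory.ae_all_iff).2 hpos
    filter_upwards [hall] with ω hω
    rw [phiHat_ext S f g h α β γ H a b μ c hv ω]
    exact Finset.sum_nonneg fun t _ => mul_nonneg (lamW_nonneg hv t) (hω t)
  have hconc := hna _ a b _ c hmem' hpos' (dvec T N tt) (dvec_memVn T N tt)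
  filter_upwards [hconc] with ω hω
  rw [phiHat_ext S f g h α β γ H a b μ c (dvec_memVn T N tt) ω, sum_lamW_dvec] at hω
  exact hω

/-- `NA²` at better prices implies `NA¹` at worse prices. -/
lemma NA2_to_NA1 {T d L M N : ℕ} {ℱ : ℕ → MeasurableSpace Ω} {ℙ : Measure Ω}
    [IsProbabilityMeasure ℙ]
    {S : ℕ → Ω → Fin d → ℝ} {f : Fin L → Ω → ℝ} {g : Fin M → ℕ → Ω → ℝ}
    {h : Fin N → ℕ → Ω → ℝ} {α : Fin L → ℝ} {β : Fin M → ℝ} {γ : Fin N → ℝ}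
    {ε ε' : ℝ} (hε' : 0 < ε') (hlt : ε' < ε)
    (hna : NA2 T d L M N ℱ ℙ S f g h
      (fun i => α i - ε) (fun j => β j - ε) (fun k => γ k + ε)) :
    NA1 T d L M N ℱ ℙ S f g h
      (fun i => α i - ε') (fun j => β j - ε') (fun k => γ k + ε') := by
  intro H a b μ c hmem hpos
  obtain ⟨hH, ha, hb, hc, hμ⟩ := hmem
  haveI : (MeasureTheory.ae ℙ).NeBot := MeasureTheory.ae_neBot.2 (IsProbabilityMeasure.ne_zero ℙ)
  have hK0 : 0 ≤ ∑ i, a i + ∑ j, b j + ∑ k, c k := by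
    have h1 : 0 ≤ ∑ i, a i := Finset.sum_nonneg fun i _ => ha i
    have h2 : 0 ≤ ∑ j, b j := Finset.sum_nonneg fun j _ => hb j
    have h3 : 0 ≤ ∑ k, c k := Finset.sum_nonneg fun k _ => hc k
    linarith
  -- the restricted (vertex) strategy
  have hmemr : AtildeMem T d L M N ℱ (fun t => H (dvec T N t)) a b
      (fun j t => μ j (dvec T N t)) c := by
    refine ⟨⟨fun t r => hH.1 (dvec T N t) (dvec_memVn T N t) r, ?_⟩, ha, hb, hc, fun j =>
      ⟨fun t => (hμ j).1 (dvec T N t) (dvec_memVn T N t), ?_⟩⟩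
    · intro s t r hst
      exact hH.2 (dvec T N t) (dvec T N s) (dvec_memVn T N t) (dvec_memVn T N s) r
        (dvec_agree s t r hst)
    · intro s t r hst
      exact (hμ j).2 (dvec T N t) (dvec T N s) (dvec_memVn T N t) (dvec_memVn T N s) r
        (dvec_agree s t r hst)
  have hPhi_eq : ∀ (δ : ℝ) (tt : Fin N → Fin (T + 1)) (ω : Ω),
      PhiTilde T d L M N N le_rfl S f g h (fun i => α i - δ) (fun j => β j - δ)
          (fun k => γ k + δ) (fun t => H (dvec T N t)) a b (fun j t => μ j (dvec T N t)) c tt ω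
        = PhiHat T d L M N N le_rfl S f g h (fun i => α i - δ) (fun j => β j - δ)
          (fun k => γ k + δ) H a b μ c (dvec T N tt) ω := by
    intro δ tt ω
    unfold PhiTilde PhiHat
    congr 1
    refine Finset.sum_congr rfl fun k _ => ?_
    rw [vPay_dvec]
  have hposr : ∀ tt : Fin N → Fin (T + 1), ∀ᵐ ω ∂ℙ,
      0 ≤ PhiTilde T d L M N N le_rfl S f g h (fun i => α i - ε) (fun j => β j - ε)
        (fun k => γ k + ε) (fun t => H (dvec T N t)) a b (fun j t => μ j (dvec T N t)) c tt ω := by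
    intro tt
    filter_upwards [hpos (dvec T N tt) (dvec_memVn T N tt)] with ω hω
    rw [phiTilde_shift S f g h α β γ _ a b _ c ε ε' tt ω, hPhi_eq ε' tt ω]
    have : 0 ≤ (ε - ε') * (∑ i, a i + ∑ j, b j + ∑ k, c k) :=
      mul_nonneg (by linarith) hK0
    linarith
  have hzero := hna _ a b _ c hmemr hposr
  -- derive that all coefficients vanish
  have habc : (∀ i, a i = 0) ∧ (∀ j, b j = 0) ∧ (∀ k, c k = 0) := by
    have h1 := hzero (fun _ => (0 : Fin (T + 1)))
    have h2 := hpos (dvec T N fun _ => (0 : Fin (T + 1)))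
      (dvec_memVn T N fun _ => (0 : Fin (T + 1)))
    obtain ⟨ω, hω1, hω2⟩ := (h1.and h2).exists
    rw [phiTilde_shift S f g h α β γ _ a b _ c ε ε' (fun _ => 0) ω,
      hPhi_eq ε' (fun _ => 0) ω] at hω1
    have hKz : ∑ i, a i + ∑ j, b j + ∑ k, c k = 0 := by
      have hm : 0 ≤ (ε - ε') * (∑ i, a i + ∑ j, b j + ∑ k, c k) :=
        mul_nonneg (by linarith) hK0
      have hm2 : (ε - ε') * (∑ i, a i + ∑ j, b j + ∑ k, c k) = 0 :=
        le_antisymm (by linarith) hm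
      rcases mul_eq_zero.1 hm2 with hcon | hok
      · exfalso; linarith
      · exact hok
    have h1' : 0 ≤ ∑ i, a i := Finset.sum_nonneg fun i _ => ha i
    have h2' : 0 ≤ ∑ j, b j := Finset.sum_nonneg fun j _ => hb j
    have h3' : 0 ≤ ∑ k, c k := Finset.sum_nonneg fun k _ => hc k
    have ea : ∑ i, a i = 0 := by linarith
    have eb : ∑ j, b j = 0 := by linarith
    have ec : ∑ k, c k = 0 := by linarith
    exact ⟨fun i => (Finset.sum_eq_zero_iff_of_nonneg fun i _ => ha i).1 ea i (Finset.mem_univ i),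
      fun j => (Finset.sum_eq_zero_iff_of_nonneg fun j _ => hb j).1 eb j (Finset.mem_univ j),
      fun k => (Finset.sum_eq_zero_iff_of_nonneg fun k _ => hc k).1 ec k (Finset.mem_univ k)⟩
  obtain ⟨ha0, hb0, hc0⟩ := habc
  -- now handle an arbitrary liquidation vector v via the constant strategy
  intro v hv
  have hmemc : AtildeMem T d L M N ℱ (fun _ => H v) a b (fun j _ => μ j v) c :=
    ⟨⟨fun t r => hH.1 v hv r, fun s t r _ => rfl⟩, ha, hb, hc, fun j =>
      ⟨fun t => (hμ j).1 v hv, fun s t r _ => rfl⟩⟩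
  have hposc : ∀ tt : Fin N → Fin (T + 1), ∀ᵐ ω ∂ℙ,
      0 ≤ PhiTilde T d L M N N le_rfl S f g h (fun i => α i - ε) (fun j => β j - ε)
        (fun k => γ k + ε) (fun _ => H v) a b (fun j _ => μ j v) c tt ω := by
    intro tt
    filter_upwards [hpos v hv] with ω hω
    rw [phiTilde_zero_coeff S f g h _ _ _ _ a b _ c ha0 hb0 hc0 tt ω]
    rw [phiHat_zero_coeff S f g h _ _ _ H a b μ c ha0 hb0 hc0 v ω] at hω
    exact hω
  have hconc := hna _ a b _ c hmemc hposc (fun _ => (0 : Fin (T + 1)))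
  filter_upwards [hconc] with ω hω
  rw [phiTilde_zero_coeff S f g h _ _ _ _ a b _ c ha0 hb0 hc0 (fun _ => 0) ω] at hω
  rw [phiHat_zero_coeff S f g h _ _ _ H a b μ c ha0 hb0 hc0 v ω]
  exact hω

end MainLemmas

/-- Theorem 2.2 of the paper. `SNA¹` and `SNA²` are equivalent. -/
theorem SNA1_iff_SNA2
    (T d L M N : ℕ) [MeasurableSpace.CountablyGenerated Ω]
    (ℱ : ℕ → MeasurableSpace Ω) (hmono : Monotone ℱ) (hle : ∀ t, ℱ t ≤ m0)
    (ℙ : Measure Ω) [IsProbabilityMeasure ℙ]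
    (S : ℕ → Ω → Fin d → ℝ) (hS : ∀ t, Measurable[ℱ t] (S t))
    (f : Fin L → Ω → ℝ) (hf : ∀ i, Measurable[ℱ T] (f i))
    (hfb : ∃ C, ∀ i ω, |f i ω| ≤ C)
    (g : Fin M → ℕ → Ω → ℝ) (hg : ∀ j t, Measurable[ℱ t] (g j t))
    (hgb : ∃ C, ∀ j t ω, |g j t ω| ≤ C)
    (h : Fin N → ℕ → Ω → ℝ) (hh : ∀ k t, Measurable[ℱ t] (h k t))
    (hhb : ∃ C, ∀ k t ω, |h k t ω| ≤ C)
    (α : Fin L → ℝ) (β : Fin M → ℝ) (γ : Fin N → ℝ) :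
    SNA1 T d L M N ℱ ℙ S f g h α β γ ↔ SNA2 T d L M N ℱ ℙ S f g h α β γ := by
  constructor
  · rintro ⟨ε, hε, hna⟩
    exact ⟨ε, hε, NA1_to_NA2 hna⟩
  · rintro ⟨ε, hε, hna⟩
    exact ⟨ε / 2, by linarith, NA2_to_NA1 (by linarith) (by linarith) hna⟩

end Stmt3
end
end

section
/- 𝒬̄^N is nonempty if and only if 𝒬̄^{N+1} is nonempty. Specifically: (a) if Q ∈ 𝒬̄^N then Q' := (1/(T+1)) Q ⊗ (δ_{0}+…+δ_{T}) belongs to 𝒬̄^{N+1}; (b) if R' ∈ 𝒬̄^{N+1} then the restriction R of R' to (Ω̄^N, 𝓕̄^N_T) belongs to 𝒬̄^N. Consequently SNA holds in 𝕄̄^N if and only if SNA holds in 𝕄̄^{N+1}. -/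
/-!
Split off the last exercise time, `Ω̄^{N+1} = Ω̄^N × 𝕋`. A measure on `Ω̄^N` is lifted by
attaching an independent uniform new time, and a measure on `Ω̄^{N+1}` is pushed down by
forgetting it; lifting and then pushing down gives back the original measure. The lift of `Q` is
the average of the images of `Q` under the sections `y ↦ (y, s)`, and these sections as well as
the forgetful map are adapted to the enlarged filtrations. Hence martingale identities and
stopped payoffs transfer slice by slice, while payoffs that ignore the new time only see the
push-down. Because the time marginals have full support, a set is `ℙ̄ⁿ`-null exactly when all
its time slices are `ℙ`-null, so equivalence to `ℙ̄ⁿ`, and almost-sure statements such as NA,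
pass between the two levels.
-/

open MeasureTheory Finset

noncomputable section

namespace Stmt5

variable {Ω : Type*}

/-- The enlarged sample space `Ω̄ⁿ = Ω × 𝕋ⁿ`, `𝕋 = {0,…,T}`. -/
abbrev EnlOmega (Ω : Type*) (T n : ℕ) := Ω × (Fin n → Fin (T + 1))

/-- The enlarged filtration
`𝓕̄ⁿ_t = σ(𝓕_t × 𝕋ⁿ, {θᵏ ≤ s}, s = 0,…,t, k = 1,…,n)`. -/
def enlF (T n : ℕ) (ℱ : ℕ → MeasurableSpace Ω) (t : ℕ) :
    MeasurableSpace (EnlOmega Ω T n) :=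
  MeasurableSpace.generateFrom
    ({A | ∃ B, MeasurableSet[ℱ t] B ∧ A = Prod.fst ⁻¹' B} ∪
     {A | ∃ (k : Fin n) (s : ℕ), s ≤ t ∧ A = {x : EnlOmega Ω T n | ((x.2 k : ℕ)) ≤ s}})

/-- Trivial extension of a process from `Ω` to `Ω̄ⁿ`. -/
def extProc {E : Type*} (T n : ℕ) (X : ℕ → Ω → E) : ℕ → EnlOmega Ω T n → E :=
  fun t x => X t x.1

/-- Trivial extension of a random variable from `Ω` to `Ω̄ⁿ`. -/
def extFun {E : Type*} (T n : ℕ) (ψ : Ω → E) : EnlOmega Ω T n → E := fun x => ψ x.1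

/-- Extension `h̄^{k,n}(ω,t¹,…,tⁿ) = h^k_{tᵏ}(ω)` of the shorted American options. -/
def extShort (T N n : ℕ) (hn : N ≤ n) (h : Fin N → ℕ → Ω → ℝ) (k : Fin N) :
    EnlOmega Ω T n → ℝ :=
  fun x => h k ((x.2 (Fin.castLE hn k)) : ℕ) x.1

/-- Extension `φ̄^{N+1}(ω,t¹,…,t^{N+1}) = φ_{t^{N+1}}(ω)`. -/
def extLast (T N : ℕ) (φ : ℕ → Ω → ℝ) : EnlOmega Ω T (N + 1) → ℝ :=
  fun x => φ ((x.2 (Fin.last N)) : ℕ) x.1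

/-- `𝒯̄ⁿ`: `𝔽̄ⁿ`-stopping times (with values in `𝕋 = {0,…,T}`). -/
def IsEnlStoppingTime (T n : ℕ) (ℱ : ℕ → MeasurableSpace Ω)
    (τ : EnlOmega Ω T n → Fin (T + 1)) : Prop :=
  ∀ t : ℕ, MeasurableSet[enlF T n ℱ t] {x | (τ x : ℕ) ≤ t}

/-- `S` is a `Q`-martingale w.r.t. the filtration `𝔉` (time horizon `T`). -/
def IsMartingaleMeasure {X : Type*} [MeasurableSpace X] (T d : ℕ)
    (𝔉 : ℕ → MeasurableSpace X) (S : ℕ → X → Fin d → ℝ) (Q : Measure X) : Prop :=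
  (∀ t, t ≤ T → Integrable (S t) Q) ∧
  ∀ t, t < T → ∀ A : Set X, MeasurableSet[𝔉 t] A →
    ∫ x in A, S (t + 1) x ∂Q = ∫ x in A, S t x ∂Q

/-- `𝓛̄ⁿ`: liquidating strategies on the enlarged space. -/
def EnlLiq (T n : ℕ) (ℱ : ℕ → MeasurableSpace Ω) : Set (ℕ → EnlOmega Ω T n → ℝ) :=
  {μ | (∀ t, Measurable[enlF T n ℱ t] (μ t)) ∧ (∀ t x, 0 ≤ μ t x) ∧
    ∀ x, ∑ t ∈ Finset.range (T + 1), μ t x = 1}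

/-- Gain from dynamic trading on the enlarged space. -/
def enlStockGain (T d n : ℕ) (H : ℕ → EnlOmega Ω T n → Fin d → ℝ)
    (S : ℕ → Ω → Fin d → ℝ) (x : EnlOmega Ω T n) : ℝ :=
  ∑ t ∈ Finset.range T, ∑ i, H t x i * (S (t + 1) x.1 i - S t x.1 i)

/-- The payoff `Φ̄ⁿ_{α,β,γ}(H̄,a,b,μ̄,c)` of a semi-static strategy on the enlarged space. -/
def PhiBar (T d L M N n : ℕ) (hn : N ≤ n)
    (S : ℕ → Ω → Fin d → ℝ) (f : Fin L → Ω → ℝ) (g : Fin M → ℕ → Ω → ℝ)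
    (h : Fin N → ℕ → Ω → ℝ) (α : Fin L → ℝ) (β : Fin M → ℝ) (γ : Fin N → ℝ)
    (H : ℕ → EnlOmega Ω T n → Fin d → ℝ) (a : Fin L → ℝ) (b : Fin M → ℝ)
    (μ : Fin M → ℕ → EnlOmega Ω T n → ℝ) (c : Fin N → ℝ) (x : EnlOmega Ω T n) : ℝ :=
  enlStockGain T d n H S x + (∑ i, a i * (f i x.1 - α i))
    + (∑ j, b j * ((∑ t ∈ Finset.range (T + 1), g j t x.1 * μ j t x) - β j))
    - ∑ k, c k * (extShort T N n hn h k x - γ k)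

variable [MeasurableSpace Ω]

/-- No arbitrage (NA) in `𝕄̄ⁿ` w.r.t. the prices `(α,β,γ)`. -/
def NAbar (T d L M N n : ℕ) (hn : N ≤ n) (ℱ : ℕ → MeasurableSpace Ω)
    (S : ℕ → Ω → Fin d → ℝ) (f : Fin L → Ω → ℝ) (g : Fin M → ℕ → Ω → ℝ)
    (h : Fin N → ℕ → Ω → ℝ) (Pbar : Measure (EnlOmega Ω T n))
    (α : Fin L → ℝ) (β : Fin M → ℝ) (γ : Fin N → ℝ) : Prop :=
  ∀ H a b μ c, (∀ t, Measurable[enlF T n ℱ t] (H t)) → (∀ i, 0 ≤ a i) →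
    (∀ j, 0 ≤ b j) → (∀ k, 0 ≤ c k) → (∀ j, μ j ∈ EnlLiq T n ℱ) →
    (∀ᵐ x ∂Pbar, 0 ≤ PhiBar T d L M N n hn S f g h α β γ H a b μ c x) →
    ∀ᵐ x ∂Pbar, PhiBar T d L M N n hn S f g h α β γ H a b μ c x = 0

/-- Strict no arbitrage (SNA) in `𝕄̄ⁿ`. -/
def SNAbar (T d L M N n : ℕ) (hn : N ≤ n) (ℱ : ℕ → MeasurableSpace Ω)
    (S : ℕ → Ω → Fin d → ℝ) (f : Fin L → Ω → ℝ) (g : Fin M → ℕ → Ω → ℝ)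
    (h : Fin N → ℕ → Ω → ℝ) (Pbar : Measure (EnlOmega Ω T n))
    (α : Fin L → ℝ) (β : Fin M → ℝ) (γ : Fin N → ℝ) : Prop :=
  ∃ ε > (0 : ℝ), NAbar T d L M N n hn ℱ S f g h Pbar
    (fun i => α i - ε) (fun j => β j - ε) (fun k => γ k + ε)

/-- `sup_{τ ∈ 𝒯̄ⁿ} E_Q[ḡ_τ]` for an American option `g` on the original space. -/
def supStop (T n : ℕ) (ℱ : ℕ → MeasurableSpace Ω) (g : ℕ → Ω → ℝ)
    (Q : Measure (EnlOmega Ω T n)) : ℝ :=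
  sSup {r : ℝ | ∃ τ, IsEnlStoppingTime T n ℱ τ ∧ r = ∫ x, g ((τ x) : ℕ) x.1 ∂Q}

/-- The set `𝒬̄ⁿ` of martingale measures equivalent to `ℙ̄ⁿ` satisfying the strict
price inequalities. -/
def QbarSet (T d L M N n : ℕ) (hn : N ≤ n) (ℱ : ℕ → MeasurableSpace Ω)
    (S : ℕ → Ω → Fin d → ℝ) (f : Fin L → Ω → ℝ) (g : Fin M → ℕ → Ω → ℝ)
    (h : Fin N → ℕ → Ω → ℝ) (Pbar : Measure (EnlOmega Ω T n))
    (α : Fin L → ℝ) (β : Fin M → ℝ) (γ : Fin N → ℝ) :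
    Set (Measure (EnlOmega Ω T n)) :=
  {Q | IsProbabilityMeasure Q ∧ Q ≪ Pbar ∧ Pbar ≪ Q ∧
    IsMartingaleMeasure T d (enlF T n ℱ) (extProc T n S) Q ∧
    (∀ i, ∫ x, extFun T n (f i) x ∂Q < α i) ∧
    (∀ k, γ k < ∫ x, extShort T N n hn h k x ∂Q) ∧
    ∀ j, supStop T n ℱ (g j) Q < β j}

/-- The measure `(1/(T+1)) · (δ_0 + … + δ_T)` on `𝕋`. -/
def uniformTime (T : ℕ) : Measure (Fin (T + 1)) :=
  ((T : ENNReal) + 1)⁻¹ • ∑ t : Fin (T + 1), Measure.dirac t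

/-- `Q' = (1/(T+1)) Q ⊗ (δ_0 + … + δ_T)` : attach an independent uniform extra exercise
time to a measure on `Ω̄^N`. -/
def attachUniform (T N : ℕ) (Q : Measure (EnlOmega Ω T N)) :
    Measure (EnlOmega Ω T (N + 1)) :=
  (Q.prod (uniformTime T)).map
    (fun p : EnlOmega Ω T N × Fin (T + 1) => (p.1.1, Fin.snoc p.1.2 p.2))

/-- The restriction of a measure on `Ω̄^{N+1}` to `(Ω̄^N, 𝓕̄^N_T)`: the image under
forgetting the last exercise time. -/
def restrictLast (T N : ℕ) (R' : Measure (EnlOmega Ω T (N + 1))) :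
    Measure (EnlOmega Ω T N) :=
  R'.map (fun x : EnlOmega Ω T (N + 1) => (x.1, fun k : Fin N => x.2 k.castSucc))

section Enlargement

variable {Ω : Type*} {T N : ℕ}

def enlInit (T N : ℕ) (x : EnlOmega Ω T (N + 1)) : EnlOmega Ω T N := (x.1, Fin.init x.2)

def enlSnoc (T N : ℕ) (s : Fin (T + 1)) (y : EnlOmega Ω T N) : EnlOmega Ω T (N + 1) :=
  (y.1, Fin.snoc y.2 s)

@[simp]
lemma enlInit_enlSnoc (s : Fin (T + 1)) (y : EnlOmega Ω T N) :
    enlInit T N (enlSnoc T N s y) = y :=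
  Prod.ext rfl (Fin.init_snoc (α := fun _ => Fin (T + 1)) _ _)

lemma extShort_enlSnoc (h : Fin N → ℕ → Ω → ℝ) (k : Fin N) (s : Fin (T + 1))
    (y : EnlOmega Ω T N) :
    extShort T N (N + 1) (Nat.le_succ N) h k (enlSnoc T N s y) = extShort T N N le_rfl h k y := by
  simp only [extShort, enlSnoc]
  exact congrArg (fun i : Fin (T + 1) => h k i y.1)
    (Fin.snoc_castSucc (α := fun _ => Fin (T + 1)) _ _ _)

lemma PhiBar_enlSnoc {d L M : ℕ} (S : ℕ → Ω → Fin d → ℝ) (f : Fin L → Ω → ℝ)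
    (g : Fin M → ℕ → Ω → ℝ) (h : Fin N → ℕ → Ω → ℝ) (α : Fin L → ℝ) (β : Fin M → ℝ)
    (γ : Fin N → ℝ)
    (H : ℕ → EnlOmega Ω T (N + 1) → Fin d → ℝ) (a : Fin L → ℝ) (b : Fin M → ℝ)
    (μ : Fin M → ℕ → EnlOmega Ω T (N + 1) → ℝ) (c : Fin N → ℝ) (s : Fin (T + 1))
    (y : EnlOmega Ω T N) :
    PhiBar T d L M N (N + 1) (Nat.le_succ N) S f g h α β γ H a b μ c (enlSnoc T N s y) =
      PhiBar T d L M N N le_rfl S f g h α β γ (fun t => H t ∘ enlSnoc T N s) a b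
        (fun j t => μ j t ∘ enlSnoc T N s) c y := by
  simp only [PhiBar, extShort_enlSnoc]
  rfl

variable [MeasurableSpace Ω]

lemma measurable_enlInit : Measurable (enlInit (Ω := Ω) T N) :=
  measurable_fst.prodMk ((Measurable.of_discrete (f := Fin.init (α := fun _ => Fin (T + 1)))).comp
    measurable_snd)

lemma measurableEmbedding_enlSnoc (s : Fin (T + 1)) :
    MeasurableEmbedding (enlSnoc (Ω := Ω) T N s) :=
  MeasurableEmbedding.id.prodMap
    ⟨Fin.snoc_left_injective (α := fun _ => Fin (T + 1)) s, .of_discrete, fun _ _ => .of_discrete⟩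

lemma measurable_enlSnoc_uncurry :
    Measurable fun p : EnlOmega Ω T N × Fin (T + 1) =>
      ((p.1.1, Fin.snoc p.1.2 p.2) : EnlOmega Ω T (N + 1)) :=
  measurable_fst.fst.prodMk ((Measurable.of_discrete
    (f := fun q : (Fin N → Fin (T + 1)) × Fin (T + 1) =>
      (Fin.snoc q.1 q.2 : Fin (N + 1) → Fin (T + 1)))).comp
        (measurable_fst.snd.prodMk measurable_snd))

end Enlargement

section FullSupport

variable {X K : Type*} [MeasurableSpace X] [MeasurableSpace K] [Countable K]
  [MeasurableSingletonClass K]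

lemma ae_prod_iff_forall {μ : Measure X} [SFinite μ] {ρ : Measure K} (hρ : ∀ k, ρ {k} ≠ 0)
    {p : X × K → Prop} : (∀ᵐ z ∂μ.prod ρ, p z) ↔ ∀ k, ∀ᵐ x ∂μ, p (x, k) := by
  conv_lhs => rw [← Measure.sum_smul_dirac ρ, Measure.prod_sum_right]
  simp_rw [Measure.ae_sum_iff, Measure.prod_smul_right, Measure.ae_ennreal_smul_measure_iff (hρ _),
    Measure.prod_dirac]
  exact forall_congr' fun k => (MeasurableEmbedding.id.prodMk_right k).ae_map_iff

end FullSupport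

section Attach

variable {Ω : Type*} [MeasurableSpace Ω] {T N : ℕ}

lemma restrictLast_eq_map (ν : Measure (EnlOmega Ω T (N + 1))) :
    restrictLast T N ν = ν.map (enlInit T N) := rfl

lemma uniformTime_eq_sum :
    uniformTime T = Measure.sum fun s => ((T : ENNReal) + 1)⁻¹ • Measure.dirac s := by
  rw [uniformTime, Measure.sum_fintype, Finset.smul_sum]

instance : IsProbabilityMeasure (uniformTime T) :=
  ⟨by simp [uniformTime, ENNReal.inv_mul_cancel]⟩

lemma attachUniform_eq_sum (Q : Measure (EnlOmega Ω T N)) [SFinite Q] :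
    attachUniform T N Q = Measure.sum fun s => ((T : ENNReal) + 1)⁻¹ • Q.map (enlSnoc T N s) := by
  rw [attachUniform, uniformTime_eq_sum, Measure.prod_sum_right,
    Measure.map_sum measurable_enlSnoc_uncurry.aemeasurable]
  congr with s : 1
  rw [Measure.prod_smul_right, Measure.map_smul, Measure.prod_dirac,
    Measure.map_map measurable_enlSnoc_uncurry measurable_prodMk_right]
  rfl

lemma restrictLast_attachUniform (Q : Measure (EnlOmega Ω T N)) [SFinite Q] :
    restrictLast T N (attachUniform T N Q) = Q := by
  rw [restrictLast_eq_map, attachUniform,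
    Measure.map_map measurable_enlInit measurable_enlSnoc_uncurry]
  simp only [Function.comp_def, enlInit, Fin.init_snoc, Prod.mk.eta]
  rw [Measure.map_fst_prod, measure_univ, one_smul]

lemma ae_attachUniform_iff (Q : Measure (EnlOmega Ω T N)) [SFinite Q]
    {p : EnlOmega Ω T (N + 1) → Prop} :
    (∀ᵐ x ∂attachUniform T N Q, p x) ↔ ∀ s, ∀ᵐ y ∂Q, p (enlSnoc T N s y) := by
  simp_rw [attachUniform_eq_sum, Measure.ae_sum_iff,
    Measure.ae_ennreal_smul_measure_iff (by simp : ((T : ENNReal) + 1)⁻¹ ≠ 0),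
    (measurableEmbedding_enlSnoc _).ae_map_iff]

lemma setIntegral_attachUniform {E : Type*} [NormedAddCommGroup E] [NormedSpace ℝ E]
    (Q : Measure (EnlOmega Ω T N)) [SFinite Q] {F : EnlOmega Ω T (N + 1) → E}
    (hF : ∀ s, Integrable (F ∘ enlSnoc T N s) Q) {A : Set (EnlOmega Ω T (N + 1))}
    (hA : MeasurableSet A) :
    ∫ x in A, F x ∂attachUniform T N Q
      = ((T : ℝ) + 1)⁻¹ • ∑ s, ∫ y in enlSnoc T N s ⁻¹' A, F (enlSnoc T N s y) ∂Q := by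
  have hc : ((T : ENNReal) + 1)⁻¹ ≠ ⊤ := by simp
  rw [attachUniform_eq_sum, Measure.restrict_sum _ hA, Measure.sum_fintype,
    integral_finsetSum_measure, Finset.smul_sum]
  · refine Finset.sum_congr rfl fun s _ => ?_
    rw [Measure.restrict_smul, integral_smul_measure,
      (measurableEmbedding_enlSnoc s).setIntegral_map]
    simp [ENNReal.toReal_inv, ENNReal.toReal_add]
  · intro s _
    exact (((measurableEmbedding_enlSnoc s).integrable_map_iff.2 (hF s)).smul_measure hc).restrict

end Attach

section Filtration

variable {Ω : Type*} {T N n : ℕ} {ℱ : ℕ → MeasurableSpace Ω}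

lemma measurableSet_enlF_preimage_fst {t : ℕ} {B : Set Ω} (hB : MeasurableSet[ℱ t] B) :
    MeasurableSet[enlF T n ℱ t] (Prod.fst ⁻¹' B) :=
  MeasurableSpace.measurableSet_generateFrom (Or.inl ⟨B, hB, rfl⟩)

lemma measurableSet_enlF_time_le {t s : ℕ} (k : Fin n) (hs : s ≤ t) :
    MeasurableSet[enlF T n ℱ t] {x : EnlOmega Ω T n | (x.2 k : ℕ) ≤ s} :=
  MeasurableSpace.measurableSet_generateFrom (Or.inr ⟨k, s, hs, rfl⟩)

lemma measurable_enlInit_enlF (t : ℕ) :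
    Measurable[enlF T (N + 1) ℱ t, enlF T N ℱ t] (enlInit T N) := by
  refine @measurable_generateFrom _ _ (enlF T (N + 1) ℱ t) _ _ ?_
  rintro A (⟨B, hB, rfl⟩ | ⟨k, s, hs, rfl⟩)
  · exact measurableSet_enlF_preimage_fst hB
  · exact measurableSet_enlF_time_le k.castSucc hs

lemma measurable_enlSnoc_enlF (s₀ : Fin (T + 1)) (t : ℕ) :
    Measurable[enlF T N ℱ t, enlF T (N + 1) ℱ t] (enlSnoc T N s₀) := by
  refine @measurable_generateFrom _ _ (enlF T N ℱ t) _ _ ?_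
  rintro A (⟨B, hB, rfl⟩ | ⟨k, s, hs, rfl⟩)
  · exact measurableSet_enlF_preimage_fst hB
  · induction k using Fin.lastCases with
    | last =>
      simp only [Set.preimage_ofPred_eq, enlSnoc, Fin.snoc_last]
      exact @MeasurableSet.const _ (enlF T N ℱ t) _
    | cast k =>
      simp only [Set.preimage_ofPred_eq, enlSnoc, Fin.snoc_castSucc]
      exact measurableSet_enlF_time_le k hs

lemma IsEnlStoppingTime.comp {m : ℕ} {φ : EnlOmega Ω T m → EnlOmega Ω T n}
    (hφ : ∀ t, Measurable[enlF T m ℱ t, enlF T n ℱ t] φ) {τ : EnlOmega Ω T n → Fin (T + 1)}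
    (hτ : IsEnlStoppingTime T n ℱ τ) : IsEnlStoppingTime T m ℱ (τ ∘ φ) :=
  fun t => hφ t (hτ t)

lemma isEnlStoppingTime_const (s : Fin (T + 1)) :
    IsEnlStoppingTime T n ℱ fun _ => s :=
  fun t => @MeasurableSet.const _ (enlF T n ℱ t) _

lemma comp_mem_enlLiq {m : ℕ} {φ : EnlOmega Ω T m → EnlOmega Ω T n}
    (hφ : ∀ t, Measurable[enlF T m ℱ t, enlF T n ℱ t] φ) {μ : ℕ → EnlOmega Ω T n → ℝ}
    (hμ : μ ∈ EnlLiq T n ℱ) : (fun t => μ t ∘ φ) ∈ EnlLiq T m ℱ :=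
  ⟨fun t => (hμ.1 t).comp (hφ t), fun t x => hμ.2.1 t (φ x), fun x => hμ.2.2 (φ x)⟩

variable [MeasurableSpace Ω]

lemma enlF_le (hle : ∀ t, ℱ t ≤ ‹MeasurableSpace Ω›) (t : ℕ) :
    enlF T n ℱ t ≤ (inferInstance : MeasurableSpace (EnlOmega Ω T n)) := by
  refine MeasurableSpace.generateFrom_le ?_
  rintro A (⟨B, hB, rfl⟩ | ⟨k, s, -, rfl⟩)
  · exact measurable_fst (hle t _ hB)
  · exact measurable_snd
      (MeasurableSet.of_discrete (s := {v : Fin n → Fin (T + 1) | (v k : ℕ) ≤ s}))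

lemma IsEnlStoppingTime.measurable (hle : ∀ t, ℱ t ≤ ‹MeasurableSpace Ω›)
    {τ : EnlOmega Ω T n → Fin (T + 1)} (hτ : IsEnlStoppingTime T n ℱ τ) : Measurable τ := by
  refine measurable_to_countable' fun y => ?_
  have hle' : ∀ t, MeasurableSet {x | (τ x : ℕ) ≤ t} := fun t => enlF_le hle t _ (hτ t)
  rcases Nat.eq_zero_or_pos y with hy | hy
  · convert hle' 0 using 1
    ext x
    simp only [Set.mem_preimage, Set.mem_singleton_iff, Set.mem_ofPred_eq, Fin.ext_iff]
    omega
  · convert (hle' y).diff (hle' (y - 1)) using 1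
    ext x
    simp only [Set.mem_preimage, Set.mem_singleton_iff, Set.mem_sdiff, Set.mem_ofPred_eq,
      Fin.ext_iff]
    omega

lemma measurable_apply_time {X β : Type*} [MeasurableSpace X] [MeasurableSpace β]
    {φ : ℕ → Ω → β} (hφ : ∀ t, Measurable (φ t)) {τ : X → Fin (T + 1)} (hτ : Measurable τ)
    {u : X → Ω} (hu : Measurable u) : Measurable fun x => φ (τ x) (u x) :=
  (measurable_from_prod_countable_left (f := fun p : Ω × Fin (T + 1) => φ p.2 p.1)
    fun t => hφ t).comp (hu.prodMk hτ)

lemma integral_le_of_abs_le {X : Type*} [MeasurableSpace X] (μ : Measure X)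
    [IsProbabilityMeasure μ] {F : X → ℝ} {C : ℝ} (hC : ∀ x, |F x| ≤ C) : ∫ x, F x ∂μ ≤ C :=
  (le_abs_self _).trans <| by
    simpa using norm_integral_le_of_norm_le_const (μ := μ)
      (.of_forall fun x => (Real.norm_eq_abs _).trans_le (hC x))

lemma le_supStop {g : ℕ → Ω → ℝ} {C : ℝ} (hC : ∀ t ω, |g t ω| ≤ C)
    (Q : Measure (EnlOmega Ω T n)) [IsProbabilityMeasure Q] {τ : EnlOmega Ω T n → Fin (T + 1)}
    (hτ : IsEnlStoppingTime T n ℱ τ) : ∫ x, g (τ x) x.1 ∂Q ≤ supStop T n ℱ g Q := by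
  refine le_csSup ⟨C, ?_⟩ ⟨τ, hτ, rfl⟩
  rintro r ⟨τ, -, rfl⟩
  exact integral_le_of_abs_le Q fun x => hC _ _

lemma supStop_le {g : ℕ → Ω → ℝ} {Q : Measure (EnlOmega Ω T n)} {c : ℝ}
    (h : ∀ τ, IsEnlStoppingTime T n ℱ τ → ∫ x, g (τ x) x.1 ∂Q ≤ c) : supStop T n ℱ g Q ≤ c :=
  csSup_le ⟨_, _, isEnlStoppingTime_const 0, rfl⟩ fun _ ⟨τ, hτ, hr⟩ => hr ▸ h τ hτ

end Filtration

section FullSupportTimes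

variable {Ω : Type*} [MeasurableSpace Ω] {T N : ℕ} {ℙ : Measure Ω} [SFinite ℙ]
  {PN : Measure (Fin N → Fin (T + 1))} {PN1 : Measure (Fin (N + 1) → Fin (T + 1))}

lemma ae_eq_ae_iff {X : Type*} [MeasurableSpace X] {μ ν : Measure X} :
    ae μ = ae ν ↔ μ ≪ ν ∧ ν ≪ μ :=
  le_antisymm_iff.trans <| and_congr Measure.ae_le_iff_absolutelyContinuous
    Measure.ae_le_iff_absolutelyContinuous

lemma ae_prod_succ_iff (hN : ∀ v, PN {v} ≠ 0) (hN1 : ∀ v, PN1 {v} ≠ 0)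
    {p : EnlOmega Ω T (N + 1) → Prop} :
    (∀ᵐ x ∂ℙ.prod PN1, p x) ↔ ∀ s, ∀ᵐ y ∂ℙ.prod PN, p (enlSnoc T N s y) := by
  simp only [ae_prod_iff_forall hN1, ae_prod_iff_forall hN, enlSnoc]
  rw [← (Fin.snocEquiv fun _ => Fin (T + 1)).forall_congr_right, Prod.forall]
  rfl

lemma ae_prod_succ_comp_enlInit_iff (hN : ∀ v, PN {v} ≠ 0) (hN1 : ∀ v, PN1 {v} ≠ 0)
    {p : EnlOmega Ω T N → Prop} :
    (∀ᵐ x ∂ℙ.prod PN1, p (enlInit T N x)) ↔ ∀ᵐ y ∂ℙ.prod PN, p y := by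
  simp only [ae_prod_succ_iff hN hN1, enlInit_enlSnoc, forall_const]

lemma ae_attachUniform_eq (hN : ∀ v, PN {v} ≠ 0) (hN1 : ∀ v, PN1 {v} ≠ 0)
    {Q : Measure (EnlOmega Ω T N)} [SFinite Q] (hQ : ae Q = ae (ℙ.prod PN)) :
    ae (attachUniform T N Q) = ae (ℙ.prod PN1) :=
  Filter.ext fun A => by
    change (∀ᵐ x ∂_, x ∈ A) ↔ ∀ᵐ x ∂_, x ∈ A
    rw [ae_attachUniform_iff, ae_prod_succ_iff hN hN1, hQ]

lemma restrictLast_null_iff (hN : ∀ v, PN {v} ≠ 0) (hN1 : ∀ v, PN1 {v} ≠ 0)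
    {ν : Measure (EnlOmega Ω T (N + 1))} (hν : ae ν = ae (ℙ.prod PN1))
    {A : Set (EnlOmega Ω T N)} (hA : MeasurableSet A) :
    restrictLast T N ν A = 0 ↔ ℙ.prod PN A = 0 := by
  rw [restrictLast_eq_map, Measure.map_apply measurable_enlInit hA, measure_eq_zero_iff_ae_notMem,
    hν, measure_eq_zero_iff_ae_notMem, ← ae_prod_succ_comp_enlInit_iff hN hN1]
  rfl

end FullSupportTimes

section Transfer

variable {Ω : Type*} [MeasurableSpace Ω] {T N : ℕ} {ℱ : ℕ → MeasurableSpace Ω}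

lemma integrable_restrictLast_iff {E : Type*} [NormedAddCommGroup E]
    {ν : Measure (EnlOmega Ω T (N + 1))} {G : EnlOmega Ω T N → E} (hG : StronglyMeasurable G) :
    Integrable G (restrictLast T N ν) ↔ Integrable (G ∘ enlInit T N) ν :=
  integrable_map_measure hG.aestronglyMeasurable measurable_enlInit.aemeasurable

lemma setIntegral_restrictLast {E : Type*} [NormedAddCommGroup E] [NormedSpace ℝ E]
    {ν : Measure (EnlOmega Ω T (N + 1))} {G : EnlOmega Ω T N → E} (hG : StronglyMeasurable G)
    {A : Set (EnlOmega Ω T N)} (hA : MeasurableSet A) :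
    ∫ y in A, G y ∂restrictLast T N ν = ∫ x in enlInit T N ⁻¹' A, G (enlInit T N x) ∂ν :=
  setIntegral_map hA hG.aestronglyMeasurable measurable_enlInit.aemeasurable

lemma integral_restrictLast {E : Type*} [NormedAddCommGroup E] [NormedSpace ℝ E]
    {ν : Measure (EnlOmega Ω T (N + 1))} {G : EnlOmega Ω T N → E} (hG : StronglyMeasurable G) :
    ∫ y, G y ∂restrictLast T N ν = ∫ x, G (enlInit T N x) ∂ν :=
  integral_map measurable_enlInit.aemeasurable hG.aestronglyMeasurable

lemma integral_attachUniform_comp_enlInit {E : Type*} [NormedAddCommGroup E] [NormedSpace ℝ E]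
    (Q : Measure (EnlOmega Ω T N)) [SFinite Q] {G : EnlOmega Ω T N → E}
    (hG : StronglyMeasurable G) :
    ∫ x, G (enlInit T N x) ∂attachUniform T N Q = ∫ y, G y ∂Q := by
  rw [← integral_restrictLast hG, restrictLast_attachUniform]

variable (hle : ∀ t, ℱ t ≤ ‹MeasurableSpace Ω›)
include hle

lemma IsMartingaleMeasure.attachUniform {d : ℕ} {S : ℕ → Ω → Fin d → ℝ}
    (hS : ∀ t, Measurable (S t)) {Q : Measure (EnlOmega Ω T N)} [SFinite Q]
    (hQ : IsMartingaleMeasure T d (enlF T N ℱ) (extProc T N S) Q) :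
    IsMartingaleMeasure T d (enlF T (N + 1) ℱ) (extProc T (N + 1) S) (attachUniform T N Q) := by
  refine ⟨fun t ht => ?_, fun t ht A hA => ?_⟩
  · have hSt : StronglyMeasurable (extProc T N S t) :=
      ((hS t).comp measurable_fst).stronglyMeasurable
    have := hQ.1 t ht
    rwa [← restrictLast_attachUniform Q, integrable_restrictLast_iff hSt] at this
  · have hA' := enlF_le hle t A hA
    rw [setIntegral_attachUniform Q (F := extProc T (N + 1) S (t + 1))
        (fun _ => hQ.1 (t + 1) ht) hA',
      setIntegral_attachUniform Q (F := extProc T (N + 1) S t) (fun _ => hQ.1 t ht.le) hA']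
    exact congrArg _ (Finset.sum_congr rfl fun s _ =>
      hQ.2 t ht _ (measurable_enlSnoc_enlF s t hA))

lemma IsMartingaleMeasure.restrictLast {d : ℕ} {S : ℕ → Ω → Fin d → ℝ}
    (hS : ∀ t, Measurable (S t)) {ν : Measure (EnlOmega Ω T (N + 1))}
    (hν : IsMartingaleMeasure T d (enlF T (N + 1) ℱ) (extProc T (N + 1) S) ν) :
    IsMartingaleMeasure T d (enlF T N ℱ) (extProc T N S) (restrictLast T N ν) := by
  have hSt : ∀ t, StronglyMeasurable (extProc T N S t) := fun t =>
    ((hS t).comp measurable_fst).stronglyMeasurable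
  refine ⟨fun t ht => (integrable_restrictLast_iff (hSt t)).2 (hν.1 t ht), fun t ht A hA => ?_⟩
  have hA' := enlF_le hle t A hA
  rw [setIntegral_restrictLast (hSt _) hA', setIntegral_restrictLast (hSt _) hA']
  exact hν.2 t ht _ (measurable_enlInit_enlF t hA)

lemma supStop_attachUniform_le {g : ℕ → Ω → ℝ} (hg : ∀ t, Measurable (g t)) {C : ℝ}
    (hC : ∀ t ω, |g t ω| ≤ C) (Q : Measure (EnlOmega Ω T N)) [IsProbabilityMeasure Q] :
    supStop T (N + 1) ℱ g (attachUniform T N Q) ≤ supStop T N ℱ g Q := by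
  refine supStop_le fun τ hτ => ?_
  have hτs : ∀ s, IsEnlStoppingTime T N ℱ (τ ∘ enlSnoc T N s) := fun s =>
    hτ.comp (measurable_enlSnoc_enlF s)
  have hint : ∀ s, Integrable ((fun x => g (τ x) x.1) ∘ enlSnoc T N s) Q := fun s =>
    .of_bound
      (measurable_apply_time hg ((hτs s).measurable hle) measurable_fst).aestronglyMeasurable C (.of_forall fun _ => (Real.norm_eq_abs _).trans_le (hC _ _))
  rw [← setIntegral_univ, setIntegral_attachUniform Q hint MeasurableSet.univ]
  calc ((T : ℝ) + 1)⁻¹ • ∑ s, ∫ y in enlSnoc T N s ⁻¹' Set.univ, g (τ (enlSnoc T N s y)) y.1 ∂Q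
      ≤ ((T : ℝ) + 1)⁻¹ • ∑ _s : Fin (T + 1), supStop T N ℱ g Q := by
        gcongr with s
        rw [Set.preimage_univ, setIntegral_univ]
        exact le_supStop hC Q (hτs s)
    _ = supStop T N ℱ g Q := by
        rw [Finset.sum_const, Finset.card_univ, Fintype.card_fin, nsmul_eq_mul, smul_eq_mul]
        push_cast
        field_simp

lemma supStop_restrictLast_le {g : ℕ → Ω → ℝ} (hg : ∀ t, Measurable (g t)) {C : ℝ}
    (hC : ∀ t ω, |g t ω| ≤ C) (ν : Measure (EnlOmega Ω T (N + 1))) [IsProbabilityMeasure ν] :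
    supStop T N ℱ g (restrictLast T N ν) ≤ supStop T (N + 1) ℱ g ν :=
  supStop_le fun τ hτ => by
    rw [integral_restrictLast
      (measurable_apply_time hg (hτ.measurable hle) measurable_fst).stronglyMeasurable]
    exact le_supStop hC ν (hτ.comp measurable_enlInit_enlF)

end Transfer

section Qbar

variable {Ω : Type*} [MeasurableSpace Ω] {T d L M N : ℕ} {ℱ : ℕ → MeasurableSpace Ω}
  {ℙ : Measure Ω} [SFinite ℙ] {S : ℕ → Ω → Fin d → ℝ} {f : Fin L → Ω → ℝ}
  {g : Fin M → ℕ → Ω → ℝ} {h : Fin N → ℕ → Ω → ℝ}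
  {PN : Measure (Fin N → Fin (T + 1))} {PN1 : Measure (Fin (N + 1) → Fin (T + 1))}

lemma measurable_extShort {n : ℕ} (hn : N ≤ n) (hh : ∀ k t, Measurable (h k t)) (k : Fin N) :
    Measurable (extShort T N n hn h k) :=
  measurable_apply_time (hh k) ((measurable_pi_apply (Fin.castLE hn k)).comp measurable_snd)
    measurable_fst

lemma NAbar_iff_NAbar_succ (hN : ∀ v, PN {v} ≠ 0) (hN1 : ∀ v, PN1 {v} ≠ 0)
    (α : Fin L → ℝ) (β : Fin M → ℝ) (γ : Fin N → ℝ) :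
    NAbar T d L M N N le_rfl ℱ S f g h (ℙ.prod PN) α β γ ↔
      NAbar T d L M N (N + 1) (Nat.le_succ N) ℱ S f g h (ℙ.prod PN1) α β γ := by
  constructor
  · intro hNA H a b μ c hH ha hb hc hμ hΦ
    rw [ae_prod_succ_iff hN hN1] at hΦ ⊢
    intro s
    simp only [PhiBar_enlSnoc S f g h] at hΦ ⊢
    exact hNA _ a b _ c (fun t => (hH t).comp (measurable_enlSnoc_enlF s t)) ha hb hc
      (fun j => comp_mem_enlLiq (measurable_enlSnoc_enlF s) (hμ j)) (hΦ s)
  · intro hNA H a b μ c hH ha hb hc hμ hΦ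
    rw [← ae_prod_succ_comp_enlInit_iff hN hN1] at hΦ ⊢
    exact hNA _ a b _ c (fun t => (hH t).comp (measurable_enlInit_enlF t)) ha hb hc
      (fun j => comp_mem_enlLiq measurable_enlInit_enlF (hμ j)) hΦ

lemma SNAbar_iff_SNAbar_succ (hN : ∀ v, PN {v} ≠ 0) (hN1 : ∀ v, PN1 {v} ≠ 0)
    (α : Fin L → ℝ) (β : Fin M → ℝ) (γ : Fin N → ℝ) :
    SNAbar T d L M N N le_rfl ℱ S f g h (ℙ.prod PN) α β γ ↔
      SNAbar T d L M N (N + 1) (Nat.le_succ N) ℱ S f g h (ℙ.prod PN1) α β γ :=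
  exists_congr fun _ => and_congr_right fun _ => NAbar_iff_NAbar_succ hN hN1 _ _ _

variable {α : Fin L → ℝ} {β : Fin M → ℝ} {γ : Fin N → ℝ}
  (hle : ∀ t, ℱ t ≤ ‹MeasurableSpace Ω›) (hS : ∀ t, Measurable (S t))
  (hf : ∀ i, Measurable (f i)) (hg : ∀ j t, Measurable (g j t)) {C : ℝ}
  (hgb : ∀ j t ω, |g j t ω| ≤ C) (hh : ∀ k t, Measurable (h k t))
  (hN : ∀ v, PN {v} ≠ 0) (hN1 : ∀ v, PN1 {v} ≠ 0)
include hle hS hf hg hgb hh hN hN1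

lemma attachUniform_mem_QbarSet {Q : Measure (EnlOmega Ω T N)}
    (hQ : Q ∈ QbarSet T d L M N N le_rfl ℱ S f g h (ℙ.prod PN) α β γ) :
    attachUniform T N Q ∈
      QbarSet T d L M N (N + 1) (Nat.le_succ N) ℱ S f g h (ℙ.prod PN1) α β γ := by
  obtain ⟨hQprob, hQac, hacQ, hQmart, hQf, hQh, hQg⟩ := hQ
  have hae := ae_eq_ae_iff.1 (ae_attachUniform_eq hN hN1 (ae_eq_ae_iff.2 ⟨hQac, hacQ⟩))
  refine ⟨Measure.isProbabilityMeasure_map measurable_enlSnoc_uncurry.aemeasurable, hae.1, hae.2,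
    hQmart.attachUniform hle hS, fun i => ?_, fun k => ?_,
    fun j => (supStop_attachUniform_le hle (hg j) (hgb j) Q).trans_lt (hQg j)⟩
  · exact (integral_attachUniform_comp_enlInit Q
      ((hf i).comp measurable_fst).stronglyMeasurable).trans_lt (hQf i)
  · exact (hQh k).trans_eq (integral_attachUniform_comp_enlInit Q
      (measurable_extShort le_rfl hh k).stronglyMeasurable).symm

lemma restrictLast_mem_QbarSet {ν : Measure (EnlOmega Ω T (N + 1))}
    (hν : ν ∈ QbarSet T d L M N (N + 1) (Nat.le_succ N) ℱ S f g h (ℙ.prod PN1) α β γ) :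
    restrictLast T N ν ∈ QbarSet T d L M N N le_rfl ℱ S f g h (ℙ.prod PN) α β γ := by
  obtain ⟨hνprob, hνac, hacν, hνmart, hνf, hνh, hνg⟩ := hν
  have hae : ae ν = ae (ℙ.prod PN1) := ae_eq_ae_iff.2 ⟨hνac, hacν⟩
  refine ⟨Measure.isProbabilityMeasure_map measurable_enlInit.aemeasurable,
    .mk fun A hA h0 => (restrictLast_null_iff hN hN1 hae hA).2 h0,
    .mk fun A hA h0 => (restrictLast_null_iff hN hN1 hae hA).1 h0,
    hνmart.restrictLast hle hS, fun i => ?_, fun k => ?_,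
    fun j => (supStop_restrictLast_le hle (hg j) (hgb j) ν).trans_lt (hνg j)⟩
  · exact (integral_restrictLast
      ((hf i).comp measurable_fst).stronglyMeasurable).trans_lt (hνf i)
  · exact (hνh k).trans_eq
      (integral_restrictLast (measurable_extShort le_rfl hh k).stronglyMeasurable).symm

end Qbar

theorem QbarN_nonempty_iff_QbarN1_nonempty_general
    (T d L M N : ℕ)
    (ℱ : ℕ → MeasurableSpace Ω)
    (hle : ∀ t, ℱ t ≤ (inferInstance : MeasurableSpace Ω))
    (ℙ : Measure Ω) [IsProbabilityMeasure ℙ]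
    (S : ℕ → Ω → Fin d → ℝ) (hS : ∀ t, Measurable[ℱ t] (S t))
    (f : Fin L → Ω → ℝ) (hf : ∀ i, Measurable[ℱ T] (f i))
    (g : Fin M → ℕ → Ω → ℝ) (hg : ∀ j t, Measurable[ℱ t] (g j t))
    (hgb : ∃ C, ∀ j t ω, |g j t ω| ≤ C)
    (h : Fin N → ℕ → Ω → ℝ) (hh : ∀ k t, Measurable[ℱ t] (h k t))
    (α : Fin L → ℝ) (β : Fin M → ℝ) (γ : Fin N → ℝ)
    (PN : Measure (Fin N → Fin (T + 1))) [IsProbabilityMeasure PN]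
    (hfullN : ∀ v : Fin N → Fin (T + 1), 0 < PN {v})
    (PN1 : Measure (Fin (N + 1) → Fin (T + 1))) [IsProbabilityMeasure PN1]
    (hfullN1 : ∀ v : Fin (N + 1) → Fin (T + 1), 0 < PN1 {v}) :
    (∀ Q ∈ QbarSet T d L M N N le_rfl ℱ S f g h (ℙ.prod PN) α β γ,
        attachUniform T N Q ∈
          QbarSet T d L M N (N + 1) (Nat.le_succ N) ℱ S f g h (ℙ.prod PN1) α β γ) ∧
    (∀ R' ∈ QbarSet T d L M N (N + 1) (Nat.le_succ N) ℱ S f g h (ℙ.prod PN1) α β γ,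
        restrictLast T N R' ∈ QbarSet T d L M N N le_rfl ℱ S f g h (ℙ.prod PN) α β γ) ∧
    ((QbarSet T d L M N N le_rfl ℱ S f g h (ℙ.prod PN) α β γ).Nonempty ↔
      (QbarSet T d L M N (N + 1) (Nat.le_succ N) ℱ S f g h (ℙ.prod PN1) α β γ).Nonempty) ∧
    (SNAbar T d L M N N le_rfl ℱ S f g h (ℙ.prod PN) α β γ ↔
      SNAbar T d L M N (N + 1) (Nat.le_succ N) ℱ S f g h (ℙ.prod PN1) α β γ) := by
  have hN : ∀ v, PN {v} ≠ 0 := fun v => (hfullN v).ne'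
  have hN1 : ∀ v, PN1 {v} ≠ 0 := fun v => (hfullN1 v).ne'
  obtain ⟨C, hC⟩ := hgb
  have hS' := fun t => (hS t).mono (hle t) le_rfl
  have hf' := fun i => (hf i).mono (hle T) le_rfl
  have hg' := fun j t => (hg j t).mono (hle t) le_rfl
  have hh' := fun k t => (hh k t).mono (hle t) le_rfl
  refine ⟨?attach, ?restrict,
    ⟨fun ⟨Q, hQ⟩ => ⟨_, ?attach Q hQ⟩, fun ⟨R', hR'⟩ => ⟨_, ?restrict R' hR'⟩⟩,
    SNAbar_iff_SNAbar_succ hN hN1 α β γ⟩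
  · exact fun Q hQ => attachUniform_mem_QbarSet hle hS' hf' hg' hC hh' hN hN1 hQ
  · exact fun R' hR' => restrictLast_mem_QbarSet hle hS' hf' hg' hC hh' hN hN1 hR'

/-- Remark 3.3 of the paper. `𝒬̄^N ≠ ∅ ↔ 𝒬̄^{N+1} ≠ ∅`; concretely,
`Q ∈ 𝒬̄^N` implies `(1/(T+1)) Q ⊗ (δ_0+…+δ_T) ∈ 𝒬̄^{N+1}`, and the restriction of any
`R' ∈ 𝒬̄^{N+1}` to `(Ω̄^N, 𝓕̄^N_T)` belongs to `𝒬̄^N`. Consequently SNA holds in `𝕄̄^N`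
iff it holds in `𝕄̄^{N+1}`. -/
theorem QbarN_nonempty_iff_QbarN1_nonempty [MeasurableSpace.CountablyGenerated Ω]
    (T d L M N : ℕ)
    (ℱ : ℕ → MeasurableSpace Ω) (hmono : Monotone ℱ)
    (hle : ∀ t, ℱ t ≤ (inferInstance : MeasurableSpace Ω))
    (ℙ : Measure Ω) [IsProbabilityMeasure ℙ]
    (S : ℕ → Ω → Fin d → ℝ) (hS : ∀ t, Measurable[ℱ t] (S t))
    (f : Fin L → Ω → ℝ) (hf : ∀ i, Measurable[ℱ T] (f i))
    (hfb : ∃ C, ∀ i ω, |f i ω| ≤ C)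
    (g : Fin M → ℕ → Ω → ℝ) (hg : ∀ j t, Measurable[ℱ t] (g j t))
    (hgb : ∃ C, ∀ j t ω, |g j t ω| ≤ C)
    (h : Fin N → ℕ → Ω → ℝ) (hh : ∀ k t, Measurable[ℱ t] (h k t))
    (hhb : ∃ C, ∀ k t ω, |h k t ω| ≤ C)
    (α : Fin L → ℝ) (β : Fin M → ℝ) (γ : Fin N → ℝ)
    (PN : Measure (Fin N → Fin (T + 1))) [IsProbabilityMeasure PN]
    (hfullN : ∀ v : Fin N → Fin (T + 1), 0 < PN {v})
    (PN1 : Measure (Fin (N + 1) → Fin (T + 1))) [IsProbabilityMeasure PN1]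
    (hfullN1 : ∀ v : Fin (N + 1) → Fin (T + 1), 0 < PN1 {v}) :
    (∀ Q ∈ QbarSet T d L M N N le_rfl ℱ S f g h (ℙ.prod PN) α β γ,
        attachUniform T N Q ∈
          QbarSet T d L M N (N + 1) (Nat.le_succ N) ℱ S f g h (ℙ.prod PN1) α β γ) ∧
    (∀ R' ∈ QbarSet T d L M N (N + 1) (Nat.le_succ N) ℱ S f g h (ℙ.prod PN1) α β γ,
        restrictLast T N R' ∈ QbarSet T d L M N N le_rfl ℱ S f g h (ℙ.prod PN) α β γ) ∧
    ((QbarSet T d L M N N le_rfl ℱ S f g h (ℙ.prod PN) α β γ).Nonempty ↔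
      (QbarSet T d L M N (N + 1) (Nat.le_succ N) ℱ S f g h (ℙ.prod PN1) α β γ).Nonempty) ∧
    (SNAbar T d L M N N le_rfl ℱ S f g h (ℙ.prod PN) α β γ ↔
      SNAbar T d L M N (N + 1) (Nat.le_succ N) ℱ S f g h (ℙ.prod PN1) α β γ) :=
  QbarN_nonempty_iff_QbarN1_nonempty_general T d L M N ℱ hle ℙ S hS f hf g hg hgb h hh α β γ PN
    hfullN PN1 hfullN1

end Stmt5
end
end

section
/- The inequality chain inf_{Q∈𝒬̄^N} sup_{τ∈𝒯̄^N} E_Q[φ̄^N_τ] ≤ sup_{Q∈𝒬̄^N} sup_{τ∈𝒯̄^N} E_Q[φ̄^N_τ] ≤ sup_{Q∈𝒬̄^{N+1}} E_Q[φ̄^{N+1}] holds; i.e., the value of the optimal stopping problem over 𝒬̄^N is dominated by the expectation of the European extension φ̄^{N+1} over 𝒬̄^{N+1}. -/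
open MeasureTheory Finset

noncomputable section

namespace Stmt8

variable {Ω : Type*}

/-- The enlarged sample space `Ω̄ⁿ = Ω × 𝕋ⁿ`, `𝕋 = {0,…,T}`. -/
abbrev EnlOmega (Ω : Type*) (T n : ℕ) := Ω × (Fin n → Fin (T + 1))

/-- The enlarged filtration
`𝓕̄ⁿ_t = σ(𝓕_t × 𝕋ⁿ, {θᵏ ≤ s}, s = 0,…,t, k = 1,…,n)`. -/
def enlF (T n : ℕ) (ℱ : ℕ → MeasurableSpace Ω) (t : ℕ) :
    MeasurableSpace (EnlOmega Ω T n) :=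
  MeasurableSpace.generateFrom
    ({A | ∃ B, MeasurableSet[ℱ t] B ∧ A = Prod.fst ⁻¹' B} ∪
     {A | ∃ (k : Fin n) (s : ℕ), s ≤ t ∧ A = {x : EnlOmega Ω T n | ((x.2 k : ℕ)) ≤ s}})

/-- Trivial extension of a process from `Ω` to `Ω̄ⁿ`. -/
def extProc {E : Type*} (T n : ℕ) (X : ℕ → Ω → E) : ℕ → EnlOmega Ω T n → E :=
  fun t x => X t x.1

/-- Trivial extension of a random variable from `Ω` to `Ω̄ⁿ`. -/
def extFun {E : Type*} (T n : ℕ) (ψ : Ω → E) : EnlOmega Ω T n → E := fun x => ψ x.1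

/-- Extension `h̄^{k,n}(ω,t¹,…,tⁿ) = h^k_{tᵏ}(ω)` of the shorted American options. -/
def extShort (T N n : ℕ) (hn : N ≤ n) (h : Fin N → ℕ → Ω → ℝ) (k : Fin N) :
    EnlOmega Ω T n → ℝ :=
  fun x => h k ((x.2 (Fin.castLE hn k)) : ℕ) x.1

/-- Extension `φ̄^{N+1}(ω,t¹,…,t^{N+1}) = φ_{t^{N+1}}(ω)`. -/
def extLast (T N : ℕ) (φ : ℕ → Ω → ℝ) : EnlOmega Ω T (N + 1) → ℝ :=
  fun x => φ ((x.2 (Fin.last N)) : ℕ) x.1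

/-- `𝒯̄ⁿ`: `𝔽̄ⁿ`-stopping times (with values in `𝕋 = {0,…,T}`). -/
def IsEnlStoppingTime (T n : ℕ) (ℱ : ℕ → MeasurableSpace Ω)
    (τ : EnlOmega Ω T n → Fin (T + 1)) : Prop :=
  ∀ t : ℕ, MeasurableSet[enlF T n ℱ t] {x | (τ x : ℕ) ≤ t}

/-- `S` is a `Q`-martingale w.r.t. the filtration `𝔉` (time horizon `T`). -/
def IsMartingaleMeasure {X : Type*} [MeasurableSpace X] (T d : ℕ)
    (𝔉 : ℕ → MeasurableSpace X) (S : ℕ → X → Fin d → ℝ) (Q : Measure X) : Prop :=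
  (∀ t, t ≤ T → Integrable (S t) Q) ∧
  ∀ t, t < T → ∀ A : Set X, MeasurableSet[𝔉 t] A →
    ∫ x in A, S (t + 1) x ∂Q = ∫ x in A, S t x ∂Q

/-- `𝓛̄ⁿ`: liquidating strategies on the enlarged space. -/
def EnlLiq (T n : ℕ) (ℱ : ℕ → MeasurableSpace Ω) : Set (ℕ → EnlOmega Ω T n → ℝ) :=
  {μ | (∀ t, Measurable[enlF T n ℱ t] (μ t)) ∧ (∀ t x, 0 ≤ μ t x) ∧
    ∀ x, ∑ t ∈ Finset.range (T + 1), μ t x = 1}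

/-- Gain from dynamic trading on the enlarged space. -/
def enlStockGain (T d n : ℕ) (H : ℕ → EnlOmega Ω T n → Fin d → ℝ)
    (S : ℕ → Ω → Fin d → ℝ) (x : EnlOmega Ω T n) : ℝ :=
  ∑ t ∈ Finset.range T, ∑ i, H t x i * (S (t + 1) x.1 i - S t x.1 i)

/-- The payoff `Φ̄ⁿ_{α,β,γ}(H̄,a,b,μ̄,c)` of a semi-static strategy on the enlarged space. -/
def PhiBar (T d L M N n : ℕ) (hn : N ≤ n)
    (S : ℕ → Ω → Fin d → ℝ) (f : Fin L → Ω → ℝ) (g : Fin M → ℕ → Ω → ℝ)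
    (h : Fin N → ℕ → Ω → ℝ) (α : Fin L → ℝ) (β : Fin M → ℝ) (γ : Fin N → ℝ)
    (H : ℕ → EnlOmega Ω T n → Fin d → ℝ) (a : Fin L → ℝ) (b : Fin M → ℝ)
    (μ : Fin M → ℕ → EnlOmega Ω T n → ℝ) (c : Fin N → ℝ) (x : EnlOmega Ω T n) : ℝ :=
  enlStockGain T d n H S x + (∑ i, a i * (f i x.1 - α i))
    + (∑ j, b j * ((∑ t ∈ Finset.range (T + 1), g j t x.1 * μ j t x) - β j))
    - ∑ k, c k * (extShort T N n hn h k x - γ k)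

variable [MeasurableSpace Ω]

/-- No arbitrage (NA) in `𝕄̄ⁿ` w.r.t. the prices `(α,β,γ)`. -/
def NAbar (T d L M N n : ℕ) (hn : N ≤ n) (ℱ : ℕ → MeasurableSpace Ω)
    (S : ℕ → Ω → Fin d → ℝ) (f : Fin L → Ω → ℝ) (g : Fin M → ℕ → Ω → ℝ)
    (h : Fin N → ℕ → Ω → ℝ) (Pbar : Measure (EnlOmega Ω T n))
    (α : Fin L → ℝ) (β : Fin M → ℝ) (γ : Fin N → ℝ) : Prop :=
  ∀ H a b μ c, (∀ t, Measurable[enlF T n ℱ t] (H t)) → (∀ i, 0 ≤ a i) →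
    (∀ j, 0 ≤ b j) → (∀ k, 0 ≤ c k) → (∀ j, μ j ∈ EnlLiq T n ℱ) →
    (∀ᵐ x ∂Pbar, 0 ≤ PhiBar T d L M N n hn S f g h α β γ H a b μ c x) →
    ∀ᵐ x ∂Pbar, PhiBar T d L M N n hn S f g h α β γ H a b μ c x = 0

/-- Strict no arbitrage (SNA) in `𝕄̄ⁿ`. -/
def SNAbar (T d L M N n : ℕ) (hn : N ≤ n) (ℱ : ℕ → MeasurableSpace Ω)
    (S : ℕ → Ω → Fin d → ℝ) (f : Fin L → Ω → ℝ) (g : Fin M → ℕ → Ω → ℝ)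
    (h : Fin N → ℕ → Ω → ℝ) (Pbar : Measure (EnlOmega Ω T n))
    (α : Fin L → ℝ) (β : Fin M → ℝ) (γ : Fin N → ℝ) : Prop :=
  ∃ ε > (0 : ℝ), NAbar T d L M N n hn ℱ S f g h Pbar
    (fun i => α i - ε) (fun j => β j - ε) (fun k => γ k + ε)

/-- `sup_{τ ∈ 𝒯̄ⁿ} E_Q[ḡ_τ]` for an American option `g` on the original space. -/
def supStop (T n : ℕ) (ℱ : ℕ → MeasurableSpace Ω) (g : ℕ → Ω → ℝ)
    (Q : Measure (EnlOmega Ω T n)) : ℝ :=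
  sSup {r : ℝ | ∃ τ, IsEnlStoppingTime T n ℱ τ ∧ r = ∫ x, g ((τ x) : ℕ) x.1 ∂Q}

/-- The set `𝒬̄ⁿ` of martingale measures equivalent to `ℙ̄ⁿ` satisfying the strict
price inequalities. -/
def QbarSet (T d L M N n : ℕ) (hn : N ≤ n) (ℱ : ℕ → MeasurableSpace Ω)
    (S : ℕ → Ω → Fin d → ℝ) (f : Fin L → Ω → ℝ) (g : Fin M → ℕ → Ω → ℝ)
    (h : Fin N → ℕ → Ω → ℝ) (Pbar : Measure (EnlOmega Ω T n))
    (α : Fin L → ℝ) (β : Fin M → ℝ) (γ : Fin N → ℝ) :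
    Set (Measure (EnlOmega Ω T n)) :=
  {Q | IsProbabilityMeasure Q ∧ Q ≪ Pbar ∧ Pbar ≪ Q ∧
    IsMartingaleMeasure T d (enlF T n ℱ) (extProc T n S) Q ∧
    (∀ i, ∫ x, extFun T n (f i) x ∂Q < α i) ∧
    (∀ k, γ k < ∫ x, extShort T N n hn h k x ∂Q) ∧
    ∀ j, supStop T n ℱ (g j) Q < β j}

end Stmt8

/-!
Fix `Q ∈ 𝒬̄ᴺ` and an `𝔽̄ᴺ`-stopping time `τ`. Pushing `Q` forward along
`x ↦ (x, τ x)`, which records `τ` as an extra exercise time, gives a measure on `Ω̄ᴺ⁺¹` under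
which `φ̄ᴺ⁺¹` has the law of `φ_τ` under `Q`. The push-forward keeps every constraint of `𝒬̄`:
`f̄` and `h̄` ignore the new coordinate; `S̄` stays a martingale because the map is
`𝓕̄ᴺ_t / 𝓕̄ᴺ⁺¹_t`-measurable; an `𝔽̄ᴺ⁺¹`-stopping time composed with it is an `𝔽̄ᴺ`-stopping
time, so the American prices do not increase. The push-forward need not be equivalent to
`ℙ̄ᴺ⁺¹`; mixing it, with weight `1 - r`, with the push-forwards along all constant times
restores equivalence. Letting `r → 0` gives `E_Q[φ_τ] ≤ sup_{𝒬̄ᴺ⁺¹} E[φ̄ᴺ⁺¹]`.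
-/

namespace Stmt8

lemma abs_integral_le_of_forall_abs_le {X : Type*} [MeasurableSpace X] {μ : Measure X}
    [IsProbabilityMeasure μ] {F : X → ℝ} {C : ℝ} (hF : ∀ x, |F x| ≤ C) :
    |∫ x, F x ∂μ| ≤ C := by
  simpa using norm_integral_le_of_norm_le_const (μ := μ)
    (ae_of_all _ fun x => (Real.norm_eq_abs _).trans_le (hF x))

lemma integrable_of_forall_abs_le {X : Type*} [MeasurableSpace X] {μ : Measure X}
    [IsFiniteMeasure μ] {F : X → ℝ} (hF : Measurable F) {C : ℝ} (hC : ∀ x, |F x| ≤ C) :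
    Integrable F μ :=
  .of_bound hF.aestronglyMeasurable C
    (ae_of_all _ fun x => (Real.norm_eq_abs _).trans_le (hC x))

lemma measurable_eval_of_countable {X Z κ : Type*} [MeasurableSpace X] [MeasurableSpace Z]
    [MeasurableSpace κ] [Countable κ] [MeasurableSingletonClass κ] {F : κ → X → Z}
    (hF : ∀ i, Measurable (F i)) {τ : X → κ} (hτ : Measurable τ) :
    Measurable fun x => F (τ x) x :=
  (measurable_from_prod_countable_left (f := fun p : X × κ => F p.2 p.1) hF).comp
    (measurable_id.prodMk hτ)

section Slices

variable {α V : Type*} [MeasurableSpace α] [MeasurableSpace V] {μ : Measure α}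
  {ν : Measure V} [SFinite ν] {A : Set (α × V)}

lemma prod_null_of_forall_slice_null [Countable V] [MeasurableSingletonClass V]
    (h : ∀ v, μ {a | (a, v) ∈ A} = 0) : μ.prod ν A = 0 := by
  have hA : A = ⋃ v, {a | (a, v) ∈ A} ×ˢ {v} := by
    ext ⟨a, v⟩
    simp
  rw [hA]
  exact measure_iUnion_null fun v => by simp [h v]

lemma slice_null_of_prod_null {v : V} (hv : ν {v} ≠ 0) (h : μ.prod ν A = 0) :
    μ {a | (a, v) ∈ A} = 0 := by
  have hsub : {a | (a, v) ∈ A} ×ˢ {v} ⊆ A := by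
    rintro ⟨a, v'⟩ ⟨ha, rfl⟩
    exact ha
  simpa [hv] using measure_mono_null hsub h

end Slices

section PushMixture

variable {X Y ι : Type*} [MeasurableSpace X] [MeasurableSpace Y] [Fintype ι]

def pushMixture (Q : Measure X) (w : ι → ℝ) (m : ι → X → Y) : Measure Y :=
  ∑ i, ENNReal.ofReal (w i) • Q.map (m i)

variable {Q : Measure X} {w : ι → ℝ} {m : ι → X → Y}

lemma pushMixture_apply (hm : ∀ i, Measurable (m i)) {A : Set Y} (hA : MeasurableSet A) :
    pushMixture Q w m A = ∑ i, ENNReal.ofReal (w i) * Q (m i ⁻¹' A) := by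
  simp [pushMixture, Measure.finsetSum_apply, Measure.map_apply (hm _) hA]

lemma isProbabilityMeasure_pushMixture [IsProbabilityMeasure Q] (hw : ∀ i, 0 ≤ w i)
    (hw1 : ∑ i, w i = 1) (hm : ∀ i, Measurable (m i)) :
    IsProbabilityMeasure (pushMixture Q w m) := by
  constructor
  rw [pushMixture_apply hm .univ]
  simp [← ENNReal.ofReal_sum_of_nonneg fun i _ => hw i, hw1]

lemma pushMixture_absolutelyContinuous {P : Measure Y} (hm : ∀ i, Measurable (m i))
    (h : ∀ i, Q.map (m i) ≪ P) : pushMixture Q w m ≪ P := by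
  refine .mk fun A hA hPA => ?_
  rw [pushMixture_apply hm hA]
  exact Finset.sum_eq_zero fun i _ => by rw [← Measure.map_apply (hm i) hA, h i hPA, mul_zero]

lemma map_absolutelyContinuous_pushMixture (hm : ∀ i, Measurable (m i)) {i : ι}
    (hi : 0 < w i) : Q.map (m i) ≪ pushMixture Q w m := by
  refine .mk fun A hA hνA => ?_
  rw [pushMixture_apply hm hA, Finset.sum_eq_zero_iff] at hνA
  rw [Measure.map_apply (hm i) hA]
  simpa [hi.not_ge] using hνA i (Finset.mem_univ i)

variable {E : Type*} [NormedAddCommGroup E] {F : Y → E}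

lemma integrable_smul_map {c : ℝ} {f : X → Y} (hf : Measurable f) (hF : StronglyMeasurable F)
    (hFf : Integrable (fun x => F (f x)) Q) : Integrable F (ENNReal.ofReal c • Q.map f) :=
  ((integrable_map_measure hF.aestronglyMeasurable hf.aemeasurable).2 hFf).smul_measure
    ENNReal.ofReal_ne_top

lemma integrable_pushMixture (hm : ∀ i, Measurable (m i)) (hF : StronglyMeasurable F)
    (hint : ∀ i, Integrable (fun x => F (m i x)) Q) : Integrable F (pushMixture Q w m) :=
  integrable_finsetSum_measure.2 fun i _ => integrable_smul_map (hm i) hF (hint i)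

lemma integrable_comp_of_pushMixture (hm : ∀ i, Measurable (m i)) (hF : StronglyMeasurable F)
    (h : Integrable F (pushMixture Q w m)) {i : ι} (hi : 0 < w i) :
    Integrable (fun x => F (m i x)) Q := by
  have hsummand := integrable_finsetSum_measure.1 h i (Finset.mem_univ i)
  rwa [integrable_smul_measure (by simpa using hi) ENNReal.ofReal_ne_top,
    integrable_map_measure hF.aestronglyMeasurable (hm i).aemeasurable] at hsummand

variable [NormedSpace ℝ E]

lemma integral_pushMixture (hw : ∀ i, 0 ≤ w i) (hm : ∀ i, Measurable (m i))
    (hF : StronglyMeasurable F) (hint : ∀ i, Integrable (fun x => F (m i x)) Q) :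
    ∫ y, F y ∂pushMixture Q w m = ∑ i, w i • ∫ x, F (m i x) ∂Q := by
  rw [pushMixture, integral_finsetSum_measure fun i _ => integrable_smul_map (hm i) hF (hint i)]
  refine Finset.sum_congr rfl fun i _ => ?_
  rw [integral_smul_measure, ENNReal.toReal_ofReal (hw i),
    integral_map (hm i).aemeasurable hF.aestronglyMeasurable]

lemma setIntegral_pushMixture (hw : ∀ i, 0 ≤ w i) (hm : ∀ i, Measurable (m i))
    (hF : StronglyMeasurable F) (hint : ∀ i, Integrable (fun x => F (m i x)) Q)
    {A : Set Y} (hA : MeasurableSet A) :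
    ∫ y in A, F y ∂pushMixture Q w m = ∑ i, w i • ∫ x in m i ⁻¹' A, F (m i x) ∂Q := by
  rw [← integral_indicator hA, integral_pushMixture hw hm (hF.indicator hA)
    fun i => (hint i).indicator (hm i hA)]
  simp_rw [← integral_indicator (hm _ hA)]
  rfl

/-- No integrability is assumed: if `G` is not `Q`-integrable, neither is `F` under the
mixture, and both integrals are the junk value `0`. -/
lemma integral_pushMixture_of_comp_eq (hw : ∀ i, 0 ≤ w i) (hw1 : ∑ i, w i = 1)
    (hm : ∀ i, Measurable (m i)) (hF : StronglyMeasurable F) {G : X → E}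
    (hFG : ∀ i, (fun x => F (m i x)) = G) :
    ∫ y, F y ∂pushMixture Q w m = ∫ x, G x ∂Q := by
  by_cases hG : Integrable G Q
  · rw [integral_pushMixture hw hm hF fun i => hFG i ▸ hG]
    simp_rw [hFG, ← Finset.sum_smul, hw1, one_smul]
  · obtain ⟨i, -, hi⟩ := Finset.exists_ne_zero_of_sum_ne_zero (hw1.trans_ne one_ne_zero)
    have hFν : ¬ Integrable F (pushMixture Q w m) := fun hFν =>
      hG (hFG i ▸ integrable_comp_of_pushMixture hm hF hFν ((hw i).lt_of_ne' hi))
    rw [integral_undef hFν, integral_undef hG]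

lemma integral_pushMixture_le (hw : ∀ i, 0 ≤ w i) (hw1 : ∑ i, w i = 1)
    (hm : ∀ i, Measurable (m i)) {F : Y → ℝ} (hF : StronglyMeasurable F)
    (hint : ∀ i, Integrable (fun x => F (m i x)) Q) {V : ℝ}
    (hV : ∀ i, ∫ x, F (m i x) ∂Q ≤ V) :
    ∫ y, F y ∂pushMixture Q w m ≤ V := by
  rw [integral_pushMixture hw hm hF hint]
  calc ∑ i, w i • ∫ x, F (m i x) ∂Q ≤ ∑ i, w i * V :=
        Finset.sum_le_sum fun i _ => mul_le_mul_of_nonneg_left (hV i) (hw i)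
    _ = V := by rw [← Finset.sum_mul, hw1, one_mul]

end PushMixture

lemma IsMartingaleMeasure.pushMixture {X Y ι : Type*} [MeasurableSpace X] [MeasurableSpace Y]
    [Fintype ι] {T d : ℕ} {𝔉X : ℕ → MeasurableSpace X} {𝔉Y : ℕ → MeasurableSpace Y}
    (h𝔉Y : ∀ t, 𝔉Y t ≤ ‹MeasurableSpace Y›) {SX : ℕ → X → Fin d → ℝ}
    {SY : ℕ → Y → Fin d → ℝ} (hSY : ∀ t, StronglyMeasurable (SY t)) {Q : Measure X}
    (hQ : IsMartingaleMeasure T d 𝔉X SX Q) {w : ι → ℝ} (hw : ∀ i, 0 ≤ w i)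
    {m : ι → X → Y} (hm : ∀ i, Measurable (m i))
    (hm𝔉 : ∀ i t, Measurable[𝔉X t, 𝔉Y t] (m i)) (hS : ∀ i t, (fun x => SY t (m i x)) = SX t) :
    IsMartingaleMeasure T d 𝔉Y SY (pushMixture Q w m) := by
  have hint : ∀ t ≤ T, ∀ i, Integrable (fun x => SY t (m i x)) Q := fun t ht i =>
    hS i t ▸ hQ.1 t ht
  refine ⟨fun t ht => integrable_pushMixture hm (hSY t) (hint t ht), fun t ht A hA => ?_⟩
  rw [setIntegral_pushMixture hw hm (hSY _) (hint _ ht) (h𝔉Y t A hA),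
    setIntegral_pushMixture hw hm (hSY _) (hint _ ht.le) (h𝔉Y t A hA)]
  refine Finset.sum_congr rfl fun i _ => ?_
  simp_rw [hS]
  rw [hQ.2 t ht _ (hm𝔉 i t hA)]

section Enlarged

variable {Ω : Type*} {T N n : ℕ} {ℱ : ℕ → MeasurableSpace Ω}

lemma enlF_mono (hmono : Monotone ℱ) : Monotone (enlF T n ℱ) := fun s t hst =>
  MeasurableSpace.generateFrom_mono <| Set.union_subset_union
    (by rintro _ ⟨B, hB, rfl⟩; exact ⟨B, hmono hst B hB, rfl⟩)
    (by rintro _ ⟨k, u, hu, rfl⟩; exact ⟨k, u, hu.trans hst, rfl⟩)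

lemma isEnlStoppingTime_const (u : Fin (T + 1)) : IsEnlStoppingTime T n ℱ fun _ => u := by
  intro t
  by_cases hu : (u : ℕ) ≤ t <;> simp [hu]

def snocTime (σ : EnlOmega Ω T N → Fin (T + 1)) (x : EnlOmega Ω T N) :
    EnlOmega Ω T (N + 1) :=
  (x.1, Fin.snoc x.2 (σ x))

variable {σ : EnlOmega Ω T N → Fin (T + 1)}

lemma extShort_snocTime (h : Fin N → ℕ → Ω → ℝ) (k : Fin N) (x : EnlOmega Ω T N) :
    extShort T N (N + 1) (Nat.le_succ N) h k (snocTime σ x) = extShort T N N le_rfl h k x := by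
  simp [extShort, snocTime, ← Fin.castSucc_castLE]

lemma extLast_snocTime (φ : ℕ → Ω → ℝ) (x : EnlOmega Ω T N) :
    extLast T N φ (snocTime σ x) = φ (σ x) x.1 := by
  simp [extLast, snocTime]

lemma IsEnlStoppingTime.measurable_snocTime (hmono : Monotone ℱ)
    (hσ : IsEnlStoppingTime T N ℱ σ) (t : ℕ) :
    Measurable[enlF T N ℱ t, enlF T (N + 1) ℱ t] (snocTime σ) := by
  refine @measurable_generateFrom _ _ (enlF T N ℱ t) _ _ ?_
  rintro _ (⟨B, hB, rfl⟩ | ⟨k, s, hs, rfl⟩)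
  · exact MeasurableSpace.measurableSet_generateFrom (Or.inl ⟨B, hB, rfl⟩)
  · induction k using Fin.lastCases with
    | last => simpa [snocTime] using enlF_mono hmono hs _ (hσ s)
    | cast j =>
      have : MeasurableSet[enlF T N ℱ t] {x : EnlOmega Ω T N | (x.2 j : ℕ) ≤ s} :=
        MeasurableSpace.measurableSet_generateFrom (Or.inr ⟨j, s, hs, rfl⟩)
      simpa [snocTime] using this

lemma IsEnlStoppingTime.comp_snocTime (hmono : Monotone ℱ)
    {τ : EnlOmega Ω T (N + 1) → Fin (T + 1)} (hτ : IsEnlStoppingTime T (N + 1) ℱ τ)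
    (hσ : IsEnlStoppingTime T N ℱ σ) : IsEnlStoppingTime T N ℱ fun x => τ (snocTime σ x) :=
  fun t => hσ.measurable_snocTime hmono t (hτ t)

variable [MeasurableSpace Ω]

lemma enlF_le (hle : ∀ t, ℱ t ≤ ‹MeasurableSpace Ω›) (t : ℕ) :
    enlF T n ℱ t ≤ (inferInstance : MeasurableSpace (EnlOmega Ω T n)) := by
  refine MeasurableSpace.generateFrom_le ?_
  rintro _ (⟨B, hB, rfl⟩ | ⟨k, s, -, rfl⟩)
  · exact measurable_fst (hle t B hB)
  · exact measurableSet_le (by fun_prop) measurable_const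

lemma IsEnlStoppingTime.measurable (hle : ∀ t, ℱ t ≤ ‹MeasurableSpace Ω›)
    {τ : EnlOmega Ω T n → Fin (T + 1)} (hτ : IsEnlStoppingTime T n ℱ τ) : Measurable τ :=
  measurable_of_Iic fun u => enlF_le hle u _ (hτ u)

lemma measurable_stopped {g : ℕ → Ω → ℝ} (hg : ∀ t, Measurable (g t))
    {τ : EnlOmega Ω T n → Fin (T + 1)} (hτ : Measurable τ) :
    Measurable fun x => g (τ x) x.1 :=
  measurable_eval_of_countable (F := fun (u : Fin (T + 1)) (x : EnlOmega Ω T n) => g u x.1)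
    (fun u => (hg u).comp measurable_fst) hτ

lemma measurable_snocTime (hσ : Measurable σ) : Measurable (snocTime σ) := by
  refine measurable_fst.prodMk (measurable_pi_iff.2 fun k => ?_)
  induction k using Fin.lastCases with
  | last => simpa [snocTime] using hσ
  | cast j =>
    simp only [Fin.snoc_castSucc]
    exact (measurable_pi_apply j).comp measurable_snd

variable {g : ℕ → Ω → ℝ} {Q : Measure (EnlOmega Ω T n)}

lemma le_supStop [IsProbabilityMeasure Q] {C : ℝ} (hgC : ∀ t ω, |g t ω| ≤ C)
    {τ : EnlOmega Ω T n → Fin (T + 1)} (hτ : IsEnlStoppingTime T n ℱ τ) :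
    ∫ x, g (τ x) x.1 ∂Q ≤ supStop T n ℱ g Q := by
  refine le_csSup ⟨C, ?_⟩ ⟨τ, hτ, rfl⟩
  rintro _ ⟨τ', -, rfl⟩
  exact (abs_le.1 (abs_integral_le_of_forall_abs_le fun x => hgC _ _)).2

lemma supStop_le {V : ℝ} (hV : ∀ τ, IsEnlStoppingTime T n ℱ τ → ∫ x, g (τ x) x.1 ∂Q ≤ V) :
    supStop T n ℱ g Q ≤ V :=
  csSup_le ⟨_, _, isEnlStoppingTime_const 0, rfl⟩ fun _ ⟨τ, hτ, hr⟩ => hr ▸ hV τ hτ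

lemma abs_supStop_le [IsProbabilityMeasure Q] {C : ℝ} (hgC : ∀ t ω, |g t ω| ≤ C) :
    |supStop T n ℱ g Q| ≤ C := by
  have hbound : ∀ τ : EnlOmega Ω T n → Fin (T + 1), |∫ x, g (τ x) x.1 ∂Q| ≤ C := fun τ =>
    abs_integral_le_of_forall_abs_le fun x => hgC _ _
  refine abs_le.2 ⟨?_, supStop_le fun τ _ => (abs_le.1 (hbound τ)).2⟩
  exact (abs_le.1 (hbound _)).1.trans (le_supStop hgC (isEnlStoppingTime_const 0))

end Enlarged

section Market

variable {Ω : Type*} [MeasurableSpace Ω] {T d L M N : ℕ} {ℱ : ℕ → MeasurableSpace Ω}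
  {S : ℕ → Ω → Fin d → ℝ} {f : Fin L → Ω → ℝ} {g : Fin M → ℕ → Ω → ℝ}
  {h : Fin N → ℕ → Ω → ℝ} {φ : ℕ → Ω → ℝ} {α : Fin L → ℝ} {β : Fin M → ℝ} {γ : Fin N → ℝ}
  {ℙ : Measure Ω} {PN : Measure (Fin N → Fin (T + 1))} [SFinite PN]
  {PN1 : Measure (Fin (N + 1) → Fin (T + 1))} [SFinite PN1]

lemma quasiMeasurePreserving_snocTime (hPN1 : ∀ v, PN1 {v} ≠ 0)
    {σ : EnlOmega Ω T N → Fin (T + 1)} (hσ : Measurable σ) :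
    Measure.QuasiMeasurePreserving (snocTime σ) (ℙ.prod PN) (ℙ.prod PN1) := by
  refine ⟨measurable_snocTime hσ, .mk fun A hA hA0 => ?_⟩
  rw [Measure.map_apply (measurable_snocTime hσ) hA]
  refine prod_null_of_forall_slice_null fun v => measure_mono_null (fun ω hω => ?_)
    (measure_iUnion_null fun u => slice_null_of_prod_null (v := Fin.snoc v u) (hPN1 _) hA0)
  exact Set.mem_iUnion.2 ⟨σ (ω, v), hω⟩

lemma prod_absolutelyContinuous_of_map_snocTime_const (hPN : ∀ v, PN {v} ≠ 0)
    {μ : Measure (EnlOmega Ω T (N + 1))}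
    (h : ∀ u, (ℙ.prod PN).map (snocTime fun _ : EnlOmega Ω T N => u) ≪ μ) :
    ℙ.prod PN1 ≪ μ := by
  refine .mk fun A hA hμA => prod_null_of_forall_slice_null fun v => ?_
  have h0 := h (v (Fin.last N)) hμA
  rw [Measure.map_apply (measurable_snocTime measurable_const) hA] at h0
  simpa [snocTime] using slice_null_of_prod_null (v := Fin.init v) (hPN _) h0

theorem pushMixture_snocTime_mem_QbarSet (hmono : Monotone ℱ)
    (hle : ∀ t, ℱ t ≤ ‹MeasurableSpace Ω›) (hS : ∀ t, Measurable (S t))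
    (hf : ∀ i, Measurable (f i)) (hg : ∀ j t, Measurable (g j t)) {C : ℝ}
    (hgC : ∀ j t ω, |g j t ω| ≤ C) (hh : ∀ k t, Measurable (h k t))
    (hPN : ∀ v, PN {v} ≠ 0) (hPN1 : ∀ v, PN1 {v} ≠ 0) {Q : Measure (EnlOmega Ω T N)}
    (hQ : Q ∈ QbarSet T d L M N N le_rfl ℱ S f g h (ℙ.prod PN) α β γ)
    {ι : Type*} [Fintype ι] {σ : ι → EnlOmega Ω T N → Fin (T + 1)}
    (hσ : ∀ i, IsEnlStoppingTime T N ℱ (σ i)) (hconst : ∀ u, ∃ i, σ i = fun _ => u)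
    {w : ι → ℝ} (hw : ∀ i, 0 < w i) (hw1 : ∑ i, w i = 1) :
    pushMixture Q w (fun i => snocTime (σ i)) ∈
      QbarSet T d L M N (N + 1) (Nat.le_succ N) ℱ S f g h (ℙ.prod PN1) α β γ := by
  obtain ⟨hQprob, hQP, hPQ, hQmart, hQf, hQh, hQg⟩ := hQ
  have hw0 : ∀ i, 0 ≤ w i := fun i => (hw i).le
  have hσm : ∀ i, Measurable (σ i) := fun i => (hσ i).measurable hle
  have hm : ∀ i, Measurable (snocTime (σ i)) := fun i => measurable_snocTime (hσm i)
  refine ⟨isProbabilityMeasure_pushMixture hw0 hw1 hm,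
    pushMixture_absolutelyContinuous hm fun i => (hQP.map (hm i)).trans
      (quasiMeasurePreserving_snocTime hPN1 (hσm i)).absolutelyContinuous,
    prod_absolutelyContinuous_of_map_snocTime_const hPN fun u => ?_,
    hQmart.pushMixture (enlF_le hle) (fun t => ((hS t).comp measurable_fst).stronglyMeasurable)
      hw0 hm (fun i t => (hσ i).measurable_snocTime hmono t) fun i t => rfl,
    fun i => ?_, fun k => ?_, fun j => ?_⟩
  · obtain ⟨i, hi⟩ := hconst u
    rw [← hi]
    exact (hPQ.map (hm i)).trans (map_absolutelyContinuous_pushMixture hm (hw i))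
  · rw [integral_pushMixture_of_comp_eq (F := extFun T (N + 1) (f i)) (G := extFun T N (f i))
      hw0 hw1 hm ((hf i).comp measurable_fst).stronglyMeasurable fun _ => rfl]
    exact hQf i
  · have hhk : Measurable (extShort T N (N + 1) (Nat.le_succ N) h k) :=
      measurable_stopped (hh k) ((measurable_pi_apply _).comp measurable_snd)
    rw [integral_pushMixture_of_comp_eq hw0 hw1 hm hhk.stronglyMeasurable
      fun _ => funext (extShort_snocTime h k)]
    exact hQh k
  · refine (supStop_le fun τ hτ => ?_).trans_lt (hQg j)
    have hgτ := measurable_stopped (hg j) (hτ.measurable hle)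
    exact integral_pushMixture_le hw0 hw1 hm hgτ.stronglyMeasurable
      (fun i => integrable_of_forall_abs_le (hgτ.comp (hm i)) fun x => hgC j _ _)
      fun i => le_supStop (hgC j) (hτ.comp_snocTime hmono (hσ i))

lemma integral_extLast_pushMixture_snocTime (hφ : ∀ t, Measurable (φ t)) {C : ℝ}
    (hφC : ∀ t ω, |φ t ω| ≤ C) {Q : Measure (EnlOmega Ω T N)} [IsProbabilityMeasure Q]
    {ι : Type*} [Fintype ι] {σ : ι → EnlOmega Ω T N → Fin (T + 1)}
    (hσ : ∀ i, Measurable (σ i)) {w : ι → ℝ} (hw : ∀ i, 0 ≤ w i) :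
    ∫ y, extLast T N φ y ∂pushMixture Q w (fun i => snocTime (σ i))
      = ∑ i, w i * ∫ x, φ (σ i x) x.1 ∂Q := by
  have hm : ∀ i, Measurable (snocTime (σ i)) := fun i => measurable_snocTime (hσ i)
  have hφm : Measurable (extLast T N φ) :=
    measurable_stopped hφ ((measurable_pi_apply _).comp measurable_snd)
  rw [integral_pushMixture hw hm hφm.stronglyMeasurable
    fun i => integrable_of_forall_abs_le (hφm.comp (hm i)) fun x => hφC _ _]
  simp_rw [extLast_snocTime, smul_eq_mul]

theorem exists_mem_QbarSet_integral_extLast_eq (hmono : Monotone ℱ)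
    (hle : ∀ t, ℱ t ≤ ‹MeasurableSpace Ω›) (hS : ∀ t, Measurable (S t))
    (hf : ∀ i, Measurable (f i)) (hg : ∀ j t, Measurable (g j t)) {Cg : ℝ}
    (hgC : ∀ j t ω, |g j t ω| ≤ Cg) (hh : ∀ k t, Measurable (h k t))
    (hφ : ∀ t, Measurable (φ t)) {C : ℝ} (hφC : ∀ t ω, |φ t ω| ≤ C)
    (hPN : ∀ v, PN {v} ≠ 0) (hPN1 : ∀ v, PN1 {v} ≠ 0) {Q : Measure (EnlOmega Ω T N)}
    (hQ : Q ∈ QbarSet T d L M N N le_rfl ℱ S f g h (ℙ.prod PN) α β γ)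
    {τ : EnlOmega Ω T N → Fin (T + 1)} (hτ : IsEnlStoppingTime T N ℱ τ)
    {r : ℝ} (hr0 : 0 < r) (hr1 : r < 1) :
    ∃ ν ∈ QbarSet T d L M N (N + 1) (Nat.le_succ N) ℱ S f g h (ℙ.prod PN1) α β γ,
      ∫ y, extLast T N φ y ∂ν
        = (1 - r) * ∫ x, φ (τ x) x.1 ∂Q + ∑ u : Fin (T + 1), r / (T + 1) * ∫ x, φ u x.1 ∂Q := by
  have := hQ.1
  let σ : Option (Fin (T + 1)) → EnlOmega Ω T N → Fin (T + 1) := fun i => i.elim τ fun u _ => u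
  let w : Option (Fin (T + 1)) → ℝ := fun i => i.elim (1 - r) fun _ => r / (T + 1)
  have hσ : ∀ i, IsEnlStoppingTime T N ℱ (σ i) := by
    rintro (_ | u)
    exacts [hτ, isEnlStoppingTime_const u]
  have hw : ∀ i, 0 < w i := by
    rintro (_ | u)
    · simpa [w] using hr1
    · simp only [w, Option.elim_some]
      positivity
  have hw1 : ∑ i, w i = 1 := by
    simp only [w, Fintype.sum_option, Option.elim_none, Option.elim_some, Finset.sum_const,
      Finset.card_univ, Fintype.card_fin, nsmul_eq_mul]
    push_cast
    field_simp
    ring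
  refine ⟨_, pushMixture_snocTime_mem_QbarSet hmono hle hS hf hg hgC hh hPN hPN1 hQ hσ
    (fun u => ⟨some u, rfl⟩) hw hw1, ?_⟩
  rw [integral_extLast_pushMixture_snocTime hφ hφC (fun i => (hσ i).measurable hle)
    fun i => (hw i).le, Fintype.sum_option]
  rfl

open Filter Topology in
theorem integral_stopped_le_sSup_integral_extLast (hmono : Monotone ℱ)
    (hle : ∀ t, ℱ t ≤ ‹MeasurableSpace Ω›) (hS : ∀ t, Measurable (S t))
    (hf : ∀ i, Measurable (f i)) (hg : ∀ j t, Measurable (g j t)) {Cg : ℝ}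
    (hgC : ∀ j t ω, |g j t ω| ≤ Cg) (hh : ∀ k t, Measurable (h k t))
    (hφ : ∀ t, Measurable (φ t)) {C : ℝ} (hφC : ∀ t ω, |φ t ω| ≤ C)
    (hPN : ∀ v, PN {v} ≠ 0) (hPN1 : ∀ v, PN1 {v} ≠ 0) {Q : Measure (EnlOmega Ω T N)}
    (hQ : Q ∈ QbarSet T d L M N N le_rfl ℱ S f g h (ℙ.prod PN) α β γ)
    {τ : EnlOmega Ω T N → Fin (T + 1)} (hτ : IsEnlStoppingTime T N ℱ τ) :
    ∫ x, φ (τ x) x.1 ∂Q ≤ sSup {r : ℝ | ∃ ν ∈ QbarSet T d L M N (N + 1) (Nat.le_succ N) ℱ S f g h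
      (ℙ.prod PN1) α β γ, r = ∫ y, extLast T N φ y ∂ν} := by
  set B := {r : ℝ | ∃ ν ∈ QbarSet T d L M N (N + 1) (Nat.le_succ N) ℱ S f g h
    (ℙ.prod PN1) α β γ, r = ∫ y, extLast T N φ y ∂ν}
  have hB : BddAbove B := by
    refine ⟨C, ?_⟩
    rintro _ ⟨ν, hν, rfl⟩
    have := hν.1
    exact (abs_le.1 (abs_integral_le_of_forall_abs_le fun y => hφC _ _)).2
  let mix (r : ℝ) : ℝ :=
    (1 - r) * ∫ x, φ (τ x) x.1 ∂Q + ∑ u : Fin (T + 1), r / (T + 1) * ∫ x, φ u x.1 ∂Q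
  have hmix : ∀ r ∈ Set.Ioo (0 : ℝ) 1, mix r ≤ sSup B := fun r ⟨hr0, hr1⟩ =>
    let ⟨ν, hν, hνr⟩ := exists_mem_QbarSet_integral_extLast_eq hmono hle hS hf hg hgC hh hφ
      hφC hPN hPN1 hQ hτ hr0 hr1
    le_csSup hB ⟨ν, hν, hνr.symm⟩
  have hlim : Tendsto mix (𝓝[>] 0) (𝓝 (∫ x, φ (τ x) x.1 ∂Q)) :=
    (Continuous.tendsto' (by fun_prop) 0 _ (by simp [mix])).mono_left nhdsWithin_le_nhds
  exact le_of_tendsto hlim (eventually_of_mem (Ioo_mem_nhdsGT zero_lt_one) hmix)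

end Market

section

variable {Ω : Type*} [MeasurableSpace Ω]

theorem optimal_stopping_value_le_european_extension_value_general
    (T d L M N : ℕ)
    (ℱ : ℕ → MeasurableSpace Ω) (hmono : Monotone ℱ)
    (hle : ∀ t, ℱ t ≤ (inferInstance : MeasurableSpace Ω))
    (ℙ : Measure Ω)
    (S : ℕ → Ω → Fin d → ℝ) (hS : ∀ t, Measurable[ℱ t] (S t))
    (f : Fin L → Ω → ℝ) (hf : ∀ i, Measurable[ℱ T] (f i))
    (g : Fin M → ℕ → Ω → ℝ) (hg : ∀ j t, Measurable[ℱ t] (g j t))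
    (hgb : ∃ C, ∀ j t ω, |g j t ω| ≤ C)
    (h : Fin N → ℕ → Ω → ℝ) (hh : ∀ k t, Measurable[ℱ t] (h k t))
    (φ : ℕ → Ω → ℝ) (hφ : ∀ t, Measurable[ℱ t] (φ t))
    (hφb : ∃ C, ∀ t ω, |φ t ω| ≤ C)
    (α : Fin L → ℝ) (β : Fin M → ℝ) (γ : Fin N → ℝ)
    (PN : Measure (Fin N → Fin (T + 1))) [IsProbabilityMeasure PN]
    (hfullN : ∀ v : Fin N → Fin (T + 1), 0 < PN {v})
    (PN1 : Measure (Fin (N + 1) → Fin (T + 1))) [IsProbabilityMeasure PN1]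
    (hfullN1 : ∀ v : Fin (N + 1) → Fin (T + 1), 0 < PN1 {v})
    (hne : (QbarSet T d L M N N le_rfl ℱ S f g h (ℙ.prod PN) α β γ).Nonempty) :
    sInf {r : ℝ | ∃ Q ∈ QbarSet T d L M N N le_rfl ℱ S f g h (ℙ.prod PN) α β γ,
        r = supStop T N ℱ φ Q} ≤
      sSup {r : ℝ | ∃ Q ∈ QbarSet T d L M N N le_rfl ℱ S f g h (ℙ.prod PN) α β γ,
        r = supStop T N ℱ φ Q} ∧
    sSup {r : ℝ | ∃ Q ∈ QbarSet T d L M N N le_rfl ℱ S f g h (ℙ.prod PN) α β γ,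
        r = supStop T N ℱ φ Q} ≤
      sSup {r : ℝ | ∃ Q ∈ QbarSet T d L M N (N + 1) (Nat.le_succ N) ℱ S f g h
          (ℙ.prod PN1) α β γ, r = ∫ y, extLast T N φ y ∂Q} := by
  obtain ⟨Cg, hgC⟩ := hgb
  obtain ⟨C, hφC⟩ := hφb
  obtain ⟨Q₀, hQ₀⟩ := hne
  refine ⟨csInf_le_csSup ⟨_, Q₀, hQ₀, rfl⟩ ⟨-C, ?_⟩ ⟨C, ?_⟩, csSup_le ⟨_, Q₀, hQ₀, rfl⟩ ?_⟩
  · rintro _ ⟨Q, hQ, rfl⟩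
    have := hQ.1
    exact (abs_le.1 (abs_supStop_le hφC)).1
  · rintro _ ⟨Q, hQ, rfl⟩
    have := hQ.1
    exact (abs_le.1 (abs_supStop_le hφC)).2
  · rintro _ ⟨Q, hQ, rfl⟩
    exact supStop_le fun τ hτ => integral_stopped_le_sSup_integral_extLast hmono hle
      (fun t => (hS t).mono (hle t) le_rfl) (fun i => (hf i).mono (hle T) le_rfl)
      (fun j t => (hg j t).mono (hle t) le_rfl) hgC (fun k t => (hh k t).mono (hle t) le_rfl)
      (fun t => (hφ t).mono (hle t) le_rfl) hφC (fun v => (hfullN v).ne')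
      (fun v => (hfullN1 v).ne') hQ hτ

/-- inequality chain \eqref{e2} of the paper.
`inf_{Q∈𝒬̄^N} sup_{τ∈𝒯̄^N} E_Q[φ̄^N_τ] ≤ sup_{Q∈𝒬̄^N} sup_{τ∈𝒯̄^N} E_Q[φ̄^N_τ]
  ≤ sup_{Q∈𝒬̄^{N+1}} E_Q[φ̄^{N+1}]`. -/
theorem optimal_stopping_value_le_european_extension_value
    [MeasurableSpace.CountablyGenerated Ω]
    (T d L M N : ℕ)
    (ℱ : ℕ → MeasurableSpace Ω) (hmono : Monotone ℱ)
    (hle : ∀ t, ℱ t ≤ (inferInstance : MeasurableSpace Ω))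
    (ℙ : Measure Ω) [IsProbabilityMeasure ℙ]
    (S : ℕ → Ω → Fin d → ℝ) (hS : ∀ t, Measurable[ℱ t] (S t))
    (f : Fin L → Ω → ℝ) (hf : ∀ i, Measurable[ℱ T] (f i))
    (hfb : ∃ C, ∀ i ω, |f i ω| ≤ C)
    (g : Fin M → ℕ → Ω → ℝ) (hg : ∀ j t, Measurable[ℱ t] (g j t))
    (hgb : ∃ C, ∀ j t ω, |g j t ω| ≤ C)
    (h : Fin N → ℕ → Ω → ℝ) (hh : ∀ k t, Measurable[ℱ t] (h k t))
    (hhb : ∃ C, ∀ k t ω, |h k t ω| ≤ C)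
    (φ : ℕ → Ω → ℝ) (hφ : ∀ t, Measurable[ℱ t] (φ t))
    (hφb : ∃ C, ∀ t ω, |φ t ω| ≤ C)
    (α : Fin L → ℝ) (β : Fin M → ℝ) (γ : Fin N → ℝ)
    (PN : Measure (Fin N → Fin (T + 1))) [IsProbabilityMeasure PN]
    (hfullN : ∀ v : Fin N → Fin (T + 1), 0 < PN {v})
    (PN1 : Measure (Fin (N + 1) → Fin (T + 1))) [IsProbabilityMeasure PN1]
    (hfullN1 : ∀ v : Fin (N + 1) → Fin (T + 1), 0 < PN1 {v})
    (hne : (QbarSet T d L M N N le_rfl ℱ S f g h (ℙ.prod PN) α β γ).Nonempty) :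
    sInf {r : ℝ | ∃ Q ∈ QbarSet T d L M N N le_rfl ℱ S f g h (ℙ.prod PN) α β γ,
        r = supStop T N ℱ φ Q} ≤
      sSup {r : ℝ | ∃ Q ∈ QbarSet T d L M N N le_rfl ℱ S f g h (ℙ.prod PN) α β γ,
        r = supStop T N ℱ φ Q} ∧
    sSup {r : ℝ | ∃ Q ∈ QbarSet T d L M N N le_rfl ℱ S f g h (ℙ.prod PN) α β γ,
        r = supStop T N ℱ φ Q} ≤
      sSup {r : ℝ | ∃ Q ∈ QbarSet T d L M N (N + 1) (Nat.le_succ N) ℱ S f g h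
          (ℙ.prod PN1) α β γ, r = ∫ y, extLast T N φ y ∂Q} :=
  optimal_stopping_value_le_european_extension_value_general T d L M N ℱ hmono hle ℙ S hS f hf g hg
    hgb h hh φ hφ hφb α β γ PN hfullN PN1 hfullN1 hne

end

end Stmt8
end
end
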